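/- arXiv:1511.04520 — 14 statements merged into one kernel-verified Lean document; each statement's English description precedes it below -/
import Mathlib

section
/- Every subgroup of the dicyclic group Q_{4n} (n ≥ 1) is either cyclic or isomorphic to a dicyclic group Q_{4m} for some m ≥ 1. (Lemma 3.1, first part) -/
/-!
The exponents `c` with `a ^ c ∈ H` form a subgroup `dℤ` of `ℤ`. If `H` has no element outside
`⟨a⟩` it is a subgroup of a cyclic group. Otherwise it contains some `xa j`, whose square `a ^ n`
lies in `H`, so `d ∣ n`; then `a ↦ a ^ d`, `xa i ↦ xa (j + d i)` embeds `Q_{4(n/d)}` onto `H`.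
-/

namespace ZMod

def scaleHom {k N : ℕ} (d : ℕ) (h : d * k = N) : ZMod k →+ ZMod N :=
  ZMod.lift k ⟨(Int.castAddHom (ZMod N)).comp (AddMonoidHom.mulLeft (d : ℤ)), by
    change ((d * k : ℤ) : ZMod N) = 0
    subst h
    exact_mod_cast ZMod.natCast_self (d * k)⟩

variable {k N : ℕ} {d : ℕ} (h : d * k = N)

lemma scaleHom_intCast (c : ℤ) : scaleHom d h c = ((d * c : ℤ) : ZMod N) :=
  ZMod.lift_coe _ _ c

lemma scaleHom_natCast (c : ℕ) : scaleHom d h c = ((d * c : ℕ) : ZMod N) := by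
  exact_mod_cast scaleHom_intCast h c

lemma scaleHom_injective (hd : d ≠ 0) : Function.Injective (scaleHom d h) := by
  rw [injective_iff_map_eq_zero]
  intro x hx
  obtain ⟨c, rfl⟩ := intCast_surjective x
  rw [scaleHom_intCast, intCast_zmod_eq_zero_iff_dvd, ← h, Nat.cast_mul,
    mul_dvd_mul_iff_left (by exact_mod_cast hd)] at hx
  exact (intCast_zmod_eq_zero_iff_dvd c k).2 hx

end ZMod

namespace QuaternionGroup

variable {n : ℕ}

@[simp] lemma inv_a (i : ZMod (2 * n)) : (a i)⁻¹ = a (-i) := rfl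

lemma a_one_zpow (c : ℤ) : (a 1 : QuaternionGroup n) ^ c = a c := by
  obtain ⟨k, rfl | rfl⟩ := Int.eq_nat_or_neg c <;> simp

def rotationExponents (H : Subgroup (QuaternionGroup n)) : AddSubgroup ℤ where
  carrier := {c | (a 1) ^ c ∈ H}
  zero_mem' := by simp only [Set.mem_ofPred_eq, zpow_zero, one_mem]
  add_mem' hb hc := by simpa only [Set.mem_ofPred_eq, zpow_add] using mul_mem hb hc
  neg_mem' hc := by simpa only [Set.mem_ofPred_eq, zpow_neg] using inv_mem hc

lemma exists_a_mem_iff_dvd (H : Subgroup (QuaternionGroup n)) :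
    ∃ d : ℕ, ∀ c : ℤ, a (c : ZMod (2 * n)) ∈ H ↔ (d : ℤ) ∣ c := by
  obtain ⟨e, he⟩ := Int.subgroup_cyclic (rotationExponents H)
  refine ⟨e.natAbs, fun c => ?_⟩
  rw [← a_one_zpow, Int.natAbs_dvd, ← Int.mem_zmultiples_iff,
    AddSubgroup.zmultiples_eq_closure, ← he]
  rfl

lemma isCyclic_of_forall_xa_notMem {H : Subgroup (QuaternionGroup n)} (h : ∀ i, xa i ∉ H) :
    IsCyclic H := by
  have : H ≤ Subgroup.zpowers (a 1) := by
    rintro (i | i) hi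
    · obtain ⟨c, rfl⟩ := ZMod.intCast_surjective i
      exact ⟨c, a_one_zpow c⟩
    · exact absurd hi (h i)
  exact Subgroup.isCyclic_of_le this

section Embedding

variable {m : ℕ} (d : ℕ) (h : d * m = n) (j : ZMod (2 * n))

def dicyclicEmbedding : QuaternionGroup m →* QuaternionGroup n where
  toFun
    | a i => a (ZMod.scaleHom d (by rw [← h]; ring) i)
    | xa i => xa (j + ZMod.scaleHom d (by rw [← h]; ring) i)
  map_one' := congrArg a (map_zero _)
  map_mul' := by
    rintro (i | i) (i' | i') <;>
      simp only [a_mul_a, a_mul_xa, xa_mul_a, xa_mul_xa, map_add, map_sub,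
        ZMod.scaleHom_natCast, h] <;> congr 1 <;> abel

variable {d h j}

@[simp] lemma dicyclicEmbedding_a (i : ZMod (2 * m)) :
    dicyclicEmbedding d h j (a i) = a (ZMod.scaleHom d (by rw [← h]; ring) i) := rfl

@[simp] lemma dicyclicEmbedding_xa (i : ZMod (2 * m)) :
    dicyclicEmbedding d h j (xa i) = xa (j + ZMod.scaleHom d (by rw [← h]; ring) i) := rfl

lemma dicyclicEmbedding_injective (hd : d ≠ 0) :
    Function.Injective (dicyclicEmbedding d h j) := by
  have hι := ZMod.scaleHom_injective (by rw [← h]; ring : d * (2 * m) = 2 * n) hd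
  rintro (i | i) (i' | i') hii' <;>
    simp only [dicyclicEmbedding_a, dicyclicEmbedding_xa, a.injEq, xa.injEq, reduceCtorEq] at hii'
  · rw [hι hii']
  · rw [hι (add_left_cancel hii')]

lemma range_dicyclicEmbedding {H : Subgroup (QuaternionGroup n)}
    (hH : ∀ c : ℤ, a (c : ZMod (2 * n)) ∈ H ↔ (d : ℤ) ∣ c) (hj : xa j ∈ H) :
    (dicyclicEmbedding d h j).range = H := by
  set ι := ZMod.scaleHom (k := 2 * m) d (by rw [← h]; ring : d * (2 * m) = 2 * n)
  have a_mem_iff (i : ZMod (2 * n)) : a i ∈ H ↔ i ∈ Set.range ι := by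
    obtain ⟨c, rfl⟩ := ZMod.intCast_surjective i
    constructor
    · intro hc
      obtain ⟨k, rfl⟩ := (hH c).1 hc
      exact ⟨k, ZMod.scaleHom_intCast _ k⟩
    · rintro ⟨i', hi'⟩
      obtain ⟨k, rfl⟩ := ZMod.intCast_surjective i'
      rw [← hi', ZMod.scaleHom_intCast, hH]
      exact dvd_mul_right _ _
  apply le_antisymm
  · rintro _ ⟨i | i, rfl⟩
    · exact (a_mem_iff _).2 ⟨i, rfl⟩
    · rw [dicyclicEmbedding_xa, ← xa_mul_a]
      exact mul_mem hj ((a_mem_iff _).2 ⟨i, rfl⟩)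
  · rintro (i | i) hi
    · obtain ⟨i', rfl⟩ := (a_mem_iff i).1 hi
      exact ⟨a i', rfl⟩
    · have hij : a (i - j) = (xa j)⁻¹ * xa i := by
        rw [eq_inv_mul_iff_mul_eq, xa_mul_a, add_sub_cancel]
      obtain ⟨i', hi'⟩ := (a_mem_iff _).1 (hij ▸ mul_mem (inv_mem hj) hi)
      exact ⟨xa i', by rw [dicyclicEmbedding_xa, hi', add_sub_cancel]⟩

end Embedding

end QuaternionGroup

/-- Every subgroup of the dicyclic group `Q_{4n}` (n ≥ 1) is either cyclic or
isomorphic to a dicyclic group `Q_{4m}` for some `m ≥ 1`. -/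
theorem subgroup_quaternionGroup_isCyclic_or_dicyclic (n : ℕ) (hn : 1 ≤ n)
    (H : Subgroup (QuaternionGroup n)) :
    IsCyclic H ∨ ∃ m : ℕ, 1 ≤ m ∧ Nonempty (H ≃* QuaternionGroup m) := by
  by_cases hxa : ∃ j, QuaternionGroup.xa j ∈ H
  · obtain ⟨j, hj⟩ := hxa
    obtain ⟨d, hd⟩ := QuaternionGroup.exists_a_mem_iff_dvd H
    have hdn : (d : ℤ) ∣ n := (hd n).1 (by simpa using mul_mem hj hj)
    obtain ⟨m, hm⟩ := Int.natCast_dvd_natCast.1 hdn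
    have hd0 : d ≠ 0 := by rintro rfl; omega
    have hm0 : m ≠ 0 := by rintro rfl; omega
    have φ_inj := QuaternionGroup.dicyclicEmbedding_injective (h := hm.symm) (j := j) hd0
    have φ_range := QuaternionGroup.range_dicyclicEmbedding (h := hm.symm) hd hj
    exact Or.inr ⟨m, by omega,
      ⟨((MonoidHom.ofInjective φ_inj).trans (MulEquiv.subgroupCongr φ_range)).symm⟩⟩
  · exact Or.inl (QuaternionGroup.isCyclic_of_forall_xa_notMem (not_exists.1 hxa))
end

section
/- Let n ≥ 1 and let d be a divisor of 4n such that 4 does not divide d. Then the dicyclic group Q_{4n} has exactly one subgroup of order d, namely the cyclic subgroup generated by a^{2n/d}. (Lemma 3.1(1)) -/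
open Subgroup

/-- In a finite cyclic group, two subgroups of the same cardinality are equal. -/
lemma aux_cyclic_subgroup_eq_of_card_eq {G : Type*} [Group G] [Finite G] [IsCyclic G]
    {H K : Subgroup G} (h : Nat.card H = Nat.card K) : H = K := by
  letI : CommGroup G := IsCyclic.commGroup
  letI : Fintype G := Fintype.ofFinite G
  classical
  set d := Nat.card H with hd
  have hd0 : 0 < d := Nat.card_pos
  have key : ∀ L : Subgroup G, Nat.card L = d → L = (powMonoidHom d : G →* G).ker := by
    intro L hL
    have hle : L ≤ (powMonoidHom d : G →* G).ker := by
      intro x hx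
      rw [MonoidHom.mem_ker, powMonoidHom_apply]
      have h1 : (⟨x, hx⟩ : L) ^ d = 1 := by rw [← hL]; exact pow_card_eq_one'
      simpa using congrArg Subtype.val h1
    refine Subgroup.eq_of_le_of_card_ge hle ?_
    rw [hL]
    calc Nat.card ((powMonoidHom d : G →* G).ker)
        = Finset.card (Finset.univ.filter (fun a : G => a ^ d = 1)) := by
          rw [Nat.card_eq_fintype_card, Fintype.card_subtype]
          congr 1
          ext x
          simp [MonoidHom.mem_ker, powMonoidHom_apply]
      _ ≤ d := by
          have := IsCyclic.card_pow_eq_one_le (α := G) hd0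
          convert this using 2
  rw [key H rfl, key K h.symm]

lemma aux_isCyclic_zpowers {G : Type*} [Group G] (g : G) : IsCyclic (zpowers g) := by
  refine ⟨⟨g, mem_zpowers g⟩, fun x => ?_⟩
  obtain ⟨k, hk⟩ := mem_zpowers_iff.mp x.2
  exact mem_zpowers_iff.mpr ⟨k, Subtype.ext (by simpa using hk)⟩

/-- Let `n ≥ 1` and `d ∣ 4n` with `¬ 4 ∣ d`. Then the dicyclic group `Q_{4n}` has exactly one
subgroup of order `d`, namely the cyclic subgroup generated by `a^(2n/d)`. -/
theorem quaternionGroup_unique_subgroup_of_not_four_dvd (n d : ℕ) (hn : 1 ≤ n)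
    (hd : d ∣ 4 * n) (h4 : ¬ (4 ∣ d)) :
    ∀ H : Subgroup (QuaternionGroup n),
      Nat.card H = d ↔
        H = Subgroup.zpowers ((QuaternionGroup.a 1 : QuaternionGroup n) ^ (2 * n / d)) := by
  haveI : NeZero n := ⟨by omega⟩
  have hd0 : 0 < d := by
    rcases Nat.eq_zero_or_pos d with h | h
    · exfalso; subst h; have := Nat.eq_zero_of_zero_dvd hd; omega
    · exact h
  -- d ∣ 2n
  have hd2 : d ∣ 2 * n := by
    rcases Nat.even_or_odd d with he | ho
    · obtain ⟨m, hm⟩ := he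
      have hm2 : d = 2 * m := by omega
      have hmo : ¬ 2 ∣ m := fun ⟨t, ht⟩ => h4 ⟨t, by omega⟩
      have h1 : 2 * m ∣ 2 * (2 * n) := by rw [← hm2]; convert hd using 1; ring
      have h2 : m ∣ 2 * n := (mul_dvd_mul_iff_left (two_ne_zero)).mp h1
      have hmc : Nat.Coprime m 2 := Nat.coprime_two_right.mpr (Nat.odd_iff.mpr (by omega))
      have h3 : m ∣ n := hmc.dvd_of_dvd_mul_left h2
      rw [hm2]; exact mul_dvd_mul_left 2 h3
    · have hc : Nat.Coprime d 2 := Nat.coprime_two_right.mpr ho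
      have : d ∣ 2 * (2 * n) := by convert hd using 1; ring
      exact hc.dvd_of_dvd_mul_left this
  set A : Subgroup (QuaternionGroup n) := zpowers (QuaternionGroup.a 1) with hA
  set Z : Subgroup (QuaternionGroup n) :=
    zpowers ((QuaternionGroup.a 1 : QuaternionGroup n) ^ (2 * n / d)) with hZ
  have h2n0 : 0 < 2 * n := by omega
  -- card Z = d
  have hcardZ : Nat.card Z = d := by
    rw [hZ, Nat.card_zpowers, orderOf_pow, QuaternionGroup.orderOf_a_one]
    rw [Nat.gcd_eq_right (Nat.div_dvd_of_dvd hd2)]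
    exact Nat.div_div_self hd2 (by omega)
  have hZA : Z ≤ A := by
    rw [hZ, hA]
    exact zpowers_le.mpr (pow_mem (mem_zpowers _) _)
  haveI : IsCyclic A := aux_isCyclic_zpowers _
  intro H
  constructor
  · intro hH
    -- H ≤ A
    have hHA : H ≤ A := by
      intro x hx
      rcases x with i | i
      · refine ⟨(i.val : ℤ), ?_⟩
        show (QuaternionGroup.a 1 : QuaternionGroup n) ^ ((i.val : ℤ)) = QuaternionGroup.a i
        rw [zpow_natCast, QuaternionGroup.a_one_pow, ZMod.natCast_val, ZMod.cast_id]
      · exfalso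
        have h1 : orderOf (⟨QuaternionGroup.xa i, hx⟩ : H) ∣ Nat.card H := orderOf_dvd_natCard _
        rw [hH, Subgroup.orderOf_mk, QuaternionGroup.orderOf_xa] at h1
        exact h4 h1
    have : H.subgroupOf A = Z.subgroupOf A := by
      apply aux_cyclic_subgroup_eq_of_card_eq
      rw [Nat.card_congr (Subgroup.subgroupOfEquivOfLe hHA).toEquiv,
        Nat.card_congr (Subgroup.subgroupOfEquivOfLe hZA).toEquiv, hH, hcardZ]
    have h2 := Subgroup.subgroupOf_inj.mp this
    rwa [inf_eq_left.mpr hHA, inf_eq_left.mpr hZA] at h2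
  · rintro rfl
    exact hcardZ
end

section
/- Let n ≥ 1 and let d be a divisor of 4n such that 4 divides d and i = 4n/d is odd. Then the dicyclic group Q_{4n} has exactly i subgroups of order d, namely the subgroups ⟨a^i, a^j b⟩ for 0 ≤ j < i, and any two subgroups of Q_{4n} of order d are conjugate. (Lemma 3.1(2)) -/
open QuaternionGroup Subgroup

variable {n i e : ℕ}


variable {n i : ℕ}

/-- The model subgroup of `QuaternionGroup n` determined by `c : ZMod i`. -/
def qgH (h2 : (i:ℕ) ∣ 2*n) (hni : i ∣ n) (c : ZMod i) : Subgroup (QuaternionGroup n) where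
  carrier := {x | match x with
    | .a k => ZMod.castHom h2 (ZMod i) k = 0
    | .xa k => ZMod.castHom h2 (ZMod i) k = c}
  one_mem' := by show ZMod.castHom h2 (ZMod i) 0 = 0; simp
  mul_mem' := by
    rintro (k|k) (l|l) hk hl <;>
      simp only [Set.mem_setOf_eq, a_mul_a, a_mul_xa, xa_mul_a, xa_mul_xa] at * <;>
      simp [map_add, map_sub, hk, hl, map_natCast,
        (ZMod.natCast_eq_zero_iff n i).mpr hni]
  inv_mem' := by
    rintro (k|k) hk <;> simp only [Set.mem_setOf_eq] at *
    · show ZMod.castHom h2 (ZMod i) (-k) = 0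
      rw [map_neg, hk, neg_zero]
    · show ZMod.castHom h2 (ZMod i) (n + k) = c
      rw [map_add, hk, map_natCast, (ZMod.natCast_eq_zero_iff n i).mpr hni, zero_add]

theorem mem_qgH_a (h2 : (i:ℕ) ∣ 2*n) (hni : i ∣ n) (c : ZMod i) (k : ZMod (2*n)) :
    QuaternionGroup.a k ∈ qgH h2 hni c ↔ ZMod.castHom h2 (ZMod i) k = 0 := Iff.rfl

theorem mem_qgH_xa (h2 : (i:ℕ) ∣ 2*n) (hni : i ∣ n) (c : ZMod i) (k : ZMod (2*n)) :
    QuaternionGroup.xa k ∈ qgH h2 hni c ↔ ZMod.castHom h2 (ZMod i) k = c := Iff.rfl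

theorem qg_cast_eq_zero_iff (h2 : (i:ℕ) ∣ 2*n) (hn : n ≠ 0) (k : ZMod (2*n)) :
    ZMod.castHom h2 (ZMod i) k = 0 ↔ i ∣ k.val := by
  haveI : NeZero (2*n) := ⟨by omega⟩
  rw [ZMod.castHom_apply, ← ZMod.natCast_val, ZMod.natCast_eq_zero_iff]

theorem qg_card_ker (h2 : (i:ℕ) ∣ 2*n) (hn : n ≠ 0) (hi : i ≠ 0) (hei : e * i = n) :
    Nat.card {k : ZMod (2*n) // ZMod.castHom h2 (ZMod i) k = 0} = 2*e := by
  haveI : NeZero (2*n) := ⟨by omega⟩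
  have hipos : 0 < i := Nat.pos_of_ne_zero hi
  have he : e ≠ 0 := by rintro rfl; omega
  haveI : NeZero (2*e) := ⟨by omega⟩
  have h2ei : 2*e*i = 2*n := by rw [mul_assoc, hei]
  have E : ZMod (2*e) ≃ {k : ZMod (2*n) // ZMod.castHom h2 (ZMod i) k = 0} :=
  { toFun := fun m => ⟨((m.val * i : ℕ) : ZMod (2*n)), by
      rw [qg_cast_eq_zero_iff h2 hn, ZMod.val_cast_of_lt]
      · exact Dvd.intro_left m.val rfl
      · rw [← h2ei]; exact (Nat.mul_lt_mul_right hipos).mpr m.val_lt⟩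
    invFun := fun k => ((k.1.val / i : ℕ) : ZMod (2*e))
    left_inv := fun m => by
      simp only
      rw [ZMod.val_cast_of_lt (by rw [← h2ei]; exact (Nat.mul_lt_mul_right hipos).mpr m.val_lt),
        Nat.mul_div_cancel _ hipos, ZMod.natCast_zmod_val]
    right_inv := fun k => by
      obtain ⟨q, hq⟩ := (qg_cast_eq_zero_iff h2 hn k.1).mp k.2
      have hqlt : q < 2*e := by
        have := k.1.val_lt
        rw [hq, ← h2ei] at this
        have : q * i < 2*e*i := by rwa [mul_comm i q] at this
        exact lt_of_mul_lt_mul_right this (Nat.zero_le i)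
      apply Subtype.ext
      simp only
      rw [hq, Nat.mul_div_cancel_left _ hipos, ZMod.val_cast_of_lt hqlt,
        mul_comm q i, ← hq, ZMod.natCast_zmod_val] }
  rw [Nat.card_congr E.symm, Nat.card_zmod]

theorem qg_card_fiber (h2 : (i:ℕ) ∣ 2*n) (hn : n ≠ 0) (hi : i ≠ 0) (hei : e * i = n)
    (c : ZMod i) :
    Nat.card {k : ZMod (2*n) // ZMod.castHom h2 (ZMod i) k = c} = 2*e := by
  haveI : NeZero i := ⟨hi⟩
  have E : {k : ZMod (2*n) // ZMod.castHom h2 (ZMod i) k = c} ≃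
      {k : ZMod (2*n) // ZMod.castHom h2 (ZMod i) k = 0} :=
  { toFun := fun k => ⟨k.1 - (c.val : ZMod (2*n)), by
      rw [map_sub, k.2, map_natCast, ZMod.natCast_zmod_val, sub_self]⟩
    invFun := fun k => ⟨k.1 + (c.val : ZMod (2*n)), by
      rw [map_add, k.2, map_natCast, ZMod.natCast_zmod_val, zero_add]⟩
    left_inv := fun k => by apply Subtype.ext; simp
    right_inv := fun k => by apply Subtype.ext; simp }
  rw [Nat.card_congr E]
  exact qg_card_ker h2 hn hi hei

theorem qg_xa_eq (k0 k : ZMod (2*n)) :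
    QuaternionGroup.xa k = QuaternionGroup.a (k0 - k) * QuaternionGroup.xa k0 := by
  rw [a_mul_xa, sub_sub_cancel]

theorem qg_a_mem (H : Subgroup (QuaternionGroup n)) {k0 k : ZMod (2*n)}
    (h0 : QuaternionGroup.xa k0 ∈ H) (hk : QuaternionGroup.xa k ∈ H) :
    QuaternionGroup.a (k0 - k) ∈ H := by
  have h := H.mul_mem hk (H.inv_mem h0)
  rwa [qg_xa_eq k0 k, mul_assoc, mul_inv_cancel, mul_one] at h

/-- Splitting a subgroup containing a reflection-type element. -/
theorem qg_card_split (H : Subgroup (QuaternionGroup n)) (k0 : ZMod (2*n))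
    (h0 : QuaternionGroup.xa k0 ∈ H) :
    Nat.card H = 2 * Nat.card {k : ZMod (2*n) // QuaternionGroup.a k ∈ H} := by
  have E : H ≃ {k : ZMod (2*n) // QuaternionGroup.a k ∈ H} × Bool :=
  { toFun := fun x => match x with
      | ⟨.a k, h⟩ => (⟨k, h⟩, false)
      | ⟨.xa k, h⟩ => (⟨k0 - k, qg_a_mem H h0 h⟩, true)
    invFun := fun p => if p.2 then ⟨QuaternionGroup.xa (k0 - p.1.1), by
          rw [qg_xa_eq k0 (k0 - p.1.1), sub_sub_cancel]
          exact H.mul_mem p.1.2 h0⟩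
      else ⟨QuaternionGroup.a p.1.1, p.1.2⟩
    left_inv := by rintro ⟨(k|k), h⟩ <;> simp [sub_sub_cancel]
    right_inv := by rintro ⟨⟨k, h⟩, (_|_)⟩ <;> simp [sub_sub_cancel] }
  rw [Nat.card_congr E, Nat.card_prod, Nat.card_eq_fintype_card (α := Bool)]
  simp [mul_comm]

theorem qg_card_qgH (h2 : (i:ℕ) ∣ 2*n) (hni : i ∣ n) (hn : n ≠ 0) (hi : i ≠ 0)
    (hei : e * i = n) (c : ZMod i) : Nat.card (qgH h2 hni c) = 4*e := by
  haveI : NeZero i := ⟨hi⟩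
  have h0 : QuaternionGroup.xa ((c.val : ℕ) : ZMod (2*n)) ∈ qgH h2 hni c := by
    rw [mem_qgH_xa, map_natCast, ZMod.natCast_zmod_val]
  rw [qg_card_split _ _ h0]
  have : Nat.card {k : ZMod (2*n) // QuaternionGroup.a k ∈ qgH h2 hni c} = 2*e := by
    rw [Nat.card_congr (Equiv.subtypeEquivRight (fun k => mem_qgH_a h2 hni c k))]
    exact qg_card_ker h2 hn hi hei
  rw [this]; ring

/-- classification: subgroups of order `4e` (with `i` odd) are the `qgH` -/
theorem qg_classify (h2 : (i:ℕ) ∣ 2*n) (hni : i ∣ n) (hn : n ≠ 0) (hi : i ≠ 0)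
    (hodd : Odd i) (hei : e * i = n) (H : Subgroup (QuaternionGroup n))
    (hH : Nat.card H = 4*e) : ∃ c : ZMod i, H = qgH h2 hni c := by
  haveI : NeZero (2*n) := ⟨by omega⟩
  have he : e ≠ 0 := by rintro rfl; omega
  -- step 1: H contains some xa
  have hxa : ∃ k0, QuaternionGroup.xa k0 ∈ H := by
    by_contra hno
    push_neg at hno
    let φ : Multiplicative (ZMod (2*n)) →* QuaternionGroup n :=
      MonoidHom.mk' (fun k => QuaternionGroup.a k.toAdd) (fun x y => by
        show QuaternionGroup.a (x*y).toAdd = _ * _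
        rw [a_mul_a]; rfl)
    have hle : H ≤ φ.range := by
      intro x hx
      cases x with
      | a k => exact ⟨Multiplicative.ofAdd k, rfl⟩
      | xa k => exact absurd hx (hno k)
    have hinj : Function.Injective φ := by
      intro x y hxy
      have : x.toAdd = y.toAdd := QuaternionGroup.a.inj hxy
      exact this
    have hcard : Nat.card φ.range = 2*n := by
      rw [← Nat.card_congr (MonoidHom.ofInjective hinj).toEquiv]
      rw [Nat.card_eq_fintype_card, Fintype.card_multiplicative, ZMod.card]
    have hdvd : Nat.card H ∣ 2*n := hcard ▸ Subgroup.card_dvd_of_le hle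
    rw [hH] at hdvd
    obtain ⟨m, hm⟩ := hdvd
    have hieq : 2*e*i = 2*e*(2*m) := by
      calc 2*e*i = 2*n := by rw [mul_assoc, hei]
      _ = 4*e*m := hm
      _ = 2*e*(2*m) := by ring
    have : i = 2*m := Nat.eq_of_mul_eq_mul_left (by omega) hieq
    rw [Nat.odd_iff] at hodd
    omega
  obtain ⟨k0, h0⟩ := hxa
  -- step 2: card of the a-part
  have hsplit := qg_card_split H k0 h0
  rw [hH] at hsplit
  have hCH : Nat.card {k : ZMod (2*n) // QuaternionGroup.a k ∈ H} = 2*e := by omega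
  -- step 3: forward membership: a k ∈ H → i ∣ k.val
  have hmem : ∀ k : ZMod (2*n), QuaternionGroup.a k ∈ H →
      ZMod.castHom h2 (ZMod i) k = 0 := by
    intro k hk
    have hg : (⟨QuaternionGroup.a k, hk⟩ : H) ^ Nat.card H = 1 := pow_card_eq_one'
    have hg2 : (QuaternionGroup.a k) ^ (4*e) = 1 := by
      have := congrArg Subtype.val hg
      push_cast at this
      rwa [hH] at this
    rw [show (QuaternionGroup.a k : QuaternionGroup n) = QuaternionGroup.a 1 ^ (k.val) by
      rw [a_one_pow, ZMod.natCast_zmod_val], ← pow_mul, a_one_pow, one_def] at hg2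
    have h00 : ((k.val * (4*e) : ℕ) : ZMod (2*n)) = 0 := by
      push_cast
      exact_mod_cast QuaternionGroup.a.inj hg2
    rw [ZMod.natCast_eq_zero_iff] at h00
    rw [qg_cast_eq_zero_iff h2 hn]
    have hdd : 2*e*i ∣ 2*e*(2*k.val) := by
      rw [mul_assoc, hei, (by ring : 2*e*(2*k.val) = k.val*(4*e))]
      exact h00
    have h2k : i ∣ k.val * 2 := by
      rw [mul_comm]
      exact (Nat.mul_dvd_mul_iff_left (show 0 < 2*e by omega)).mp hdd
    exact (Nat.Coprime.dvd_of_dvd_mul_right hodd.coprime_two_right) h2k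
  -- step 4: set equality
  have hset : {k : ZMod (2*n) | QuaternionGroup.a k ∈ H}
      = {k | ZMod.castHom h2 (ZMod i) k = 0} := by
    apply Set.eq_of_subset_of_ncard_le (fun k hk => hmem k hk)
    have e1 : {k : ZMod (2*n) | ZMod.castHom h2 (ZMod i) k = 0}.ncard = 2*e := by
      rw [← Nat.card_coe_set_eq]
      exact qg_card_ker h2 hn hi hei
    have e2 : {k : ZMod (2*n) | QuaternionGroup.a k ∈ H}.ncard = 2*e := by
      rw [← Nat.card_coe_set_eq]
      exact hCH
    show ({k : ZMod (2*n) | ZMod.castHom h2 (ZMod i) k = 0}).ncard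
      ≤ ({k : ZMod (2*n) | QuaternionGroup.a k ∈ H}).ncard
    omega
  have haiff : ∀ k : ZMod (2*n), QuaternionGroup.a k ∈ H ↔
      ZMod.castHom h2 (ZMod i) k = 0 := fun k => Set.ext_iff.mp hset k
  have hxaiff : ∀ k : ZMod (2*n), QuaternionGroup.xa k ∈ H ↔
      ZMod.castHom h2 (ZMod i) k = ZMod.castHom h2 (ZMod i) k0 := by
    intro k
    constructor
    · intro hk
      have := hmem _ (qg_a_mem H h0 hk)
      rw [map_sub, sub_eq_zero] at this
      exact this.symm
    · intro hc
      have h1 : ZMod.castHom h2 (ZMod i) (k0 - k) = 0 := by rw [map_sub, hc, sub_self]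
      have h2' : QuaternionGroup.a (k0 - k) ∈ H := (haiff _).mpr h1
      rw [qg_xa_eq k0 k]
      exact H.mul_mem h2' h0
  refine ⟨ZMod.castHom h2 (ZMod i) k0, ?_⟩
  ext x
  cases x with
  | a k => rw [mem_qgH_a]; exact haiff k
  | xa k => rw [mem_qgH_xa]; exact hxaiff k

theorem qg_inv_a (k : ZMod (2*n)) :
    (QuaternionGroup.a k : QuaternionGroup n)⁻¹ = QuaternionGroup.a (-k) := by
  rw [eq_comm, eq_inv_iff_mul_eq_one, a_mul_a, neg_add_cancel, one_def]

theorem qg_closure_eq (h2 : (i:ℕ) ∣ 2*n) (hni : i ∣ n) (hn : n ≠ 0) (j : ℕ) :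
    Subgroup.closure {(QuaternionGroup.a 1 : QuaternionGroup n) ^ i,
      (QuaternionGroup.a 1 : QuaternionGroup n) ^ j * QuaternionGroup.xa 0}
      = qgH h2 hni (-(j : ZMod i)) := by
  haveI : NeZero (2*n) := ⟨by omega⟩
  have hgen2 : (QuaternionGroup.a 1 : QuaternionGroup n) ^ j * QuaternionGroup.xa 0
      = QuaternionGroup.xa (-(j : ZMod (2*n))) := by
    rw [a_one_pow, a_mul_xa, zero_sub]
  have hA : ∀ k : ZMod (2*n), ZMod.castHom h2 (ZMod i) k = 0 →
      QuaternionGroup.a k ∈ Subgroup.closure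
        {(QuaternionGroup.a 1 : QuaternionGroup n) ^ i,
         (QuaternionGroup.a 1 : QuaternionGroup n) ^ j * QuaternionGroup.xa 0} := by
    intro k hk
    obtain ⟨m, hm⟩ := (qg_cast_eq_zero_iff h2 hn k).mp hk
    have : QuaternionGroup.a k = ((QuaternionGroup.a 1 : QuaternionGroup n) ^ i) ^ m := by
      rw [← pow_mul, a_one_pow, ← hm, ZMod.natCast_zmod_val]
    rw [this]
    exact pow_mem (Subgroup.subset_closure (Set.mem_insert _ _)) m
  apply le_antisymm
  · rw [Subgroup.closure_le]
    rintro x hx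
    rcases hx with rfl | rfl
    · rw [a_one_pow]
      show ZMod.castHom h2 (ZMod i) ((i : ℕ) : ZMod (2*n)) = 0
      rw [map_natCast, ZMod.natCast_self]
    · rw [hgen2]
      show ZMod.castHom h2 (ZMod i) (-(j : ZMod (2*n))) = -(j : ZMod i)
      rw [map_neg, map_natCast]
  · intro x hx
    cases x with
    | a k => exact hA k hx
    | xa k =>
      have hx' : ZMod.castHom h2 (ZMod i) k = -(j : ZMod i) := hx
      have hxk : QuaternionGroup.xa k = QuaternionGroup.a (-(j : ZMod (2*n)) - k) *
          ((QuaternionGroup.a 1 : QuaternionGroup n) ^ j * QuaternionGroup.xa 0) := by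
        rw [hgen2, a_mul_xa, sub_sub_cancel]
      rw [hxk]
      refine mul_mem (hA _ ?_) (Subgroup.subset_closure (Set.mem_insert_of_mem _ rfl))
      rw [map_sub, map_neg, map_natCast, hx', sub_self]

theorem qg_qgH_inj (h2 : (i:ℕ) ∣ 2*n) (hni : i ∣ n) (hn : n ≠ 0) (hi : i ≠ 0)
    {c c' : ZMod i} (hcc : qgH h2 hni c = qgH h2 hni c') : c = c' := by
  haveI : NeZero i := ⟨hi⟩
  have h : QuaternionGroup.xa ((c.val : ℕ) : ZMod (2*n)) ∈ qgH h2 hni c := by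
    rw [mem_qgH_xa, map_natCast, ZMod.natCast_zmod_val]
  rw [hcc, mem_qgH_xa, map_natCast, ZMod.natCast_zmod_val] at h
  exact h

theorem qg_conj_qgH (h2 : (i:ℕ) ∣ 2*n) (hni : i ∣ n) (m : ZMod (2*n)) (c : ZMod i) :
    Subgroup.map (MulAut.conj (QuaternionGroup.a m : QuaternionGroup n)).toMonoidHom
      (qgH h2 hni c) = qgH h2 hni (c - 2 * ZMod.castHom h2 (ZMod i) m) := by
  ext x
  rw [Subgroup.mem_map_equiv]
  cases x with
  | a k =>
    rw [MulAut.conj_symm_apply, qg_inv_a, a_mul_a, a_mul_a]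
    show ZMod.castHom h2 (ZMod i) (-m + k + m) = 0 ↔ _
    rw [show -m + k + m = k by ring]
    exact Iff.rfl
  | xa k =>
    rw [MulAut.conj_symm_apply, qg_inv_a, a_mul_xa, xa_mul_a]
    show ZMod.castHom h2 (ZMod i) (k - -m + m) = c ↔
      ZMod.castHom h2 (ZMod i) k = c - 2 * ZMod.castHom h2 (ZMod i) m
    rw [show k - -m + m = k + (m + m) by ring, map_add, map_add]
    constructor
    · intro h
      rw [← h]; ring
    · intro h
      rw [h]; ring

/-- Let `n ≥ 1` and `d ∣ 4n` with `4 ∣ d` and `i = 4n/d` odd. Then `Q_{4n}` has exactly `i`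
subgroups of order `d`, namely the subgroups `⟨a^i, a^j b⟩` for `0 ≤ j < i`, and any two
subgroups of order `d` are conjugate. -/
theorem quaternionGroup_subgroups_of_four_dvd_odd (n d : ℕ) (hn : 1 ≤ n)
    (hd : d ∣ 4 * n) (h4 : 4 ∣ d) (hodd : Odd (4 * n / d)) :
    (∀ H : Subgroup (QuaternionGroup n),
        Nat.card H = d ↔
          ∃ j < 4 * n / d,
            H = Subgroup.closure
              {(QuaternionGroup.a 1 : QuaternionGroup n) ^ (4 * n / d),
               (QuaternionGroup.a 1 : QuaternionGroup n) ^ j * QuaternionGroup.xa 0}) ∧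
    Nat.card {H : Subgroup (QuaternionGroup n) // Nat.card H = d} = 4 * n / d ∧
    ∀ H K : Subgroup (QuaternionGroup n), Nat.card H = d → Nat.card K = d →
      ∃ g : QuaternionGroup n, K = Subgroup.map (MulAut.conj g).toMonoidHom H := by
  obtain ⟨e, rfl⟩ := h4
  set i := 4 * n / (4 * e) with hidef
  have hdi : (4*e) * i = 4*n := Nat.mul_div_cancel' hd
  have hn0 : n ≠ 0 := by omega
  have hi0 : i ≠ 0 := by
    rintro h; rw [h, mul_zero] at hdi; omega
  have hei : e * i = n := by
    apply Nat.eq_of_mul_eq_mul_left (show 0 < 4 by norm_num)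
    rw [← hdi]; ring
  have hni : i ∣ n := Dvd.intro_left e hei
  have h2 : i ∣ 2*n := hni.trans (dvd_mul_left n 2)
  have he0 : e ≠ 0 := by rintro rfl; omega
  haveI : NeZero i := ⟨hi0⟩
  refine ⟨?_, ?_, ?_⟩
  · intro H
    constructor
    · intro hH
      obtain ⟨c, rfl⟩ := qg_classify h2 hni hn0 hi0 hodd hei H hH
      refine ⟨(-c).val, ZMod.val_lt _, ?_⟩
      rw [qg_closure_eq h2 hni hn0]
      congr 1
      rw [ZMod.natCast_zmod_val, neg_neg]
    · rintro ⟨j, hj, rfl⟩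
      rw [qg_closure_eq h2 hni hn0, qg_card_qgH h2 hni hn0 hi0 hei]
  · have hbij : Function.Bijective (fun c : ZMod i =>
        (⟨qgH h2 hni c, qg_card_qgH h2 hni hn0 hi0 hei c⟩ :
          {H : Subgroup (QuaternionGroup n) // Nat.card H = 4*e})) := by
      constructor
      · intro c c' h
        exact qg_qgH_inj h2 hni hn0 hi0 (congrArg Subtype.val h)
      · rintro ⟨H, hH⟩
        obtain ⟨c, rfl⟩ := qg_classify h2 hni hn0 hi0 hodd hei H hH
        exact ⟨c, rfl⟩
    rw [← Nat.card_congr (Equiv.ofBijective _ hbij), Nat.card_zmod]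
  · intro H K hH hK
    obtain ⟨c, rfl⟩ := qg_classify h2 hni hn0 hi0 hodd hei H hH
    obtain ⟨c', rfl⟩ := qg_classify h2 hni hn0 hi0 hodd hei K hK
    set u : ℕ := (i+1)/2 with hu
    set t : ZMod i := (u : ZMod i) * (c - c') with ht
    have h2u : 2*u = i+1 := by
      rw [Nat.odd_iff] at hodd; omega
    have h2t : 2*t = c - c' := by
      calc 2*t = ((2*u : ℕ) : ZMod i) * (c - c') := by push_cast; ring
      _ = ((i+1 : ℕ) : ZMod i) * (c - c') := by rw [h2u]
      _ = c - c' := by push_cast [ZMod.natCast_self]; ring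
    refine ⟨QuaternionGroup.a ((t.val : ℕ) : ZMod (2*n)), ?_⟩
    rw [qg_conj_qgH h2 hni, map_natCast, ZMod.natCast_zmod_val]
    congr 1
    rw [h2t]; ring
end

section
/- Let n ≥ 1 and let d be a divisor of 4n such that 4 divides d and i = 4n/d is even. Then every subgroup of the dicyclic group Q_{4n} of order d is either the cyclic subgroup generated by a^{i/2}, or is conjugate to the subgroup ⟨a^i, b⟩, or is conjugate to the subgroup ⟨a^i, ab⟩. (Lemma 3.1(3)) -/
open QuaternionGroup Subgroup

def qsign {n : ℕ} : QuaternionGroup n →* ℤˣ where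
  toFun x := match x with | .a _ => 1 | .xa _ => -1
  map_one' := rfl
  map_mul' := by rintro (i|i) (j|j) <;> rfl

@[simp] lemma qsign_a {n : ℕ} (i : ZMod (2*n)) : qsign (QuaternionGroup.a i) = 1 := rfl
@[simp] lemma qsign_xa {n : ℕ} (i : ZMod (2*n)) : qsign (QuaternionGroup.xa i) = -1 := rfl

lemma mem_ker_qsign {n : ℕ} (x : QuaternionGroup n) : x ∈ qsign.ker ↔ ∃ m, x = QuaternionGroup.a m := by
  cases x with
  | a m => simp [MonoidHom.mem_ker]
  | xa m => simp [MonoidHom.mem_ker]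

lemma aux_cyclic (n e : ℕ) [NeZero n] (he : e ∣ 2 * n) (he0 : 0 < e)
    (H : Subgroup (QuaternionGroup n)) (hA : H ≤ qsign.ker)
    (hcard : Nat.card H = e) :
    H = Subgroup.zpowers ((QuaternionGroup.a 1 : QuaternionGroup n) ^ (2 * n / e)) := by
  obtain ⟨c, hec⟩ := he
  have hn0 : 0 < 2 * n := by have := NeZero.pos n; omega
  have h' : 0 < e * c := by rw [← hec]; exact hn0
  have hc0 : 0 < c := Nat.pos_of_ne_zero (fun h => by simp [h] at h')
  have hcde : 2 * n / e = c := by rw [hec, Nat.mul_div_cancel_left _ he0]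
  rw [hcde]
  have hcd : c ∣ 2 * n := ⟨e, by rw [hec, mul_comm]⟩
  have hord : orderOf ((QuaternionGroup.a 1 : QuaternionGroup n) ^ c) = e := by
    rw [orderOf_pow, orderOf_a_one, Nat.gcd_eq_right hcd, Nat.div_eq_of_eq_mul_left hc0 hec]
  apply Subgroup.eq_of_le_of_card_ge
  · intro x hx
    obtain ⟨m, rfl⟩ := (mem_ker_qsign x).mp (hA hx)
    have hpow : (QuaternionGroup.a m : QuaternionGroup n) ^ e = 1 := by
      have h1 : (⟨_, hx⟩ : H) ^ e = 1 := by rw [← hcard]; exact pow_card_eq_one'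
      have h2 := congrArg Subtype.val h1
      simpa using h2
    have hm : QuaternionGroup.a m = (QuaternionGroup.a 1 : QuaternionGroup n) ^ m.val := by
      rw [a_one_pow, ZMod.natCast_zmod_val]
    have hdvd : 2 * n ∣ m.val * e := by
      rw [hm, ← pow_mul] at hpow
      have := orderOf_dvd_of_pow_eq_one hpow
      rwa [orderOf_a_one] at this
    have hcm : c ∣ m.val := by
      have h3 : e * c ∣ e * m.val := by rw [← hec, mul_comm e m.val]; exact hdvd
      exact (Nat.mul_dvd_mul_iff_left he0).mp h3
    refine ⟨(m.val / c : ℕ), ?_⟩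
    show ((QuaternionGroup.a 1 : QuaternionGroup n) ^ c) ^ ((m.val / c : ℕ) : ℤ) = _
    rw [zpow_natCast, ← pow_mul, Nat.mul_div_cancel' hcm, ← hm]
  · rw [hcard, Nat.card_zpowers, hord]

@[simp] lemma a_inv {n : ℕ} (i : ZMod (2 * n)) :
    (QuaternionGroup.a i : QuaternionGroup n)⁻¹ = QuaternionGroup.a (-i) := rfl

lemma conj_a_xa {n : ℕ} (k t : ZMod (2 * n)) :
    QuaternionGroup.a k * QuaternionGroup.xa t * (QuaternionGroup.a k)⁻¹
      = QuaternionGroup.xa (t - 2 * k) := by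
  have hinv : (QuaternionGroup.a k : QuaternionGroup n)⁻¹ = QuaternionGroup.a (-k) := rfl
  rw [hinv, a_mul_xa, xa_mul_a]
  congr 1
  ring

/-- Let `n ≥ 1` and `d ∣ 4n` with `4 ∣ d` and `i = 4n/d` even. Then every subgroup of `Q_{4n}`
of order `d` is either the cyclic subgroup generated by `a^(i/2)`, or conjugate to `⟨a^i, b⟩`,
or conjugate to `⟨a^i, ab⟩`. -/
theorem quaternionGroup_subgroups_of_four_dvd_even (n d : ℕ) (hn : 1 ≤ n)
    (hd : d ∣ 4 * n) (h4 : 4 ∣ d) (heven : Even (4 * n / d)) :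
    ∀ H : Subgroup (QuaternionGroup n), Nat.card H = d →
      H = Subgroup.zpowers ((QuaternionGroup.a 1 : QuaternionGroup n) ^ (4 * n / d / 2)) ∨
      (∃ g : QuaternionGroup n,
        H = Subgroup.map (MulAut.conj g).toMonoidHom
          (Subgroup.closure
            {(QuaternionGroup.a 1 : QuaternionGroup n) ^ (4 * n / d),
             QuaternionGroup.xa 0})) ∨
      (∃ g : QuaternionGroup n,
        H = Subgroup.map (MulAut.conj g).toMonoidHom
          (Subgroup.closure
            {(QuaternionGroup.a 1 : QuaternionGroup n) ^ (4 * n / d),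
             QuaternionGroup.a 1 * QuaternionGroup.xa 0})) := by
  haveI : NeZero n := ⟨by omega⟩
  intro H hH
  have hn4 : 0 < 4 * n := by omega
  have hd0 : 0 < d := Nat.pos_of_ne_zero (fun h => by subst h; rw [zero_dvd_iff] at hd; omega)
  obtain ⟨d4, rfl⟩ := h4
  have hd40 : 0 < d4 := by omega
  obtain ⟨i', hi'⟩ := heven
  have hdi : 4 * d4 * (4 * n / (4 * d4)) = 4 * n := Nat.mul_div_cancel' hd
  rw [hi'] at hdi
  -- 4*d4*(2*i') = 4*n, hence 2*n = (4*d4) * i' = (2*d4)*(2*i')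
  have h2n : 2 * n = 4 * d4 * i' := by
    have h2 : 2 * (2 * n) = 2 * (4 * d4 * i') := by
      rw [show 2 * (2 * n) = 4 * n by ring, ← hdi]; ring
    exact Nat.eq_of_mul_eq_mul_left two_pos h2
  have hA2n : 4 * d4 ∣ 2 * n := ⟨i', h2n⟩
  have hB : 2 * n / (4 * d4) = i' := Nat.div_eq_of_eq_mul_left (by omega) (by rw [h2n]; ring)
  have hC : 4 * n / (4 * d4) / 2 = i' := by rw [hi']; omega
  by_cases hsub : H ≤ qsign.ker
  · left
    have := aux_cyclic n (4 * d4) hA2n (by omega) H hsub hH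
    rw [this, hB, hC]
  · right
    rw [SetLike.le_def] at hsub
    push_neg at hsub
    obtain ⟨x, hxH, hxk⟩ := hsub
    obtain ⟨j, rfl⟩ : ∃ j, x = QuaternionGroup.xa j := by
      cases x with
      | a m => exact absurd ((mem_ker_qsign _).mpr ⟨m, rfl⟩) hxk
      | xa m => exact ⟨m, rfl⟩
    clear hxk
    set φ : H →* ℤˣ := qsign.comp H.subtype with hφ
    have hsurj : Function.Surjective φ := by
      intro u
      rcases Int.units_eq_one_or u with rfl | rfl
      · exact ⟨1, map_one φ⟩
      · exact ⟨⟨QuaternionGroup.xa j, hxH⟩, rfl⟩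
    have hq : Nat.card (H ⧸ φ.ker) = 2 := by
      rw [Nat.card_congr (QuotientGroup.quotientKerEquivOfSurjective φ hsurj).toEquiv,
        Nat.card_eq_fintype_card, Fintype.card_units_int]
    have hcards : Nat.card H = Nat.card (H ⧸ φ.ker) * Nat.card φ.ker :=
      Subgroup.card_eq_card_quotient_mul_card_subgroup φ.ker
    set K : Subgroup (QuaternionGroup n) := H ⊓ qsign.ker with hKdef
    have hKφ : Nat.card K = Nat.card φ.ker := by
      have h1 : φ.ker = K.subgroupOf H := by
        rw [hKdef, inf_subgroupOf_left, hφ, ← MonoidHom.comap_ker]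
        rfl
      rw [h1]
      exact (Nat.card_congr (Subgroup.subgroupOfEquivOfLe inf_le_left).toEquiv).symm
    have hKcard : Nat.card K = 2 * d4 := by
      rw [hH, hq, ← hKφ] at hcards
      omega
    have hK2n : (2 : ℕ) * d4 ∣ 2 * n := ⟨2 * i', by rw [h2n]; ring⟩
    have hK : K = Subgroup.zpowers ((QuaternionGroup.a 1 : QuaternionGroup n) ^ (2 * n / (2 * d4))) :=
      aux_cyclic n (2 * d4) hK2n (by omega) K inf_le_right hKcard
    have hII : 2 * n / (2 * d4) = 4 * n / (4 * d4) := by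
      rw [hi']
      exact Nat.div_eq_of_eq_mul_left (by omega) (by rw [h2n]; ring)
    rw [hII] at hK
    set I : ℕ := 4 * n / (4 * d4) with hIdef
    have haH : (QuaternionGroup.a 1 : QuaternionGroup n) ^ I ∈ H := by
      have h1 : (QuaternionGroup.a 1 : QuaternionGroup n) ^ I ∈ K := by
        rw [hK]; exact Subgroup.mem_zpowers _
      exact h1.1
    have hHeq : H = Subgroup.closure
        {(QuaternionGroup.a 1 : QuaternionGroup n) ^ I, QuaternionGroup.xa j} := by
      apply le_antisymm
      · intro x hx
        cases x with
        | a m =>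
          have hxK : QuaternionGroup.a m ∈ K := ⟨hx, (mem_ker_qsign _).mpr ⟨m, rfl⟩⟩
          rw [hK] at hxK
          exact Subgroup.zpowers_le.mpr
            (Subgroup.subset_closure (Set.mem_insert _ _)) hxK
        | xa m =>
          have h1 : QuaternionGroup.xa m * (QuaternionGroup.xa j)⁻¹ ∈ K := by
            refine ⟨H.mul_mem hx (H.inv_mem hxH), ?_⟩
            simp [MonoidHom.mem_ker]
          rw [hK] at h1
          have h2 : QuaternionGroup.xa m * (QuaternionGroup.xa j)⁻¹ ∈ Subgroup.closure
              {(QuaternionGroup.a 1 : QuaternionGroup n) ^ I, QuaternionGroup.xa j} :=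
            Subgroup.zpowers_le.mpr (Subgroup.subset_closure (Set.mem_insert _ _)) h1
          have h3 : QuaternionGroup.xa m
              = QuaternionGroup.xa m * (QuaternionGroup.xa j)⁻¹ * QuaternionGroup.xa j := by
            group
          rw [h3]
          exact mul_mem h2 (Subgroup.subset_closure (Set.mem_insert_of_mem _ rfl))
      · rw [Subgroup.closure_le]
        intro x hx
        simp only [Set.mem_insert_iff, Set.mem_singleton_iff] at hx
        rcases hx with rfl | rfl
        · exact haH
        · exact hxH
    have haI : (QuaternionGroup.a 1 : QuaternionGroup n) ^ I = QuaternionGroup.a (I : ZMod (2*n)) :=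
      a_one_pow I
    have hconjA : ∀ k : ZMod (2*n),
        (MulAut.conj (QuaternionGroup.a k)).toMonoidHom
          ((QuaternionGroup.a 1 : QuaternionGroup n) ^ I)
          = (QuaternionGroup.a 1 : QuaternionGroup n) ^ I := by
      intro k
      have hinv : (QuaternionGroup.a k : QuaternionGroup n)⁻¹ = QuaternionGroup.a (-k) := rfl
      simp only [MulEquiv.coe_toMonoidHom, MulAut.conj_apply, haI, hinv, a_mul_a]
      congr 1
      ring
    rcases Nat.even_or_odd j.val with hpar | hpar
    · left
      set k : ZMod (2 * n) := -(↑(j.val / 2)) with hk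
      have e2 : (MulAut.conj (QuaternionGroup.a k)).toMonoidHom (QuaternionGroup.xa 0)
          = QuaternionGroup.xa j := by
        simp only [MulEquiv.coe_toMonoidHom, MulAut.conj_apply, a_mul_xa, a_inv, xa_mul_a]
        congr 1
        have h2t : 2 * (j.val / 2) = j.val := by
          obtain ⟨t, ht⟩ := hpar; omega
        have hcast : ((j.val : ℕ) : ZMod (2 * n)) = j := ZMod.natCast_zmod_val j
        calc (0 : ZMod (2 * n)) - k + -k
            = ((2 * (j.val / 2) : ℕ) : ZMod (2 * n)) := by rw [hk]; push_cast; ring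
          _ = j := by rw [h2t, hcast]
      exact ⟨_, by rw [MonoidHom.map_closure, Set.image_pair, hconjA, e2, ← hHeq]⟩
    · right
      set k : ZMod (2 * n) := -(↑((j.val + 1) / 2)) with hk
      have e2 : (MulAut.conj (QuaternionGroup.a k)).toMonoidHom
          (QuaternionGroup.a 1 * QuaternionGroup.xa 0) = QuaternionGroup.xa j := by
        simp only [MulEquiv.coe_toMonoidHom, MulAut.conj_apply, a_mul_xa, a_inv, xa_mul_a]
        congr 1
        have h2t : 2 * ((j.val + 1) / 2) = j.val + 1 := by
          obtain ⟨t, ht⟩ := hpar; omega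
        have hcast : ((j.val : ℕ) : ZMod (2 * n)) = j := ZMod.natCast_zmod_val j
        calc (0 : ZMod (2 * n)) - 1 - k + -k
            = ((2 * ((j.val + 1) / 2) : ℕ) : ZMod (2 * n)) - 1 := by rw [hk]; push_cast; ring
          _ = j := by rw [h2t]; push_cast; rw [hcast]; ring
      exact ⟨_, by rw [MonoidHom.map_closure, Set.image_pair, hconjA, e2, ← hHeq]⟩
end

section
/- Let n ≥ 1 and let d be a divisor of 4n. The number of subgroups of the dicyclic group Q_{4n} of order d equals: 1 if 4 does not divide d; 4n/d if 4 divides d and 4n/d is odd; and 4n/d + 1 if 4 divides d and 4n/d is even. -/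
open AddSubgroup QuaternionGroup
set_option maxHeartbeats 1000000
open AddSubgroup QuaternionGroup
set_option maxHeartbeats 1000000

namespace QGcount

variable {m : ℕ} [NeZero m]

lemma val_natCast_self (x : ZMod m) : ((x.val : ℕ) : ZMod m) = x := by
  simp [ZMod.natCast_val, ZMod.cast_id]

lemma mem_zmul_iff {g : ℕ} (hg : g ∣ m) (x : ZMod m) :
    x ∈ zmultiples ((g : ℕ) : ZMod m) ↔ g ∣ x.val := by
  constructor
  · rintro ⟨z, hz⟩
    have hz' : z * ((g:ℕ) : ZMod m) = x := by simpa [zsmul_eq_mul] using hz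
    have hval : ((x.val : ℤ) : ZMod m) = ((z * g : ℤ) : ZMod m) := by
      push_cast
      rw [val_natCast_self x, ← hz']
    rw [ZMod.intCast_eq_intCast_iff] at hval
    have hmd : (m:ℤ) ∣ (z * g - x.val) := hval.dvd
    have h4 : (g:ℤ) ∣ z * g := dvd_mul_left _ _
    have h5 : (g:ℤ) ∣ (x.val : ℤ) := by
      have := dvd_sub h4 ((Int.natCast_dvd_natCast.mpr hg).trans hmd)
      simpa using this
    exact_mod_cast h5
  · intro h
    obtain ⟨t, ht⟩ := h
    refine ⟨(t : ℤ), ?_⟩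
    rw [← val_natCast_self x, ht]
    push_cast
    rw [zsmul_eq_mul, mul_comm]
    norm_cast

lemma zmul_card {g : ℕ} (hg : g ∣ m) (hg0 : g ≠ 0) :
    Nat.card (zmultiples ((g : ℕ) : ZMod m)) = m / g := by
  rw [Nat.card_zmultiples, ZMod.addOrderOf_coe _ (NeZero.ne m), Nat.gcd_eq_right hg]

/-- every AddSubgroup of `ZMod m` is `zmultiples` of the canonical divisor -/
lemma addsubgroup_eq (K : AddSubgroup (ZMod m)) :
    ∃ g : ℕ, g ∣ m ∧ g ≠ 0 ∧ K = zmultiples ((g : ℕ) : ZMod m) := by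
  obtain ⟨⟨y, hyK⟩, hy⟩ := @IsAddCyclic.exists_generator K _ _
  have hK : K = zmultiples y := by
    ext z
    constructor
    · intro hz
      obtain ⟨w, hw⟩ := hy ⟨z, hz⟩
      exact ⟨w, by simpa using congrArg (Subtype.val) hw⟩
    · rintro ⟨w, rfl⟩
      exact zsmul_mem hyK w
  set g := Nat.gcd m y.val with hgdef
  have hgm : g ∣ m := Nat.gcd_dvd_left _ _
  have hg0 : g ≠ 0 := by
    have := NeZero.ne m
    simp [hgdef, Nat.gcd_eq_zero_iff]; omega
  refine ⟨g, hgm, hg0, ?_⟩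
  have h1 : zmultiples y ≤ zmultiples ((g:ℕ) : ZMod m) := by
    rw [zmultiples_le, mem_zmul_iff hgm]
    exact Nat.gcd_dvd_right _ _
  have h2 : zmultiples ((g:ℕ) : ZMod m) ≤ zmultiples y := by
    rw [zmultiples_le]
    have hbez : (g : ℤ) = m * Nat.gcdA m y.val + y.val * Nat.gcdB m y.val :=
      Nat.gcd_eq_gcd_ab m y.val
    have h3 : ((g:ℤ) : ZMod m) = ((↑m * Nat.gcdA m y.val + ↑y.val * Nat.gcdB m y.val : ℤ) : ZMod m) := by
      rw [hbez]
    push_cast at h3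
    rw [ZMod.natCast_self] at h3
    simp only [zero_mul, zero_add] at h3
    rw [val_natCast_self y] at h3
    refine ⟨Nat.gcdB m y.val, ?_⟩
    show _ • y = ((g:ℕ) : ZMod m)
    rw [zsmul_eq_mul, mul_comm, ← h3]
  rw [hK]
  exact le_antisymm h1 h2

lemma addsubgroup_eq_card (K : AddSubgroup (ZMod m)) :
    Nat.card K ∣ m ∧ Nat.card K ≠ 0 ∧ K = zmultiples ((m / Nat.card K : ℕ) : ZMod m) := by
  obtain ⟨g, hgm, hg0, rfl⟩ := addsubgroup_eq K
  rw [zmul_card hgm hg0]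
  refine ⟨Nat.div_dvd_of_dvd hgm, ?_, ?_⟩
  · have := Nat.div_pos (Nat.le_of_dvd (Nat.pos_of_ne_zero (NeZero.ne m)) hgm) (Nat.pos_of_ne_zero hg0)
    omega
  · rw [Nat.div_div_self hgm (NeZero.ne m)]

lemma addsubgroup_inj (K K' : AddSubgroup (ZMod m)) (h : Nat.card K = Nat.card K') : K = K' := by
  have h1 := (addsubgroup_eq_card K).2.2
  have h2 := (addsubgroup_eq_card K').2.2
  rw [h1, h2, h]

end QGcount
open AddSubgroup QuaternionGroup

namespace QGcount

variable {n : ℕ}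

lemma a_inj : Function.Injective (a : ZMod (2*n) → QuaternionGroup n) := by
  intro i j h; injection h

lemma xa_inj : Function.Injective (xa : ZMod (2*n) → QuaternionGroup n) := by
  intro i j h; injection h

/-- the "rotation" part of a subgroup -/
def Kof (H : Subgroup (QuaternionGroup n)) : AddSubgroup (ZMod (2*n)) where
  carrier := {i | a i ∈ H}
  zero_mem' := H.one_mem
  add_mem' := by
    intro i j hi hj
    simpa using H.mul_mem hi hj
  neg_mem' := by
    intro i hi
    exact H.inv_mem hi

@[simp] lemma mem_Kof {H : Subgroup (QuaternionGroup n)} {i : ZMod (2*n)} :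
    i ∈ Kof H ↔ a i ∈ H := Iff.rfl

/-- subgroup of type 1 (inside the cyclic part) -/
def sub1 (K : AddSubgroup (ZMod (2*n))) : Subgroup (QuaternionGroup n) where
  carrier := a '' K
  one_mem' := ⟨0, K.zero_mem, rfl⟩
  mul_mem' := by
    rintro _ _ ⟨i, hi, rfl⟩ ⟨j, hj, rfl⟩
    exact ⟨i + j, K.add_mem hi hj, rfl⟩
  inv_mem' := by
    rintro _ ⟨i, hi, rfl⟩
    exact ⟨-i, K.neg_mem hi, rfl⟩

/-- subgroup of type 2 (dicyclic) -/
def sub2 (K : AddSubgroup (ZMod (2*n))) (hK : ((n:ℕ) : ZMod (2*n)) ∈ K) (j : ZMod (2*n)) :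
    Subgroup (QuaternionGroup n) where
  carrier := a '' K ∪ xa '' ((j + ·) '' K)
  one_mem' := Or.inl ⟨0, K.zero_mem, rfl⟩
  mul_mem' := by
    rintro _ _ (⟨i, hi, rfl⟩ | ⟨_, ⟨i, hi, rfl⟩, rfl⟩) (⟨i', hi', rfl⟩ | ⟨_, ⟨i', hi', rfl⟩, rfl⟩)
    · exact Or.inl ⟨i + i', K.add_mem hi hi', rfl⟩
    · refine Or.inr ⟨j + (i' - i), ⟨i' - i, K.sub_mem hi' hi, rfl⟩, ?_⟩
      simp [a_mul_xa]
      ring_nf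
    · refine Or.inr ⟨j + (i + i'), ⟨i + i', K.add_mem hi hi', rfl⟩, ?_⟩
      simp [xa_mul_a]
      ring_nf
    · refine Or.inl ⟨(n:ZMod (2*n)) + i' - i, ?_, ?_⟩
      · exact K.sub_mem (K.add_mem hK hi') hi
      · simp [xa_mul_xa]
        ring_nf
  inv_mem' := by
    rintro _ (⟨i, hi, rfl⟩ | ⟨_, ⟨i, hi, rfl⟩, rfl⟩)
    · exact Or.inl ⟨-i, K.neg_mem hi, rfl⟩
    · refine Or.inr ⟨j + ((n:ZMod (2*n)) + i), ⟨(n:ZMod (2*n)) + i, K.add_mem hK hi, rfl⟩, ?_⟩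
      show xa (j + ((n:ZMod (2*n)) + i)) = (xa (j + i))⁻¹
      show _ = xa ((n:ZMod (2*n)) + (j + i))
      congr 1
      ring

lemma mem_sub1_a {K : AddSubgroup (ZMod (2*n))} {i : ZMod (2*n)} :
    a i ∈ sub1 K ↔ i ∈ K := by
  constructor
  · rintro ⟨i', hi', h⟩; injection h with h'; exact h' ▸ hi'
  · intro h; exact ⟨i, h, rfl⟩

lemma notMem_sub1_xa {K : AddSubgroup (ZMod (2*n))} (j : ZMod (2*n)) :
    xa j ∉ sub1 K := by
  rintro ⟨i, hi, h⟩; exact absurd h (by simp)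

lemma mem_sub2_a {K : AddSubgroup (ZMod (2*n))} {hK} {j i : ZMod (2*n)} :
    a i ∈ sub2 K hK j ↔ i ∈ K := by
  constructor
  · rintro (⟨i', hi', h⟩ | ⟨_, ⟨i', hi', rfl⟩, h⟩)
    · injection h with h'; exact h' ▸ hi'
    · exact absurd h (by simp)
  · intro h; exact Or.inl ⟨i, h, rfl⟩

lemma mem_sub2_xa {K : AddSubgroup (ZMod (2*n))} {hK} {j i : ZMod (2*n)} :
    xa i ∈ sub2 K hK j ↔ i - j ∈ K := by
  constructor
  · rintro (⟨i', hi', h⟩ | ⟨_, ⟨i', hi', rfl⟩, h⟩)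
    · exact absurd h (by simp)
    · injection h with h'
      rw [← h']
      simpa using hi'
  · intro h
    refine Or.inr ⟨j + (i - j), ⟨i - j, h, rfl⟩, by congr 1; ring⟩

end QGcount

namespace QGcount
variable {n : ℕ}

lemma Kof_sub1 (K : AddSubgroup (ZMod (2*n))) : Kof (sub1 K) = K := by
  ext i; exact mem_sub1_a

lemma Kof_sub2 (K : AddSubgroup (ZMod (2*n))) (hK) (j : ZMod (2*n)) :
    Kof (sub2 K hK j) = K := by
  ext i; exact mem_sub2_a (hK := hK)

lemma classify (H : Subgroup (QuaternionGroup n)) :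
    H = sub1 (Kof H) ∨
      ∃ (hK : ((n:ℕ) : ZMod (2*n)) ∈ Kof H) (j : ZMod (2*n)), H = sub2 (Kof H) hK j := by
  by_cases hx : ∃ j, xa j ∈ H
  · obtain ⟨j, hj⟩ := hx
    have hK : ((n:ℕ) : ZMod (2*n)) ∈ Kof H := by
      have := H.mul_mem hj hj
      simpa [xa_mul_xa] using this
    refine Or.inr ⟨hK, j, ?_⟩
    ext x
    rcases x with i | i
    · rw [mem_sub2_a]; exact Iff.rfl
    · rw [mem_sub2_xa]
      constructor
      · intro hi
        have h2 : xa i * (xa j)⁻¹ ∈ H := H.mul_mem hi (H.inv_mem hj)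
        have h3 : xa i * (xa j)⁻¹ = a (j - i) := by
          show xa i * xa ((n:ZMod (2*n)) + j) = _
          rw [xa_mul_xa]
          congr 1
          have h2n : ((2*n : ℕ) : ZMod (2*n)) = 0 := ZMod.natCast_self _
          push_cast at h2n
          rw [show ((n:ZMod (2*n)) + ((n:ZMod (2*n)) + j) - i) = (n+n) + j - i by ring,
            show ((n:ZMod (2*n)) + n) = 2*n by ring, h2n]
          ring
        rw [h3] at h2
        have h2' : j - i ∈ Kof H := h2
        have h5 : -(j - i) ∈ Kof H := (Kof H).neg_mem h2'
        have h6 : -(j - i) = i - j := by ring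
        exact h6 ▸ h5
      · intro hi
        have h4 : a (j - i) ∈ H := by
          have : -(i - j) = j - i := by ring
          exact this ▸ (Kof H).neg_mem hi
        have : a (j - i) * xa j ∈ H := H.mul_mem h4 hj
        rw [a_mul_xa] at this
        simpa [show j - (j - i) = i by ring] using this
  · push_neg at hx
    refine Or.inl ?_
    ext x
    rcases x with i | i
    · rw [mem_sub1_a]; exact Iff.rfl
    · simp [notMem_sub1_xa, hx i]

lemma sub2_eq_iff {K : AddSubgroup (ZMod (2*n))} {hK hK'} {j j' : ZMod (2*n)} :
    sub2 K hK j = sub2 K hK' j' ↔ j' - j ∈ K := by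
  constructor
  · intro h
    have : xa j' ∈ sub2 K hK' j' := mem_sub2_xa.mpr (by simpa using K.zero_mem)
    rw [← h] at this
    exact mem_sub2_xa.mp this
  · intro h
    ext x
    rcases x with i | i
    · rw [mem_sub2_a, mem_sub2_a]
    · rw [mem_sub2_xa, mem_sub2_xa]
      constructor
      · intro h1
        have h6 : (i - j) - (j' - j) = i - j' := by ring
        exact h6 ▸ K.sub_mem h1 h
      · intro h1
        have : (i - j') + (j' - j) = i - j := by ring
        exact this ▸ K.add_mem h1 h

lemma sub1_ne_sub2 {K K' : AddSubgroup (ZMod (2*n))} {hK'} {j : ZMod (2*n)} :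
    sub1 K ≠ sub2 K' hK' j := by
  intro h
  have : xa j ∈ sub2 K' hK' j := mem_sub2_xa.mpr (by simpa using K'.zero_mem)
  rw [← h] at this
  exact notMem_sub1_xa j this

lemma card_sub1 [NeZero n] (K : AddSubgroup (ZMod (2*n))) : Nat.card (sub1 K) = Nat.card K := by
  have h1 : (sub1 K : Set (QuaternionGroup n)) = a '' (K : Set (ZMod (2*n))) := rfl
  rw [← SetLike.coe_sort_coe, h1, Nat.card_coe_set_eq,
    Set.ncard_image_of_injective _ a_inj, ← Nat.card_coe_set_eq, SetLike.coe_sort_coe]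

lemma card_sub2 [NeZero n] (K : AddSubgroup (ZMod (2*n))) (hK) (j : ZMod (2*n)) :
    Nat.card (sub2 K hK j) = 2 * Nat.card K := by
  have h1 : (sub2 K hK j : Set (QuaternionGroup n)) =
      a '' (K : Set (ZMod (2*n))) ∪ xa '' ((j + ·) '' (K : Set (ZMod (2*n)))) := rfl
  have hdisj : Disjoint (a '' (K : Set (ZMod (2*n))))
      (xa '' ((j + ·) '' (K : Set (ZMod (2*n)))) : Set (QuaternionGroup n)) := by
    rw [Set.disjoint_left]
    rintro _ ⟨i, _, rfl⟩ ⟨i', _, h⟩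
    simp at h
  rw [← SetLike.coe_sort_coe, h1, Nat.card_coe_set_eq, Set.ncard_union_eq hdisj]
  rw [Set.ncard_image_of_injective _ a_inj, Set.ncard_image_of_injective _ xa_inj,
    Set.ncard_image_of_injective _ (add_right_injective j), ← Nat.card_coe_set_eq,
    SetLike.coe_sort_coe]
  ring

end QGcount

namespace QGcount

variable {n : ℕ}

section count
variable [NeZero n]

lemma val_n_lt : ((n:ℕ) : ZMod (2*n)).val = n :=
  ZMod.val_natCast_of_lt (by have := NeZero.pos n; omega)

/-- the unique cyclic subgroup of order d, for d ∣ 2n -/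
lemma exists_sub1 {d : ℕ} (hd2 : d ∣ 2*n) (hd0 : d ≠ 0) :
    Nat.card (sub1 (zmultiples (((2*n/d : ℕ) : ZMod (2*n)))) : Subgroup (QuaternionGroup n)) = d := by
  have hne : (2*n) ≠ 0 := by have := NeZero.pos n; omega
  rw [card_sub1, zmul_card (Nat.div_dvd_of_dvd hd2)
    (by have := Nat.div_pos (Nat.le_of_dvd (by omega) hd2) (Nat.pos_of_ne_zero hd0); omega),
    Nat.div_div_self hd2 hne]

/-- type-2 subgroups have card divisible by 4 -/
lemma four_dvd_of_sub2 {K : AddSubgroup (ZMod (2*n))} {hK : ((n:ℕ) : ZMod (2*n)) ∈ K}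
    {j : ZMod (2*n)} {d : ℕ} (hcard : Nat.card (sub2 K hK j : Subgroup (QuaternionGroup n)) = d) :
    4 ∣ d := by
  have hne : (2*n) ≠ 0 := by have := NeZero.pos n; omega
  obtain ⟨hcm, hc0, hKeq⟩ := addsubgroup_eq_card K
  set c := Nat.card K with hc
  rw [hKeq, mem_zmul_iff (Nat.div_dvd_of_dvd hcm), val_n_lt] at hK
  obtain ⟨t, ht⟩ := hK
  have hgne : (2*n)/c ≠ 0 := by
    have := Nat.div_pos (Nat.le_of_dvd (by omega) hcm) (Nat.pos_of_ne_zero hc0)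
    omega
  have hg : (2*n)/c * c = 2*n := Nat.div_mul_cancel hcm
  -- 2*n = (2n/c)*2t  and  = (2n/c)*c  so c = 2t
  have h2 : (2*n)/c * (2*t) = 2*n := by
    rw [show (2*n)/c * (2*t) = 2*((2*n)/c * t) by ring, ← ht]
  have hct : c = 2*t :=
    Nat.eq_of_mul_eq_mul_left (Nat.pos_of_ne_zero hgne) (hg.trans h2.symm)
  rw [card_sub2, ← hc] at hcard
  omega

lemma card_K0 {d : ℕ} (hd : d ∣ 4*n) (h4 : 4 ∣ d) :
    Nat.card (zmultiples (((4*n/d : ℕ) : ZMod (2*n)))) = d/2 ∧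
      ((n:ℕ) : ZMod (2*n)) ∈ zmultiples (((4*n/d : ℕ) : ZMod (2*n))) := by
  have hn0 := NeZero.pos n
  have hd0 : d ≠ 0 := by rintro rfl; simp at hd; omega
  obtain ⟨q, hq⟩ := hd
  obtain ⟨s, hs⟩ := h4
  have hq0 : q ≠ 0 := by rintro rfl; omega
  have hqd : 4*n/d = q := by rw [hq]; exact Nat.mul_div_cancel_left q (Nat.pos_of_ne_zero hd0)
  have hnsq : n = s * q := by
    have h4n : 4*n = 4*(s*q) := by rw [hq, hs]; ring
    omega
  have hqm : q ∣ 2*n := ⟨2*s, by rw [show q * (2*s) = 2*(s*q) by ring]; omega⟩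
  constructor
  · rw [hqd, zmul_card hqm hq0]
    rw [show 2*n = q*(2*s) by rw [show q * (2*s) = 2*(s*q) by ring]; omega,
      Nat.mul_div_cancel_left _ (Nat.pos_of_ne_zero hq0)]
    omega
  · rw [hqd, mem_zmul_iff hqm, val_n_lt]
    exact ⟨s, by rw [show q * s = s * q by ring]; omega⟩

lemma fin_eq_of_dvd {q : ℕ} (hqm : q ∣ 2*n) (j j' : Fin q)
    (h : (((j':ℕ) : ZMod (2*n)) - ((j:ℕ) : ZMod (2*n))) ∈ zmultiples ((q:ℕ) : ZMod (2*n))) :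
    j = j' := by
  have hne : (2*n) ≠ 0 := by have := NeZero.pos n; omega
  rw [mem_zmul_iff hqm] at h
  set x : ZMod (2*n) := ((j':ℕ) : ZMod (2*n)) - ((j:ℕ) : ZMod (2*n)) with hx
  have hval : ((x.val : ℤ) : ZMod (2*n)) = (((j':ℕ) - ((j:ℕ)) : ℤ) : ZMod (2*n)) := by
    push_cast
    rw [val_natCast_self]
  rw [ZMod.intCast_eq_intCast_iff] at hval
  have hmd : ((2*n : ℕ) : ℤ) ∣ (((j':ℕ) - (j:ℕ) : ℤ) - x.val) := hval.dvd
  have hqz : ((q:ℕ) : ℤ) ∣ ((j':ℕ) - (j:ℕ) : ℤ) := by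
    have h1 : ((q:ℕ):ℤ) ∣ ((2*n:ℕ):ℤ) := Int.natCast_dvd_natCast.mpr hqm
    have h2 : ((q:ℕ):ℤ) ∣ (x.val : ℤ) := Int.natCast_dvd_natCast.mpr h
    have := dvd_add (h1.trans hmd) h2
    simpa using this
  have hz : ((j':ℕ) - (j:ℕ) : ℤ) = 0 := by
    apply Int.eq_zero_of_abs_lt_dvd hqz
    have b1 : ((j':ℕ) : ℤ) < q := by exact_mod_cast j'.2
    have b2 : ((j:ℕ) : ℤ) < q := by exact_mod_cast j.2
    have b3 : 0 ≤ ((j':ℕ) : ℤ) := by positivity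
    have b4 : 0 ≤ ((j:ℕ) : ℤ) := by positivity
    rw [abs_lt]; omega
  have : (j':ℕ) = (j:ℕ) := by omega
  exact (Fin.ext this).symm


lemma sub2_congrK {K K' : AddSubgroup (ZMod (2*n))} (h : K = K') (hK) (j : ZMod (2*n)) :
    sub2 K hK j = sub2 K' (h ▸ hK) j := by subst h; rfl

lemma count_case1 {d : ℕ} (hd : d ∣ 4*n) (h4 : ¬ 4 ∣ d) :
    Nat.card {H : Subgroup (QuaternionGroup n) // Nat.card H = d} = 1 := by
  have hn0 := NeZero.pos n
  have hd0 : d ≠ 0 := by rintro rfl; exact h4 (dvd_zero 4)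
  have hd2 : d ∣ 2*n := by
    obtain ⟨Q, hQ⟩ := hd
    rcases Nat.even_or_odd Q with he | ho
    · obtain ⟨t, ht⟩ := he
      refine ⟨t, ?_⟩
      have : 4*n = 2*(d*t) := by rw [hQ, ht]; ring
      omega
    · exfalso
      have hcop : Nat.Coprime 4 Q := by
        have h2 : Nat.Coprime 2 Q := (Nat.prime_two.coprime_iff_not_dvd).mpr (by
          have := Nat.odd_iff.mp ho; omega)
        have h3 := h2.pow_left 2
        norm_num at h3
        exact h3
      exact h4 (hcop.dvd_of_dvd_mul_right ⟨n, by omega⟩)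
  set K₀ := zmultiples (((2*n/d : ℕ) : ZMod (2*n))) with hK₀
  have hcard0 : Nat.card (sub1 K₀ : Subgroup (QuaternionGroup n)) = d := exists_sub1 hd2 hd0
  rw [Nat.card_eq_one_iff_unique]
  refine ⟨⟨?_⟩, ⟨⟨sub1 K₀, hcard0⟩⟩⟩
  rintro ⟨H, hH⟩ ⟨H', hH'⟩
  have key : ∀ G : Subgroup (QuaternionGroup n), Nat.card G = d → G = sub1 K₀ := by
    intro G hG
    rcases classify G with h1 | ⟨hk, j, h2⟩
    · have hcK : Nat.card (Kof G) = d := by rw [← card_sub1 (Kof G), ← h1, hG]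
      have hKK : Kof G = K₀ := addsubgroup_inj _ _
        (by rw [hcK, ← hcard0, card_sub1])
      rw [h1, hKK]
    · exact absurd (four_dvd_of_sub2 (by rw [← h2]; exact hG)) h4
  exact Subtype.ext ((key H hH).trans (key H' hH').symm)

lemma count_case2 {d : ℕ} (hd : d ∣ 4*n) (h4 : 4 ∣ d) :
    (Odd (4*n/d) →
      Nat.card {H : Subgroup (QuaternionGroup n) // Nat.card H = d} = 4*n/d) ∧
    (Even (4*n/d) →
      Nat.card {H : Subgroup (QuaternionGroup n) // Nat.card H = d} = 4*n/d + 1) := by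
  have hn0 := NeZero.pos n
  have hd0 : d ≠ 0 := by
    rintro rfl
    have := Nat.eq_zero_of_zero_dvd hd
    omega
  set q := 4*n/d with hqdef
  obtain ⟨hcK0, hK0n⟩ := card_K0 hd h4
  obtain ⟨Q, hQ⟩ := hd
  have hqQ : q = Q := by rw [hqdef, hQ]; exact Nat.mul_div_cancel_left _ (Nat.pos_of_ne_zero hd0)
  obtain ⟨s, hs⟩ := h4
  have hnsq : n = s*q := by
    have h4n : 4*n = 4*(s*q) := by rw [hQ, hs, hqQ]; ring
    omega
  have hq0 : q ≠ 0 := by rintro h; rw [h] at hnsq; omega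
  have hqm : q ∣ 2*n := ⟨2*s, by rw [show q*(2*s) = 2*(s*q) by ring]; omega⟩
  set K₀ := zmultiples ((q : ℕ) : ZMod (2*n)) with hK0def
  have hcardsub2 : ∀ j : ZMod (2*n),
      Nat.card (sub2 K₀ hK0n j : Subgroup (QuaternionGroup n)) = d := by
    intro j; rw [card_sub2, hcK0]; omega
  -- surjectivity onto type-2 subgroups
  have hsurj2 : ∀ (H : Subgroup (QuaternionGroup n)), Nat.card H = d →
      (∃ (hk : ((n:ℕ) : ZMod (2*n)) ∈ Kof H) (j : ZMod (2*n)), H = sub2 (Kof H) hk j) →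
      ∃ j0 : Fin q, sub2 K₀ hK0n (((j0:ℕ) : ZMod (2*n))) = H := by
    rintro H hH ⟨hk, j, h2⟩
    have hcK : 2 * Nat.card (Kof H) = d := by rw [← card_sub2 (Kof H) hk j, ← h2, hH]
    have hKeq : Kof H = K₀ := addsubgroup_inj _ _ (by rw [hcK0]; omega)
    have h3 : H = sub2 K₀ (hKeq ▸ hk) j := h2.trans (sub2_congrK hKeq hk j)
    refine ⟨⟨j.val % q, Nat.mod_lt _ (Nat.pos_of_ne_zero hq0)⟩, ?_⟩
    rw [h3]
    rw [sub2_eq_iff]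
    have hj : (j : ZMod (2*n)) - ((j.val % q : ℕ) : ZMod (2*n)) =
        ((j.val - j.val % q : ℕ) : ZMod (2*n)) := by
      rw [Nat.cast_sub (Nat.mod_le _ _), val_natCast_self]
    rw [hj]
    have hsplit : j.val - j.val % q = q * (j.val / q) := by
      have := Nat.div_add_mod j.val q
      omega
    rw [hsplit]
    refine ⟨((j.val / q : ℕ) : ℤ), ?_⟩
    simp only [zsmul_eq_mul, Int.cast_natCast]
    rw [← Nat.cast_mul]
    exact congrArg _ (Nat.mul_comm _ _)
  constructor
  · -- odd case
    intro hodd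
    have hbij : Function.Bijective (fun j : Fin q =>
        (⟨sub2 K₀ hK0n ((j : ℕ) : ZMod (2*n)), hcardsub2 _⟩ :
          {H : Subgroup (QuaternionGroup n) // Nat.card H = d})) := by
      constructor
      · intro j j' hjj
        have h1 : sub2 K₀ hK0n (((j:ℕ)) : ZMod (2*n)) = sub2 K₀ hK0n (((j':ℕ)) : ZMod (2*n)) :=
          congrArg Subtype.val hjj
        exact fin_eq_of_dvd hqm j j' (sub2_eq_iff.mp h1)
      · rintro ⟨H, hH⟩
        rcases classify H with h1 | htype2
        · exfalso
          have hcK : Nat.card (Kof H) = d := by rw [← card_sub1 (Kof H), ← h1, hH]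
          have hdvd : d ∣ 2*n := hcK ▸ (addsubgroup_eq_card (Kof H)).1
          obtain ⟨t, ht⟩ := hdvd
          have e1 : d*(2*t) = 4*n := by rw [show d*(2*t) = 2*(d*t) by ring]; omega
          have e2 : Q = 2*t :=
            Nat.eq_of_mul_eq_mul_left (Nat.pos_of_ne_zero hd0) (hQ.symm.trans e1.symm)
          have := Nat.odd_iff.mp hodd
          omega
        · obtain ⟨j0, hj0⟩ := hsurj2 H hH htype2
          exact ⟨j0, Subtype.ext hj0⟩
    rw [← Nat.card_eq_of_bijective _ hbij, Nat.card_eq_fintype_card, Fintype.card_fin]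
  · -- even case
    intro heven
    obtain ⟨t, ht⟩ := heven
    have hd2 : d ∣ 2*n := by
      refine ⟨t, ?_⟩
      have e1 : 4*n = 2*(d*t) := by
        calc 4*n = d*Q := hQ
        _ = d*(t+t) := by rw [← hqQ, ht]
        _ = 2*(d*t) := by ring
      omega
    set K₁ := zmultiples (((2*n/d : ℕ) : ZMod (2*n))) with hK₁
    have hcard1 : Nat.card (sub1 K₁ : Subgroup (QuaternionGroup n)) = d := exists_sub1 hd2 hd0
    have hbij : Function.Bijective (fun j : Option (Fin q) =>
        (Option.elim j ⟨sub1 K₁, hcard1⟩ (fun j0 =>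
          ⟨sub2 K₀ hK0n ((j0 : ℕ) : ZMod (2*n)), hcardsub2 _⟩) :
          {H : Subgroup (QuaternionGroup n) // Nat.card H = d})) := by
      constructor
      · rintro (_ | j) (_ | j') hjj
        · rfl
        · have h1 : sub1 K₁ = sub2 K₀ hK0n (((j':ℕ)) : ZMod (2*n)) := congrArg Subtype.val hjj
          exact absurd h1 sub1_ne_sub2
        · have h1 : sub1 K₁ = sub2 K₀ hK0n (((j:ℕ)) : ZMod (2*n)) :=
            (congrArg Subtype.val hjj).symm
          exact absurd h1 sub1_ne_sub2
        · have h1 : sub2 K₀ hK0n (((j:ℕ)) : ZMod (2*n)) = sub2 K₀ hK0n (((j':ℕ)) : ZMod (2*n)) :=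
            congrArg Subtype.val hjj
          exact congrArg some (fin_eq_of_dvd hqm j j' (sub2_eq_iff.mp h1))
      · rintro ⟨H, hH⟩
        rcases classify H with h1 | htype2
        · refine ⟨none, Subtype.ext ?_⟩
          have hcK : Nat.card (Kof H) = d := by rw [← card_sub1 (Kof H), ← h1, hH]
          have hKK : Kof H = K₁ := addsubgroup_inj _ _
            (by rw [hcK, ← hcard1, card_sub1])
          show sub1 K₁ = H
          rw [h1, hKK]
        · obtain ⟨j0, hj0⟩ := hsurj2 H hH htype2
          exact ⟨some j0, Subtype.ext hj0⟩
    rw [← Nat.card_eq_of_bijective _ hbij,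
      Nat.card_congr (finSuccEquiv q).symm, Nat.card_eq_fintype_card, Fintype.card_fin]

end count

end QGcount


/-- The number of subgroups of the dicyclic group `Q_{4n}` of order `d` (for `d ∣ 4n`) is:
`1` if `4 ∤ d`; `4n/d` if `4 ∣ d` and `4n/d` is odd; `4n/d + 1` if `4 ∣ d` and `4n/d` is even. -/
theorem quaternionGroup_card_subgroups (n d : ℕ) (hn : 1 ≤ n) (hd : d ∣ 4 * n) :
    (¬ (4 ∣ d) → Nat.card {H : Subgroup (QuaternionGroup n) // Nat.card H = d} = 1) ∧
    (4 ∣ d → Odd (4 * n / d) →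
      Nat.card {H : Subgroup (QuaternionGroup n) // Nat.card H = d} = 4 * n / d) ∧
    (4 ∣ d → Even (4 * n / d) →
      Nat.card {H : Subgroup (QuaternionGroup n) // Nat.card H = d} = 4 * n / d + 1) := by
  have : NeZero n := ⟨by omega⟩
  exact ⟨fun h4 => QGcount.count_case1 hd h4,
    fun h4 => (QGcount.count_case2 hd h4).1,
    fun h4 => (QGcount.count_case2 hd h4).2⟩
end

section
/- Let n ≥ 1 and let d be a divisor of 2n. The number of subgroups of the dihedral group D_{2n} of order d equals: 1 if d is odd; 2n/d if d is even and d does not divide n; and 2n/d + 1 if d is even and d divides n. -/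
open DihedralGroup

section Aux

variable {n : ℕ}

/-- The subgroup of `DihedralGroup n` determined by an additive subgroup `A` of rotation
indices, and optionally a coset `c` determining which reflections are included. -/
def dgSub (A : AddSubgroup (ZMod n)) (c : Option (ZMod n ⧸ A)) :
    Subgroup (DihedralGroup n) where
  carrier := {x | match x with
    | .r i => i ∈ A
    | .sr j => some ((j : ZMod n ⧸ A)) = c}
  one_mem' := A.zero_mem
  inv_mem' := by
    rintro (i | j) h
    · exact A.neg_mem h
    · exact h
  mul_mem' := by
    rintro (i | i) (j | j) hi hj
    · exact A.add_mem hi hj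
    · show some ((↑(j - i) : ZMod n ⧸ A)) = c
      rwa [QuotientAddGroup.mk_sub, (QuotientAddGroup.eq_zero_iff i).2 hi, sub_zero]
    · show some ((↑(i + j) : ZMod n ⧸ A)) = c
      rwa [QuotientAddGroup.mk_add, (QuotientAddGroup.eq_zero_iff j).2 hj, add_zero]
    · show j - i ∈ A
      have h1 : ((i : ZMod n ⧸ A)) = (j : ZMod n ⧸ A) :=
        Option.some_injective _ (hi.trans hj.symm)
      have := (QuotientAddGroup.eq).1 h1
      rwa [neg_add_eq_sub] at this

theorem r_mem_dgSub {A : AddSubgroup (ZMod n)} {c : Option (ZMod n ⧸ A)} {i : ZMod n} :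
    r i ∈ dgSub A c ↔ i ∈ A := Iff.rfl

theorem sr_mem_dgSub {A : AddSubgroup (ZMod n)} {c : Option (ZMod n ⧸ A)} {j : ZMod n} :
    sr j ∈ dgSub A c ↔ some ((j : ZMod n ⧸ A)) = c := Iff.rfl

/-- Every subgroup of the dihedral group is of the form `dgSub A c`. -/
theorem exists_dgSub (H : Subgroup (DihedralGroup n)) :
    ∃ (A : AddSubgroup (ZMod n)) (c : Option (ZMod n ⧸ A)), dgSub A c = H := by
  let A : AddSubgroup (ZMod n) :=
    { carrier := {i | r i ∈ H}
      zero_mem' := by show r 0 ∈ H; exact one_def ▸ H.one_mem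
      add_mem' := fun {a b} ha hb => by
        show r (a + b) ∈ H
        rw [← r_mul_r]; exact H.mul_mem ha hb
      neg_mem' := fun {a} ha => by
        show r (-a) ∈ H
        have : r (-a) = (r a)⁻¹ := by
          apply eq_inv_of_mul_eq_one_left; rw [r_mul_r, neg_add_cancel]; rfl
        rw [this]; exact H.inv_mem ha }
  refine ⟨A, ?_⟩
  by_cases hs : ∃ j, sr j ∈ H
  · obtain ⟨j₀, hj₀⟩ := hs
    refine ⟨some ((j₀ : ZMod n ⧸ A)), ?_⟩
    ext x
    rcases x with i | j
    · exact Iff.rfl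
    · show some ((j : ZMod n ⧸ A)) = some ((j₀ : ZMod n ⧸ A)) ↔ sr j ∈ H
      constructor
      · intro h
        have h1 : ((j : ZMod n ⧸ A)) = (j₀ : ZMod n ⧸ A) := Option.some_injective _ h
        have h2 : -j + j₀ ∈ A := (QuotientAddGroup.eq).1 h1
        have h3 : j - j₀ ∈ A := by
          have := A.neg_mem h2
          rwa [neg_add_rev, neg_neg, neg_add_eq_sub] at this
        have h4 : r (j - j₀) ∈ H := h3
        have h5 : sr j₀ * r (j - j₀) = sr j := by
          rw [sr_mul_r]; congr 1; ring
        rw [← h5]; exact H.mul_mem hj₀ h4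
      · intro h
        have h4 : r (j - j₀) ∈ H := by
          rw [← sr_mul_sr j₀ j]; exact H.mul_mem hj₀ h
        have h3 : j - j₀ ∈ A := h4
        have h2 : -j + j₀ ∈ A := by
          have := A.neg_mem h3
          rwa [neg_sub, sub_eq_neg_add] at this
        exact congrArg some ((QuotientAddGroup.eq).2 h2)
  · refine ⟨none, ?_⟩
    ext x
    rcases x with i | j
    · exact Iff.rfl
    · show some ((j : ZMod n ⧸ A)) = none ↔ sr j ∈ H
      simp only [reduceCtorEq, false_iff]
      exact fun h => hs ⟨j, h⟩

theorem card_dgSub_none (A : AddSubgroup (ZMod n)) :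
    Nat.card (dgSub A (none : Option (ZMod n ⧸ A))) = Nat.card A := by
  symm
  apply Nat.card_eq_of_bijective (fun a : A => (⟨r a, a.2⟩ : dgSub A none))
  constructor
  · intro a b h
    have := congrArg Subtype.val h
    simp only [r.injEq] at this
    exact Subtype.ext this
  · rintro ⟨i | j, h⟩
    · exact ⟨⟨i, h⟩, rfl⟩
    · exact absurd h (Option.some_ne_none _)

theorem card_dgSub_some [NeZero n] (A : AddSubgroup (ZMod n)) (c : ZMod n ⧸ A) :
    Nat.card (dgSub A (some c)) = 2 * Nat.card A := by
  have hout : ((c.out : ZMod n) : ZMod n ⧸ A) = c := QuotientAddGroup.out_eq' c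
  have key : Nat.card ((A : Type) ⊕ (A : Type)) = Nat.card (dgSub A (some c)) := by
    apply Nat.card_eq_of_bijective (Sum.elim
      (fun a : A => (⟨r a, a.2⟩ : dgSub A (some c)))
      (fun a : A => (⟨sr (c.out + a), by
        show some (((c.out + (a : ZMod n) : ZMod n) : ZMod n ⧸ A)) = some c
        rw [QuotientAddGroup.mk_add, (QuotientAddGroup.eq_zero_iff (a : ZMod n)).2 a.2,
          add_zero, hout]⟩ : dgSub A (some c))))
    constructor
    · rintro (a | a) (b | b) h <;> have h' := congrArg Subtype.val h <;>
        simp only [Sum.elim_inl, Sum.elim_inr, r.injEq, sr.injEq, reduceCtorEq] at h'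
      · exact congrArg Sum.inl (Subtype.ext h')
      · exact congrArg Sum.inr (Subtype.ext (by exact add_left_cancel h'))
    · rintro ⟨i | j, h⟩
      · exact ⟨Sum.inl ⟨i, h⟩, rfl⟩
      · have h1 : ((j : ZMod n ⧸ A)) = c := Option.some_injective _ h
        have h2 : -(c.out) + j ∈ A := (QuotientAddGroup.eq).1 (hout.trans h1.symm)
        have h3 : j - c.out ∈ A := by rwa [neg_add_eq_sub] at h2
        refine ⟨Sum.inr ⟨j - c.out, h3⟩, ?_⟩
        simp only [Sum.elim_inr]
        congr 1
        rw [add_sub_cancel]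
  rw [← key, Nat.card_sum, two_mul]

/-- The unique additive subgroup of `ZMod n` of a given cardinality. -/
theorem addSubgroup_zmod_unique [NeZero n] {A B : AddSubgroup (ZMod n)}
    (h : Nat.card A = Nat.card B) : A = B := by
  classical
  set m := Nat.card B with hm
  have hm0 : 0 < m := Nat.card_pos
  have key : ∀ C : AddSubgroup (ZMod n), Nat.card C = m →
      (C : Set (ZMod n)) = {x : ZMod n | m • x = 0} := by
    intro C hC
    apply Set.eq_of_subset_of_ncard_le
    · intro x hx
      show m • x = 0
      have : m • (⟨x, hx⟩ : C) = 0 := by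
        rw [← hC]; exact card_nsmul_eq_zero'
      have := congrArg (Subtype.val) this
      simpa using this
    · have h1 : {x : ZMod n | m • x = 0}.ncard ≤ m := by
        have h2 := IsAddCyclic.card_nsmul_eq_zero_le (α := ZMod n) hm0
        rw [Set.ncard_eq_toFinset_card']
        convert h2 using 2
        ext x
        simp
      have h3 : (C : Set (ZMod n)).ncard = m := by
        rw [← Nat.card_coe_set_eq]
        simpa using hC
      rw [h3]; exact h1
    · exact Set.toFinite _
  have hA := key A (h.trans hm.symm)
  have hB := key B hm.symm
  exact SetLike.coe_injective (hA.trans hB.symm)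

theorem card_zmultiples_zmod [NeZero n] {m : ℕ} (hm : m ∣ n) :
    Nat.card (AddSubgroup.zmultiples ((↑(n / m) : ZMod n))) = m := by
  have hn0 : n ≠ 0 := NeZero.ne n
  have hm0 : m ≠ 0 := by rintro rfl; exact hn0 (Nat.eq_zero_of_zero_dvd hm)
  rw [Nat.card_zmultiples, ZMod.addOrderOf_coe _ hn0,
    Nat.gcd_eq_right (Nat.div_dvd_of_dvd hm), Nat.div_div_self hm hn0]

theorem card_addSubgroup_zmod [NeZero n] (m : ℕ) :
    Nat.card {A : AddSubgroup (ZMod n) // Nat.card A = m} = if m ∣ n then 1 else 0 := by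
  split_ifs with h
  · rw [Nat.card_eq_one_iff_unique]
    constructor
    · constructor
      rintro ⟨A, hA⟩ ⟨B, hB⟩
      exact Subtype.ext (addSubgroup_zmod_unique (hA.trans hB.symm))
    · exact ⟨⟨AddSubgroup.zmultiples ((↑(n / m) : ZMod n)), card_zmultiples_zmod h⟩⟩
  · have : IsEmpty {A : AddSubgroup (ZMod n) // Nat.card A = m} := by
      constructor
      rintro ⟨A, hA⟩
      apply h
      rw [← hA]
      have := AddSubgroup.card_addSubgroup_dvd_card A
      rwa [Nat.card_eq_fintype_card (α := ZMod n), ZMod.card] at this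
    exact Nat.card_of_isEmpty

theorem card_sigma_quot [NeZero n] (e : ℕ) (he : e ∣ n) :
    Nat.card {q : Σ A : AddSubgroup (ZMod n), ZMod n ⧸ A // Nat.card q.1 = e} = n / e := by
  have hn0 : n ≠ 0 := NeZero.ne n
  have he0 : e ≠ 0 := by rintro rfl; exact hn0 (Nat.eq_zero_of_zero_dvd he)
  set A₀ := AddSubgroup.zmultiples ((↑(n / e) : ZMod n)) with hA₀def
  have hA₀ : Nat.card A₀ = e := card_zmultiples_zmod he
  have hquot : Nat.card (ZMod n ⧸ A₀) = n / e := by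
    have h1 := AddSubgroup.card_mul_index A₀
    rw [Nat.card_eq_fintype_card (α := ZMod n), ZMod.card, hA₀] at h1
    have h2 : A₀.index = Nat.card (ZMod n ⧸ A₀) := rfl
    rw [h2] at h1
    have h3 : n = Nat.card (ZMod n ⧸ A₀) * e := h1.symm.trans (Nat.mul_comm e _)
    exact (Nat.div_eq_of_eq_mul_left (Nat.pos_of_ne_zero he0) h3).symm
  rw [← hquot]
  symm
  apply Nat.card_eq_of_bijective
    (fun c : ZMod n ⧸ A₀ => (⟨⟨A₀, c⟩, hA₀⟩ : {q : Σ A : AddSubgroup (ZMod n), ZMod n ⧸ A //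
      Nat.card q.1 = e}))
  constructor
  · intro a b h
    have := congrArg Subtype.val h
    simpa using this
  · rintro ⟨⟨A, c⟩, h⟩
    obtain rfl : A = A₀ := addSubgroup_zmod_unique (h.trans hA₀.symm)
    exact ⟨c, rfl⟩

theorem card_subgroups_eq [NeZero n] (d : ℕ) :
    Nat.card {H : Subgroup (DihedralGroup n) // Nat.card H = d}
      = Nat.card {A : AddSubgroup (ZMod n) // Nat.card A = d}
        + Nat.card {q : Σ A : AddSubgroup (ZMod n), ZMod n ⧸ A // 2 * Nat.card q.1 = d} := by
  rw [← Nat.card_sum]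
  symm
  apply Nat.card_eq_of_bijective (Sum.elim
    (fun A : {A : AddSubgroup (ZMod n) // Nat.card A = d} =>
      (⟨dgSub A.1 none, by rw [card_dgSub_none]; exact A.2⟩ :
        {H : Subgroup (DihedralGroup n) // Nat.card H = d}))
    (fun q : {q : Σ A : AddSubgroup (ZMod n), ZMod n ⧸ A // 2 * Nat.card q.1 = d} =>
      (⟨dgSub q.1.1 (some q.1.2), by rw [card_dgSub_some]; exact q.2⟩ :
        {H : Subgroup (DihedralGroup n) // Nat.card H = d})))
  constructor
  · have memA : ∀ (A B : AddSubgroup (ZMod n)) (c : Option (ZMod n ⧸ A))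
        (c' : Option (ZMod n ⧸ B)), dgSub A c = dgSub B c' → A = B := by
      intro A B c c' h
      ext i
      constructor
      · intro hi
        have : r i ∈ dgSub A c := hi
        rw [h] at this; exact this
      · intro hi
        have : r i ∈ dgSub B c' := hi
        rw [← h] at this; exact this
    rintro (⟨A, hA⟩ | ⟨⟨A, c⟩, hA⟩) (⟨B, hB⟩ | ⟨⟨B, c'⟩, hB⟩) h <;>
      have h' := congrArg Subtype.val h <;> simp only [Sum.elim_inl, Sum.elim_inr] at h'
    · obtain rfl : A = B := memA _ _ _ _ h'
      rfl
    · exfalso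
      have hmem : sr c'.out ∈ dgSub B (some c') := by
        show some ((c'.out : ZMod n ⧸ B)) = some c'
        rw [QuotientAddGroup.out_eq']
      rw [← h'] at hmem
      exact Option.some_ne_none _ hmem
    · exfalso
      have hmem : sr c.out ∈ dgSub A (some c) := by
        show some ((c.out : ZMod n ⧸ A)) = some c
        rw [QuotientAddGroup.out_eq']
      rw [h'] at hmem
      exact Option.some_ne_none _ hmem
    · obtain rfl : A = B := memA _ _ _ _ h'
      have hc : c = c' := by
        have h1 : sr c.out ∈ dgSub A (some c) := by
          show some ((c.out : ZMod n ⧸ A)) = some c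
          rw [QuotientAddGroup.out_eq']
        rw [h'] at h1
        have h2 : some ((c.out : ZMod n ⧸ A)) = some c' := h1
        have h3 := Option.some_injective _ h2
        rwa [QuotientAddGroup.out_eq'] at h3
      subst hc
      rfl
  · rintro ⟨H, hH⟩
    obtain ⟨A, c, hAc⟩ := exists_dgSub H
    rcases c with _ | c
    · refine ⟨Sum.inl ⟨A, ?_⟩, Subtype.ext hAc⟩
      rw [← card_dgSub_none A, hAc, hH]
    · refine ⟨Sum.inr ⟨⟨A, c⟩, ?_⟩, Subtype.ext hAc⟩
      rw [← card_dgSub_some A c, hAc, hH]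

end Aux

/-- The number of subgroups of the dihedral group `D_{2n}` of order `d` (for `d ∣ 2n`) is:
`1` if `d` is odd; `2n/d` if `d` is even and `d ∤ n`; `2n/d + 1` if `d` is even and `d ∣ n`. -/
theorem dihedralGroup_card_subgroups (n d : ℕ) (hn : 1 ≤ n) (hd : d ∣ 2 * n) :
    (Odd d → Nat.card {H : Subgroup (DihedralGroup n) // Nat.card H = d} = 1) ∧
    (Even d → ¬ (d ∣ n) →
      Nat.card {H : Subgroup (DihedralGroup n) // Nat.card H = d} = 2 * n / d) ∧
    (Even d → d ∣ n →
      Nat.card {H : Subgroup (DihedralGroup n) // Nat.card H = d} = 2 * n / d + 1) := by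
  haveI : NeZero n := ⟨by omega⟩
  have hn0 : n ≠ 0 := by omega
  have hd0 : d ≠ 0 := by rintro rfl; have := Nat.eq_zero_of_zero_dvd hd; omega
  rw [card_subgroups_eq d]
  refine ⟨?_, ?_, ?_⟩
  · intro hodd
    have hcop : Nat.Coprime d 2 := Nat.coprime_comm.mp
      ((Nat.Prime.coprime_iff_not_dvd Nat.prime_two).2 (by rw [Nat.odd_iff] at hodd; omega))
    have hdn : d ∣ n := hcop.dvd_of_dvd_mul_left hd
    have hR : IsEmpty {q : Σ A : AddSubgroup (ZMod n), ZMod n ⧸ A // 2 * Nat.card q.1 = d} := by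
      constructor
      rintro ⟨q, hq⟩
      rw [Nat.odd_iff] at hodd
      omega
    rw [card_addSubgroup_zmod, if_pos hdn, Nat.card_of_isEmpty]
  · intro heven hdn
    obtain ⟨e, rfl⟩ : ∃ e, d = 2 * e := by
      obtain ⟨e, he⟩ := heven; exact ⟨e, by omega⟩
    have he : e ∣ n := by
      obtain ⟨k, hk⟩ := hd
      rw [Nat.mul_assoc] at hk
      exact ⟨k, by omega⟩
    have hR : {q : Σ A : AddSubgroup (ZMod n), ZMod n ⧸ A // 2 * Nat.card q.1 = 2 * e}
        = {q : Σ A : AddSubgroup (ZMod n), ZMod n ⧸ A // Nat.card q.1 = e} := by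
      congr 1
      ext q
      omega
    rw [card_addSubgroup_zmod, if_neg hdn, hR, card_sigma_quot e he, Nat.mul_div_mul_left]
    all_goals omega
  · intro heven hdn
    obtain ⟨e, rfl⟩ : ∃ e, d = 2 * e := by
      obtain ⟨e, he⟩ := heven; exact ⟨e, by omega⟩
    have he : e ∣ n := by
      obtain ⟨k, hk⟩ := hd
      rw [Nat.mul_assoc] at hk
      exact ⟨k, by omega⟩
    have hR : {q : Σ A : AddSubgroup (ZMod n), ZMod n ⧸ A // 2 * Nat.card q.1 = 2 * e}
        = {q : Σ A : AddSubgroup (ZMod n), ZMod n ⧸ A // Nat.card q.1 = e} := by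
      congr 1
      ext q
      omega
    rw [card_addSubgroup_zmod, if_pos hdn, hR, card_sigma_quot e he, Nat.mul_div_mul_left,
      Nat.add_comm]
    all_goals omega
end

section
/- Let n > 4. Every nontrivial proper subgroup of the quasidihedral group QD_{2^n} is either cyclic, or isomorphic to a dihedral group D_{2k} for some k ≥ 1, or isomorphic to a generalized quaternion group Q_{2^m} for some m ≥ 3. (Lemma 3.3) -/
open Subgroup

section Recog
variable {G : Type*} [Group G]

private lemma pw_add {g : G} {k : ℕ} [NeZero k] (hg : orderOf g = k)
    (i j : ZMod k) : g ^ (i + j).val = g ^ i.val * g ^ j.val := by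
  subst hg
  rw [ZMod.val_add, pow_mod_orderOf, pow_add]

private lemma pw_sub {g : G} {k : ℕ} [NeZero k] (hg : orderOf g = k)
    (i j : ZMod k) : g ^ (i - j).val = g ^ i.val * (g ^ j.val)⁻¹ := by
  have h := pw_add hg (i - j) j
  rw [sub_add_cancel] at h
  exact eq_mul_inv_of_mul_eq h.symm

private lemma pw_natCast {g : G} {k : ℕ} [NeZero k] (hg : orderOf g = k)
    (a : ℕ) : g ^ ((a : ZMod k)).val = g ^ a := by
  subst hg
  rw [ZMod.val_natCast, pow_mod_orderOf]

private lemma pw_inj {g : G} {k : ℕ} [NeZero k] (hg : orderOf g = k) {i j : ZMod k}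
    (h : g ^ i.val = g ^ j.val) : i = j := by
  have h2 := pow_eq_pow_iff_modEq.mp h
  rw [hg] at h2
  exact ZMod.val_injective k
    (by rwa [Nat.ModEq, Nat.mod_eq_of_lt (ZMod.val_lt i), Nat.mod_eq_of_lt (ZMod.val_lt j)] at h2)

private lemma swap_pow {g t : G} (hconj : t * g * t⁻¹ = g⁻¹) (a : ℕ) :
    g ^ a * t = t * (g ^ a)⁻¹ := by
  have h2 : t * g⁻¹ * t⁻¹ = g := by
    rw [show t * g⁻¹ * t⁻¹ = (t * g * t⁻¹)⁻¹ by group, hconj, inv_inv]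
  have hsw1 : t⁻¹ * g * t = g⁻¹ := by
    calc t⁻¹ * g * t = t⁻¹ * (t * g⁻¹ * t⁻¹) * t := by rw [h2]
      _ = g⁻¹ := by group
  have key : t⁻¹ * g ^ a * t = (g ^ a)⁻¹ := by
    induction a with
    | zero => simp
    | succ a ih =>
        calc t⁻¹ * g ^ (a + 1) * t = (t⁻¹ * g ^ a * t) * (t⁻¹ * g * t) := by
              rw [pow_succ]; group
          _ = (g ^ a)⁻¹ * g⁻¹ := by rw [ih, hsw1]
          _ = (g ^ (a + 1))⁻¹ := by rw [pow_succ', mul_inv_rev]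
  rw [← key]; group

theorem dihedral_recog (g t : G) (k : ℕ) [NeZero k]
    (hg : orderOf g = k) (ht2 : t ^ 2 = 1) (hconj : t * g * t⁻¹ = g⁻¹)
    (ht : t ∉ zpowers g) (hcard : Nat.card G = 2 * k) :
    Nonempty (DihedralGroup k ≃* G) := by
  have hsw := swap_pow hconj
  have hcomm : ∀ a b : ℕ, Commute (g ^ a) ((g ^ b)⁻¹) := fun a b =>
    ((Commute.pow_pow_self g a b).inv_right)
  have cross : ∀ a b : ℕ, g ^ a * (t * g ^ b) = t * (g ^ b * (g ^ a)⁻¹) := by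
    intro a b
    rw [← mul_assoc, hsw, mul_assoc, ← (hcomm b a).eq]
  let f : DihedralGroup k → G := fun x => match x with
    | .r i => g ^ i.val
    | .sr i => t * g ^ i.val
  have hmul : ∀ x y : DihedralGroup k, f (x * y) = f x * f y := by
    rintro (i | i) (j | j)
    · show g ^ (i + j).val = _
      rw [pw_add hg]
    · show t * g ^ (j - i).val = g ^ i.val * (t * g ^ j.val)
      rw [pw_sub hg, cross]
    · show t * g ^ (i + j).val = t * g ^ i.val * g ^ j.val
      rw [pw_add hg, mul_assoc]
    · show g ^ (j - i).val = t * g ^ i.val * (t * g ^ j.val)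
      rw [pw_sub hg]
      calc g ^ j.val * (g ^ i.val)⁻¹
          = t ^ 2 * ((g ^ i.val)⁻¹ * g ^ j.val) := by
            rw [ht2, one_mul, (hcomm j.val i.val).eq]
        _ = t * (t * (g ^ i.val)⁻¹) * g ^ j.val := by rw [pow_two]; group
        _ = t * (g ^ i.val * t) * g ^ j.val := by rw [hsw]
        _ = t * g ^ i.val * (t * g ^ j.val) := by group
  let F : DihedralGroup k →* G := MonoidHom.mk' f hmul
  have hinj : Function.Injective F := by
    rintro (i | i) (j | j) h
    · exact congrArg DihedralGroup.r (pw_inj hg h)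
    · exact absurd (show t ∈ zpowers g by
        have h2 : t = g ^ i.val * (g ^ j.val)⁻¹ := by
          rw [show (g : G) ^ i.val = t * g ^ j.val from h]; group
        rw [h2]; exact mul_mem (pow_mem (mem_zpowers g) _)
          (inv_mem (pow_mem (mem_zpowers g) _))) ht
    · exact absurd (show t ∈ zpowers g by
        have h2 : t = g ^ j.val * (g ^ i.val)⁻¹ := by
          rw [show (g : G) ^ j.val = t * g ^ i.val from h.symm]; group
        rw [h2]; exact mul_mem (pow_mem (mem_zpowers g) _)
          (inv_mem (pow_mem (mem_zpowers g) _))) ht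
    · exact congrArg DihedralGroup.sr (pw_inj hg (mul_left_cancel h))
  have hfin : Finite G := Nat.finite_of_card_ne_zero (by
    rw [hcard]; exact Nat.mul_ne_zero two_ne_zero (NeZero.ne k))
  have hbij : Function.Bijective F := (Nat.bijective_iff_injective_and_card F).mpr
    ⟨hinj, by rw [DihedralGroup.nat_card, hcard]⟩
  exact ⟨MulEquiv.ofBijective F hbij⟩

theorem quaternion_recog (g t : G) (m : ℕ) [NeZero m]
    (hg : orderOf g = 2 * m) (ht2 : t ^ 2 = g ^ m) (hconj : t * g * t⁻¹ = g⁻¹)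
    (ht : t ∉ zpowers g) (hcard : Nat.card G = 4 * m) :
    Nonempty (QuaternionGroup m ≃* G) := by
  haveI : NeZero (2 * m) := ⟨Nat.mul_ne_zero two_ne_zero (NeZero.ne m)⟩
  have hsw := swap_pow hconj
  have hcomm : ∀ a b : ℕ, Commute (g ^ a) ((g ^ b)⁻¹) := fun a b =>
    ((Commute.pow_pow_self g a b).inv_right)
  have cross : ∀ a b : ℕ, g ^ a * (t * g ^ b) = t * (g ^ b * (g ^ a)⁻¹) := by
    intro a b
    rw [← mul_assoc, hsw, mul_assoc, ← (hcomm b a).eq]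
  let f : QuaternionGroup m → G := fun x => match x with
    | .a i => g ^ i.val
    | .xa i => t * g ^ i.val
  have hmul : ∀ x y : QuaternionGroup m, f (x * y) = f x * f y := by
    rintro (i | i) (j | j)
    · show g ^ (i + j).val = _
      rw [pw_add hg]
    · show t * g ^ (j - i).val = g ^ i.val * (t * g ^ j.val)
      rw [pw_sub hg, cross]
    · show t * g ^ (i + j).val = t * g ^ i.val * g ^ j.val
      rw [pw_add hg, mul_assoc]
    · show g ^ ((m : ZMod (2 * m)) + j - i).val = t * g ^ i.val * (t * g ^ j.val)
      rw [pw_sub hg, pw_add hg, pw_natCast hg]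
      calc g ^ m * g ^ j.val * (g ^ i.val)⁻¹
          = t ^ 2 * ((g ^ i.val)⁻¹ * g ^ j.val) := by
            rw [ht2, mul_assoc, (hcomm j.val i.val).eq]
        _ = t * (t * (g ^ i.val)⁻¹) * g ^ j.val := by rw [pow_two]; group
        _ = t * (g ^ i.val * t) * g ^ j.val := by rw [hsw]
        _ = t * g ^ i.val * (t * g ^ j.val) := by group
  let F : QuaternionGroup m →* G := MonoidHom.mk' f hmul
  have hinj : Function.Injective F := by
    rintro (i | i) (j | j) h
    · exact congrArg QuaternionGroup.a (pw_inj hg h)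
    · exact absurd (show t ∈ zpowers g by
        have h2 : t = g ^ i.val * (g ^ j.val)⁻¹ := by
          rw [show (g : G) ^ i.val = t * g ^ j.val from h]; group
        rw [h2]; exact mul_mem (pow_mem (mem_zpowers g) _)
          (inv_mem (pow_mem (mem_zpowers g) _))) ht
    · exact absurd (show t ∈ zpowers g by
        have h2 : t = g ^ j.val * (g ^ i.val)⁻¹ := by
          rw [show (g : G) ^ j.val = t * g ^ i.val from h.symm]; group
        rw [h2]; exact mul_mem (pow_mem (mem_zpowers g) _)
          (inv_mem (pow_mem (mem_zpowers g) _))) ht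
    · exact congrArg QuaternionGroup.xa (pw_inj hg (mul_left_cancel h))
  have hfin : Finite G := Nat.finite_of_card_ne_zero (by
    rw [hcard]; exact Nat.mul_ne_zero (by norm_num) (NeZero.ne m))
  have hbij : Function.Bijective F := (Nat.bijective_iff_injective_and_card F).mpr
    ⟨hinj, by rw [Nat.card_eq_fintype_card, QuaternionGroup.card, hcard]⟩
  exact ⟨MulEquiv.ofBijective F hbij⟩

end Recog

open Subgroup

/-- For `n > 4`, every nontrivial proper subgroup of the quasidihedral group `QD_{2^n}`
(realized as `C_{2^{n-1}} ⋊ C₂` with the generator of `C₂` acting by `x ↦ x^(2^(n-2)-1)`)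
is either cyclic, or isomorphic to a dihedral group `D_{2k}` for some `k ≥ 1`, or isomorphic
to a generalized quaternion group `Q_{2^m}` for some `m ≥ 3`. -/
theorem quasidihedral_subgroup_classification (n : ℕ) (hn : 4 < n)
    (φ : Multiplicative (ZMod 2) →* MulAut (Multiplicative (ZMod (2 ^ (n - 1)))))
    (hφ : ∀ x : Multiplicative (ZMod (2 ^ (n - 1))),
      φ (Multiplicative.ofAdd 1) x = x ^ (2 ^ (n - 2) - 1)) :
    ∀ H : Subgroup (Multiplicative (ZMod (2 ^ (n - 1))) ⋊[φ] Multiplicative (ZMod 2)),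
      H ≠ ⊥ → H ≠ ⊤ →
        IsCyclic H ∨ (∃ k : ℕ, 1 ≤ k ∧ Nonempty (H ≃* DihedralGroup k)) ∨
          (∃ m : ℕ, 3 ≤ m ∧ Nonempty (H ≃* QuaternionGroup (2 ^ (m - 2)))) := by
  intro H hbot htop
  haveI : NeZero (2 ^ (n - 1)) := ⟨pow_ne_zero _ two_ne_zero⟩
  haveI hfinG : Finite (Multiplicative (ZMod (2 ^ (n - 1))) ⋊[φ] Multiplicative (ZMod 2)) :=
    Finite.of_injective (fun p => (p.left, p.right))
      (fun a b h => SemidirectProduct.ext (congrArg Prod.fst h) (congrArg Prod.snd h))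
  set K : Subgroup (Multiplicative (ZMod (2 ^ (n - 1))) ⋊[φ] Multiplicative (ZMod 2)) :=
    (SemidirectProduct.inl (φ := φ)).range with hK
  have hmemK : ∀ x : Multiplicative (ZMod (2 ^ (n - 1))) ⋊[φ] Multiplicative (ZMod 2),
      x ∈ K ↔ x.right = 1 := by
    intro x
    rw [hK, SemidirectProduct.range_inl_eq_ker_rightHom, MonoidHom.mem_ker]
    exact Iff.rfl
  have hcardM : Nat.card (Multiplicative (ZMod (2 ^ (n - 1)))) = 2 ^ (n - 1) := by
    rw [Nat.card_eq_fintype_card, Fintype.card_multiplicative, ZMod.card]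
  have eK := MonoidHom.ofInjective (f := SemidirectProduct.inl (φ := φ))
    SemidirectProduct.inl_injective
  haveI hcycK : IsCyclic K := isCyclic_of_surjective eK.toMonoidHom eK.surjective
  have hcardK : Nat.card K = 2 ^ (n - 1) := by
    rw [← Nat.card_congr eK.toEquiv, hcardM]
  have hcyc_le : ∀ (J : Subgroup (Multiplicative (ZMod (2 ^ (n - 1))) ⋊[φ]
      Multiplicative (ZMod 2))), J ≤ K → IsCyclic J := by
    intro J hle
    haveI : IsCyclic (J.subgroupOf K) := Subgroup.isCyclic _
    exact isCyclic_of_surjective (Subgroup.subgroupOfEquivOfLe hle).toMonoidHom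
      (Subgroup.subgroupOfEquivOfLe hle).surjective
  by_cases hHK : H ≤ K
  · exact Or.inl (hcyc_le H hHK)
  obtain ⟨t, htH, htK⟩ := SetLike.not_le_iff_exists.mp hHK
  have hC2 : ∀ z : Multiplicative (ZMod 2), z ≠ 1 → z = Multiplicative.ofAdd 1 := by decide
  have htr : t.right = Multiplicative.ofAdd 1 :=
    hC2 _ (fun h => htK ((hmemK t).mpr h))
  have hφφ : ∀ (c : Multiplicative (ZMod 2)) (z : Multiplicative (ZMod (2 ^ (n - 1)))),
      φ c (φ c⁻¹ z) = z := by
    intro c z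
    rw [← MulAut.mul_apply, ← map_mul, mul_inv_cancel, map_one, MulAut.one_apply]
  have hconjK : ∀ y : Multiplicative (ZMod (2 ^ (n - 1))),
      t * SemidirectProduct.inl y * t⁻¹ = SemidirectProduct.inl (φ t.right y) := by
    intro y
    ext
    · rw [SemidirectProduct.mul_left, SemidirectProduct.mul_left, SemidirectProduct.inv_left,
        SemidirectProduct.left_inl, SemidirectProduct.mul_right, SemidirectProduct.right_inl,
        mul_one, hφφ, SemidirectProduct.left_inl, mul_comm t.left (φ t.right y), mul_assoc,
        mul_inv_cancel, mul_one]
    · rw [SemidirectProduct.mul_right, SemidirectProduct.mul_right,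
        SemidirectProduct.right_inl, SemidirectProduct.inv_right, SemidirectProduct.right_inl,
        mul_one, mul_inv_cancel]
  have ht2K : t ^ 2 = SemidirectProduct.inl (t.left ^ 2 ^ (n - 2)) := by
    have h21 : (2:ℕ) ^ (n - 2) - 1 + 1 = 2 ^ (n - 2) := by
      have := Nat.one_le_two_pow (n := n - 2); omega
    ext
    · rw [pow_two, SemidirectProduct.mul_left, htr, hφ, SemidirectProduct.left_inl,
        ← pow_succ', h21]
    · rw [pow_two, SemidirectProduct.mul_right, htr, SemidirectProduct.right_inl]
      decide
  have ht4 : (t ^ 2) ^ 2 = 1 := by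
    rw [ht2K, ← map_pow, ← pow_mul]
    have h1 : 2 ^ (n - 2) * 2 = 2 ^ (n - 1) := by
      rw [← pow_succ]; congr 1; omega
    have h2 : t.left ^ (2 ^ (n - 2) * 2) = 1 := by
      rw [h1]
      have hc := pow_card_eq_one' (x := t.left)
      rwa [hcardM] at hc
    rw [h2, map_one]
  set N := H ⊓ K with hN
  haveI hcycN : IsCyclic N := hcyc_le N inf_le_right
  obtain ⟨g₀, hg₀⟩ := hcycN.exists_generator
  set g := (g₀ : Multiplicative (ZMod (2 ^ (n - 1))) ⋊[φ] Multiplicative (ZMod 2)) with hg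
  have hgN : g ∈ N := g₀.2
  have hgord : orderOf g = Nat.card N := by
    rw [show orderOf g = orderOf g₀ from orderOf_injective N.subtype Subtype.coe_injective g₀]
    exact orderOf_eq_card_of_forall_mem_zpowers hg₀
  have hNz : ∀ x ∈ N, x ∈ zpowers g := by
    intro x hx
    obtain ⟨z, hz⟩ := hg₀ ⟨x, hx⟩
    refine ⟨z, ?_⟩
    show g ^ z = x
    have hzz := congrArg (N.subtype) hz
    simpa using hzz
  have hzN : zpowers g ≤ N := by
    rintro x ⟨z, rfl⟩
    exact zpow_mem hgN z
  have hdvd : Nat.card N ∣ 2 ^ (n - 1) := by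
    have hc := Subgroup.card_dvd_of_le (inf_le_right : N ≤ K)
    rwa [hcardK] at hc
  obtain ⟨s, hs_le, hcardN⟩ := (Nat.dvd_prime_pow Nat.prime_two).mp hdvd
  have horder : orderOf g = 2 ^ s := by rw [hgord, hcardN]
  -- s ≤ n - 2
  have hs2 : s ≤ n - 2 := by
    by_contra hcon
    have hsn : s = n - 1 := by omega
    have hNK : N = K := by
      apply Subgroup.eq_of_le_of_card_ge inf_le_right
      rw [hcardK, hcardN, hsn]
    have hKH : K ≤ H := le_trans (le_of_eq hNK.symm) inf_le_left
    apply htop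
    rw [Subgroup.eq_top_iff']
    intro x
    by_cases hx : x.right = 1
    · exact hKH ((hmemK x).mpr hx)
    · have hxr : x.right = Multiplicative.ofAdd 1 := hC2 _ hx
      have hxt : x * t⁻¹ ∈ K := (hmemK _).mpr (by
        rw [SemidirectProduct.mul_right, SemidirectProduct.inv_right, hxr, htr]; decide)
      have hxx : x = (x * t⁻¹) * t := by group
      rw [hxx]
      exact mul_mem (hKH hxt) htH
  have hgK : g ∈ K := (inf_le_right : N ≤ K) hgN
  obtain ⟨y, hy⟩ := hgK
  have hyord : y ^ 2 ^ (n - 2) = 1 := by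
    have h1 : orderOf y = 2 ^ s := by
      rw [← horder, ← hy, orderOf_injective SemidirectProduct.inl
        SemidirectProduct.inl_injective y]
    apply orderOf_dvd_iff_pow_eq_one.mp
    rw [h1]
    exact pow_dvd_pow 2 hs2
  have hconj : t * g * t⁻¹ = g⁻¹ := by
    rw [← hy, hconjK, ← map_inv, htr]
    congr 1
    rw [hφ]
    have h2 : y ^ (2 ^ (n - 2) - 1) * y = 1 := by
      rw [← pow_succ]
      have h21 : (2:ℕ) ^ (n - 2) - 1 + 1 = 2 ^ (n - 2) := by
        have := Nat.one_le_two_pow (n := n - 2); omega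
      rw [h21, hyord]
    exact eq_inv_of_mul_eq_one_left h2
  have htg : t ∉ zpowers g := fun hmem => htK ((inf_le_right : N ≤ K) (hzN hmem))
  -- card H = 2 * 2 ^ s
  have hcardH : Nat.card H = 2 * 2 ^ s := by
    set f : H →* Multiplicative (ZMod 2) :=
      (SemidirectProduct.rightHom).comp H.subtype with hf
    have hfsurj : Function.Surjective f := by
      intro z
      by_cases hz : z = 1
      · exact ⟨1, by rw [map_one, hz]⟩
      · refine ⟨⟨t, htH⟩, ?_⟩
        rw [hC2 z hz]
        exact htr
    have hker : f.ker = N.subgroupOf H := by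
      ext x
      rw [MonoidHom.mem_ker, Subgroup.mem_subgroupOf, hN, Subgroup.mem_inf]
      have hxH : (x : Multiplicative (ZMod (2 ^ (n - 1))) ⋊[φ] Multiplicative (ZMod 2)) ∈ H :=
        x.2
      rw [hmemK]
      exact ⟨fun h => ⟨hxH, h⟩, fun h => h.2⟩
    have h1 : Nat.card H = Nat.card (H ⧸ f.ker) * Nat.card f.ker :=
      Subgroup.card_eq_card_quotient_mul_card_subgroup f.ker
    have h2 : Nat.card (H ⧸ f.ker) = 2 := by
      rw [Nat.card_congr (QuotientGroup.quotientKerEquivOfSurjective f hfsurj).toEquiv,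
        Nat.card_eq_fintype_card, Fintype.card_multiplicative, ZMod.card]
    have h3 : Nat.card f.ker = 2 ^ s := by
      rw [hker, Nat.card_congr (Subgroup.subgroupOfEquivOfLe inf_le_left).toEquiv, hcardN]
    rw [h1, h2, h3]
  have hgH : g ∈ H := (inf_le_left : N ≤ H) hgN
  have hordH : orderOf (⟨g, hgH⟩ : H) = 2 ^ s := by
    rw [← horder]
    exact (orderOf_injective H.subtype Subtype.coe_injective ⟨g, hgH⟩).symm
  have htgH : (⟨t, htH⟩ : H) ∉ zpowers (⟨g, hgH⟩ : H) := by
    intro hmem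
    obtain ⟨z, hz⟩ := Subgroup.mem_zpowers_iff.mp hmem
    apply htg
    refine Subgroup.mem_zpowers_iff.mpr ⟨z, ?_⟩
    have := congrArg (H.subtype) hz
    rwa [map_zpow] at this
  have hconjH : (⟨t, htH⟩ : H) * ⟨g, hgH⟩ * (⟨t, htH⟩ : H)⁻¹ = (⟨g, hgH⟩ : H)⁻¹ :=
    Subtype.ext (by push_cast; exact hconj)
  rcases eq_or_ne (t ^ 2) 1 with ht2 | ht2
  · -- dihedral case
    right; left
    refine ⟨2 ^ s, Nat.one_le_two_pow, ?_⟩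
    haveI : NeZero (2 ^ s) := ⟨pow_ne_zero _ two_ne_zero⟩
    have hrec := dihedral_recog (⟨g, hgH⟩ : H) ⟨t, htH⟩ (2 ^ s) hordH
      (Subtype.ext (by push_cast; exact ht2)) hconjH htgH hcardH
    obtain ⟨e⟩ := hrec
    exact ⟨e.symm⟩
  · -- t ^ 2 ≠ 1
    have ht2N : t ^ 2 ∈ N := Subgroup.mem_inf.mpr ⟨pow_mem htH 2, ⟨_, ht2K.symm⟩⟩
    have hs1 : 1 ≤ s := by
      by_contra h
      have hs0 : s = 0 := by omega
      have hN1 : Nat.card N = 1 := by rw [hcardN, hs0, pow_zero]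
      have hNbot : N = ⊥ := Subgroup.card_eq_one.mp hN1
      exact ht2 (Subgroup.mem_bot.mp (hNbot ▸ ht2N))
    -- t ^ 2 = g ^ 2 ^ (s - 1)
    have hz : t ^ 2 = g ^ 2 ^ (s - 1) := by
      obtain ⟨zi, hzi⟩ := Subgroup.mem_zpowers_iff.mp (hNz _ ht2N)
      have hpos : (0:ℤ) < 2 ^ s := by positivity
      have h0 : (0:ℤ) ≤ zi % 2 ^ s := Int.emod_nonneg _ (ne_of_gt hpos)
      have hlt : zi % 2 ^ s < 2 ^ s := Int.emod_lt_of_pos _ hpos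
      set a : ℕ := (zi % 2 ^ s).toNat with hadef
      have ha : g ^ a = t ^ 2 := by
        rw [← zpow_natCast, hadef, Int.toNat_of_nonneg h0,
          show ((2:ℤ) ^ s) = ((orderOf g : ℕ) : ℤ) by rw [horder]; push_cast; ring,
          zpow_mod_orderOf, hzi]
      have halt : a < 2 ^ s := by
        have h' : (a : ℤ) < 2 ^ s := by rw [hadef, Int.toNat_of_nonneg h0]; exact hlt
        exact_mod_cast h'
      have h2a : g ^ (a * 2) = 1 := by rw [pow_mul, ha, ht4]
      have hdvd2 : 2 ^ s ∣ a * 2 := horder ▸ orderOf_dvd_of_pow_eq_one h2a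
      have hane : a ≠ 0 := by
        intro h0a
        exact ht2 (by rw [← ha, h0a, pow_zero])
      have ha2 : a = 2 ^ (s - 1) := by
        obtain ⟨c, hc⟩ := hdvd2
        have hs' : 2 ^ s = 2 ^ (s - 1) * 2 := by rw [← pow_succ]; congr 1; omega
        rw [hs'] at hc halt
        have hac : a = 2 ^ (s - 1) * c :=
          Nat.eq_of_mul_eq_mul_right two_pos (by rw [hc]; ring)
        have hcne : c ≠ 0 := by rintro rfl; rw [mul_zero] at hac; exact hane hac
        have hclt : c < 2 := by
          rw [hac] at halt
          exact Nat.lt_of_mul_lt_mul_left halt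
        have hc1 : c = 1 := by omega
        rw [hac, hc1, mul_one]
      rw [← ha, ha2]
    rcases eq_or_lt_of_le hs1 with hseq | hs2'
    · -- s = 1 : cyclic of order 4
      left
      have hcard4 : Nat.card H = 4 := by rw [hcardH, ← hseq]; norm_num
      haveI : Fact (Nat.Prime 2) := ⟨Nat.prime_two⟩
      have hne : ¬ (⟨t, htH⟩ : H) ^ 2 ^ 1 = 1 := by
        intro h
        apply ht2
        have := congrArg H.subtype h
        rwa [map_pow, map_one, pow_one] at this
      have ht4' : t ^ (2 ^ 2) = 1 := by
        rw [show (2:ℕ) ^ 2 = 2 * 2 from rfl, pow_mul]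
        exact ht4
      have hyes : (⟨t, htH⟩ : H) ^ 2 ^ 2 = 1 := by
        apply Subtype.ext
        push_cast
        exact ht4'
      have htord : orderOf (⟨t, htH⟩ : H) = 4 := by
        have := orderOf_eq_prime_pow (x := (⟨t, htH⟩ : H)) (p := 2) (n := 1)
          (by simpa using hne) (by simpa using hyes)
        simpa using this
      exact isCyclic_of_orderOf_eq_card _ (by rw [htord, hcard4])
    · -- s ≥ 2 : quaternion
      right; right
      refine ⟨s + 1, by omega, ?_⟩
      have hm : (s + 1) - 2 = s - 1 := by omega
      rw [hm]
      haveI : NeZero (2 ^ (s - 1)) := ⟨pow_ne_zero _ two_ne_zero⟩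
      have h2s : 2 * 2 ^ (s - 1) = 2 ^ s := by rw [← pow_succ']; congr 1; omega
      have hrec := quaternion_recog (⟨g, hgH⟩ : H) ⟨t, htH⟩ (2 ^ (s - 1))
        (by rw [h2s]; exact hordH)
        (Subtype.ext (by push_cast; exact hz)) hconjH htgH
        (by rw [hcardH, ← h2s]; ring)
      obtain ⟨e⟩ := hrec
      exact ⟨e.symm⟩
end

section
/- Let n > 4. The quasidihedral group QD_{2^n} has exactly three subgroups of index 2, namely ⟨a⟩, which is cyclic of order 2^{n-1}; ⟨a^2, b⟩, which is isomorphic to the dihedral group of order 2^{n-1}; and ⟨a^2, ab⟩, which is isomorphic to the generalized quaternion group of order 2^{n-1}. -/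
/-!
An index-two subgroup contains every square, hence `a²`, and it contains `a`, `b` or `ab`,
since the product of two elements outside it lies inside. Comparing indices, it is `⟨a⟩`,
`⟨a², b⟩` or `⟨a², ab⟩`. Conjugation by `b` and by `ab` inverts `a²`, while `b² = 1` and
`(ab)² = (a²)^(2^(n-3))`: these are the defining relations of the dihedral and of the
generalized quaternion group with rotation `a²`, and the resulting homomorphisms are injective
because `b, ab ∉ ⟨a⟩`. So the last two subgroups have order `2^(n-1)`, i.e. index two.
-/

open Subgroup

section ZModPow

variable {G : Type*} [Group G] {n : ℕ} [NeZero n] {x y : G}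

theorem pow_zmod_val_add (hx : x ^ n = 1) (i j : ZMod n) :
    x ^ (i + j).val = x ^ i.val * x ^ j.val := by
  rw [ZMod.val_add, ← pow_mod_orderOf, Nat.mod_mod_of_dvd _ (orderOf_dvd_of_pow_eq_one hx),
    pow_mod_orderOf, pow_add]

omit [NeZero n] in
theorem pow_zmod_val_natCast (hx : x ^ n = 1) (k : ℕ) : x ^ (k : ZMod n).val = x ^ k := by
  rw [ZMod.val_natCast, ← pow_mod_orderOf, Nat.mod_mod_of_dvd _ (orderOf_dvd_of_pow_eq_one hx),
    pow_mod_orderOf]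

theorem pow_zmod_val_neg (hx : x ^ n = 1) (i : ZMod n) : x ^ (-i).val = (x ^ i.val)⁻¹ :=
  eq_inv_of_mul_eq_one_left <| by
    rw [← pow_zmod_val_add hx, neg_add_cancel, ZMod.val_zero, pow_zero]

theorem mul_pow_zmod_val_of_conj_eq_inv (hx : x ^ n = 1) (hconj : y * x * y⁻¹ = x⁻¹)
    (i : ZMod n) : y * x ^ i.val = x ^ (-i).val * y := by
  rw [pow_zmod_val_neg hx, ← inv_pow, ← hconj, conj_pow, inv_mul_cancel_right]

theorem pow_zmod_val_mul_of_conj_eq_inv (hx : x ^ n = 1) (hconj : y * x * y⁻¹ = x⁻¹)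
    (i : ZMod n) : x ^ i.val * y = y * x ^ (-i).val := by
  rw [mul_pow_zmod_val_of_conj_eq_inv hx hconj, neg_neg]

theorem pow_zmod_val_eq_one_iff (hx : orderOf x = n) {i : ZMod n} : x ^ i.val = 1 ↔ i = 0 := by
  rw [← orderOf_dvd_iff_pow_eq_one, hx, ← ZMod.natCast_eq_zero_iff, ZMod.natCast_zmod_val]

end ZModPow

theorem pow_mem_closure_pair {G : Type*} [Group G] (x y : G) (k : ℕ) : x ^ k ∈ closure {x, y} :=
  pow_mem (subset_closure (Set.mem_insert x _)) k

theorem mul_pow_mem_closure_pair {G : Type*} [Group G] (x y : G) (k : ℕ) :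
    y * x ^ k ∈ closure {x, y} :=
  mul_mem (subset_closure (Set.mem_insert_of_mem x rfl)) (pow_mem_closure_pair x y k)

namespace DihedralGroup

variable {G : Type*} [Group G] {n : ℕ} [NeZero n] {x y : G}

def lift (hx : x ^ n = 1) (hy : y * y = 1) (hconj : y * x * y⁻¹ = x⁻¹) :
    DihedralGroup n →* G :=
  MonoidHom.mk' (fun | r i => x ^ i.val | sr i => y * x ^ i.val) <| by
    have hx' := pow_zmod_val_mul_of_conj_eq_inv hx hconj
    rintro (i | i) (j | j)
    · exact pow_zmod_val_add hx i j
    · show y * x ^ (j - i).val = x ^ i.val * (y * x ^ j.val)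
      rw [← mul_assoc, hx', mul_assoc, ← pow_zmod_val_add hx, neg_add_eq_sub]
    · show y * x ^ (i + j).val = y * x ^ i.val * x ^ j.val
      rw [mul_assoc, pow_zmod_val_add hx]
    · show x ^ (j - i).val = y * x ^ i.val * (y * x ^ j.val)
      rw [mul_assoc, ← mul_assoc (x ^ i.val), hx', ← mul_assoc, ← mul_assoc, hy, one_mul,
        ← pow_zmod_val_add hx, neg_add_eq_sub]

@[simp]
theorem lift_r (hx : x ^ n = 1) (hy : y * y = 1) (hconj : y * x * y⁻¹ = x⁻¹) (i : ZMod n) :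
    lift hx hy hconj (r i) = x ^ i.val := rfl

@[simp]
theorem lift_sr (hx : x ^ n = 1) (hy : y * y = 1) (hconj : y * x * y⁻¹ = x⁻¹) (i : ZMod n) :
    lift hx hy hconj (sr i) = y * x ^ i.val := rfl

theorem lift_injective (hx : orderOf x = n) (hy : y * y = 1) (hconj : y * x * y⁻¹ = x⁻¹)
    (hy_notMem : y ∉ zpowers x) :
    Function.Injective (lift (hx ▸ pow_orderOf_eq_one x) hy hconj) := by
  rw [injective_iff_map_eq_one]
  rintro (i | i) h
  · rw [one_def, (pow_zmod_val_eq_one_iff hx).mp h]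
  · refine absurd ?_ hy_notMem
    rw [eq_inv_of_mul_eq_one_left h]
    exact inv_mem (npow_mem_zpowers x _)

theorem range_lift (hx : x ^ n = 1) (hy : y * y = 1) (hconj : y * x * y⁻¹ = x⁻¹) :
    (lift hx hy hconj).range = closure {x, y} := by
  refine le_antisymm ?_ ((closure_le _).mpr ?_)
  · rintro _ ⟨i | i, rfl⟩
    exacts [pow_mem_closure_pair x y _, mul_pow_mem_closure_pair x y _]
  · rintro _ (rfl | rfl)
    · exact ⟨r 1, by simpa using pow_zmod_val_natCast hx 1⟩
    · exact ⟨sr 0, by simp⟩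

noncomputable def mulEquivClosure (hx : orderOf x = n) (hy : y * y = 1)
    (hconj : y * x * y⁻¹ = x⁻¹) (hy_notMem : y ∉ zpowers x) :
    DihedralGroup n ≃* closure {x, y} :=
  (MonoidHom.ofInjective (lift_injective hx hy hconj hy_notMem)).trans
    (MulEquiv.subgroupCongr (range_lift _ hy hconj))

end DihedralGroup

namespace QuaternionGroup

variable {G : Type*} [Group G] {n : ℕ} [NeZero n] {x y : G}

def lift (hx : x ^ (2 * n) = 1) (hy : y * y = x ^ n) (hconj : y * x * y⁻¹ = x⁻¹) :
    QuaternionGroup n →* G :=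
  MonoidHom.mk' (fun | a i => x ^ i.val | xa i => y * x ^ i.val) <| by
    have hx' := pow_zmod_val_mul_of_conj_eq_inv hx hconj
    rintro (i | i) (j | j)
    · exact pow_zmod_val_add hx i j
    · show y * x ^ (j - i).val = x ^ i.val * (y * x ^ j.val)
      rw [← mul_assoc, hx', mul_assoc, ← pow_zmod_val_add hx, neg_add_eq_sub]
    · show y * x ^ (i + j).val = y * x ^ i.val * x ^ j.val
      rw [mul_assoc, pow_zmod_val_add hx]
    · show x ^ ((n : ZMod (2 * n)) + j - i).val = y * x ^ i.val * (y * x ^ j.val)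
      rw [mul_assoc, ← mul_assoc (x ^ i.val), hx', ← mul_assoc, ← mul_assoc, hy,
        add_sub_assoc, ← neg_add_eq_sub, mul_assoc, pow_zmod_val_add hx, pow_zmod_val_add hx,
        pow_zmod_val_natCast hx]

@[simp]
theorem lift_a (hx : x ^ (2 * n) = 1) (hy : y * y = x ^ n) (hconj : y * x * y⁻¹ = x⁻¹)
    (i : ZMod (2 * n)) : lift hx hy hconj (a i) = x ^ i.val := rfl

@[simp]
theorem lift_xa (hx : x ^ (2 * n) = 1) (hy : y * y = x ^ n) (hconj : y * x * y⁻¹ = x⁻¹)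
    (i : ZMod (2 * n)) : lift hx hy hconj (xa i) = y * x ^ i.val := rfl

theorem lift_injective (hx : orderOf x = 2 * n) (hy : y * y = x ^ n)
    (hconj : y * x * y⁻¹ = x⁻¹) (hy_notMem : y ∉ zpowers x) :
    Function.Injective (lift (hx ▸ pow_orderOf_eq_one x) hy hconj) := by
  rw [injective_iff_map_eq_one]
  rintro (i | i) h
  · rw [one_def, (pow_zmod_val_eq_one_iff hx).mp h]
  · refine absurd ?_ hy_notMem
    rw [eq_inv_of_mul_eq_one_left h]
    exact inv_mem (npow_mem_zpowers x _)

theorem range_lift (hx : x ^ (2 * n) = 1) (hy : y * y = x ^ n) (hconj : y * x * y⁻¹ = x⁻¹) :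
    (lift hx hy hconj).range = closure {x, y} := by
  refine le_antisymm ?_ ((closure_le _).mpr ?_)
  · rintro _ ⟨i | i, rfl⟩
    exacts [pow_mem_closure_pair x y _, mul_pow_mem_closure_pair x y _]
  · rintro _ (rfl | rfl)
    · exact ⟨a 1, by simpa using pow_zmod_val_natCast hx 1⟩
    · exact ⟨xa 0, by simp⟩

noncomputable def mulEquivClosure (hx : orderOf x = 2 * n) (hy : y * y = x ^ n)
    (hconj : y * x * y⁻¹ = x⁻¹) (hy_notMem : y ∉ zpowers x) :
    QuaternionGroup n ≃* closure {x, y} :=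
  (MonoidHom.ofInjective (lift_injective hx hy hconj hy_notMem)).trans
    (MulEquiv.subgroupCongr (range_lift _ hy hconj))

end QuaternionGroup

namespace Subgroup

variable {G : Type*} [Group G]

theorem eq_of_le_of_index_eq_two {H K : Subgroup G} (hle : H ≤ K) (hH : H.index = 2)
    (hK : K.index = 2) : H = K := by
  have h := relIndex_mul_index hle
  rw [hH, hK] at h
  exact le_antisymm hle (relIndex_eq_one.mp (by omega))

theorem index_eq_two_of_card_eq (H : Subgroup G) (h : Nat.card G = 2 * Nat.card H)
    (hG : Nat.card G ≠ 0) : H.index = 2 := by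
  have hH : 0 < Nat.card H := Nat.pos_of_ne_zero fun h0 => hG (by rw [h, h0])
  exact Nat.eq_of_mul_eq_mul_left hH (by rw [card_mul_index, h, mul_comm])

variable {a b : G}

theorem eq_zpowers_or_eq_closure_of_index_eq_two (h₁ : (zpowers a).index = 2)
    (h₂ : (closure {a ^ 2, b}).index = 2) (h₃ : (closure {a ^ 2, a * b}).index = 2)
    {H : Subgroup G} (hH : H.index = 2) :
    H = zpowers a ∨ H = closure {a ^ 2, b} ∨ H = closure {a ^ 2, a * b} := by
  have ha2 : a ^ 2 ∈ H := sq_mem_of_index_two hH a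
  have closure_le_of_mem {c : G} (hc : c ∈ H) : closure {a ^ 2, c} ≤ H :=
    (closure_le _).mpr (Set.insert_subset ha2 (Set.singleton_subset_iff.mpr hc))
  by_cases ha : a ∈ H
  · exact .inl (eq_of_le_of_index_eq_two (zpowers_le.mpr ha) h₁ hH).symm
  by_cases hb : b ∈ H
  · exact .inr <| .inl (eq_of_le_of_index_eq_two (closure_le_of_mem hb) h₂ hH).symm
  have hab : a * b ∈ H := (mul_mem_iff_of_index_two hH).mpr (iff_of_false ha hb)
  exact .inr <| .inr (eq_of_le_of_index_eq_two (closure_le_of_mem hab) h₃ hH).symm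

theorem zpowers_ne_closure_sq (hb : b ∉ zpowers a) : zpowers a ≠ closure {a ^ 2, b} :=
  fun h => hb (h ▸ subset_closure (Set.mem_insert_of_mem _ rfl))

theorem zpowers_ne_closure_sq_mul (hb : b ∉ zpowers a) :
    zpowers a ≠ closure {a ^ 2, a * b} := fun h =>
  hb ((mul_mem_cancel_left (mem_zpowers a)).mp (h ▸ subset_closure (Set.mem_insert_of_mem _ rfl)))

theorem closure_sq_ne_closure_sq_mul (h₁ : (zpowers a).index = 2)
    (h₂ : (closure {a ^ 2, b}).index = 2) (hb : b ∉ zpowers a) :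
    closure {a ^ 2, b} ≠ closure {a ^ 2, a * b} := by
  intro h
  have hbK : b ∈ closure {a ^ 2, b} := subset_closure (Set.mem_insert_of_mem _ rfl)
  have haK : a ∈ closure {a ^ 2, b} := by
    refine (mul_mem_cancel_right hbK).mp ?_
    exact h ▸ subset_closure (Set.mem_insert_of_mem _ rfl)
  exact zpowers_ne_closure_sq hb (eq_of_le_of_index_eq_two (zpowers_le.mpr haK) h₁ h₂)

end Subgroup

section Quasidihedral

variable {G : Type*} [Group G] {a b : G} {k : ℕ}

theorem orderOf_sq_of_orderOf_eq_four_mul (ha : orderOf a = 4 * k) : orderOf (a ^ 2) = 2 * k := by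
  rw [orderOf_pow_of_dvd two_ne_zero (ha ▸ Dvd.intro (2 * k) (by ring)), ha]
  omega

theorem conj_sq_eq_inv (hk : 0 < k) (ha : orderOf a = 4 * k)
    (hba : b * a * b⁻¹ = a ^ (2 * k - 1)) : b * a ^ 2 * b⁻¹ = (a ^ 2)⁻¹ := by
  rw [← conj_pow, hba, ← pow_mul]
  refine eq_inv_of_mul_eq_one_left ?_
  rw [← pow_add, show (2 * k - 1) * 2 + 2 = 4 * k by omega, ← ha, pow_orderOf_eq_one]

theorem mul_conj_sq_eq_inv (hk : 0 < k) (ha : orderOf a = 4 * k)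
    (hba : b * a * b⁻¹ = a ^ (2 * k - 1)) : a * b * a ^ 2 * (a * b)⁻¹ = (a ^ 2)⁻¹ := by
  calc a * b * a ^ 2 * (a * b)⁻¹ = a * (b * a ^ 2 * b⁻¹) * a⁻¹ := by group
    _ = (a ^ 2)⁻¹ := by rw [conj_sq_eq_inv hk ha hba]; group

theorem mul_mul_self_eq_sq_pow (hk : 0 < k) (hb : b * b = 1)
    (hba : b * a * b⁻¹ = a ^ (2 * k - 1)) : a * b * (a * b) = (a ^ 2) ^ k := by
  calc a * b * (a * b) = a * (b * a * b⁻¹) * (b * b) := by group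
    _ = (a ^ 2) ^ k := by
      rw [hba, hb, mul_one, ← pow_succ', ← pow_mul]
      congr 1
      omega

theorem index_two_subgroups_of_quasidihedral (hk : 0 < k) (ha : orderOf a = 4 * k)
    (hb : b * b = 1) (hba : b * a * b⁻¹ = a ^ (2 * k - 1)) (hb_notMem : b ∉ zpowers a)
    (hG : Nat.card G = 8 * k) :
    (∀ H : Subgroup G, H.index = 2 ↔
        H = zpowers a ∨ H = closure {a ^ 2, b} ∨ H = closure {a ^ 2, a * b}) ∧
    zpowers a ≠ closure {a ^ 2, b} ∧ zpowers a ≠ closure {a ^ 2, a * b} ∧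
    closure {a ^ 2, b} ≠ closure {a ^ 2, a * b} ∧
    IsCyclic (zpowers a) ∧ Nat.card (zpowers a) = 4 * k ∧
    Nonempty (closure {a ^ 2, b} ≃* DihedralGroup (2 * k)) ∧
    Nonempty (closure {a ^ 2, a * b} ≃* QuaternionGroup k) := by
  have : NeZero k := ⟨hk.ne'⟩
  have ha2 := orderOf_sq_of_orderOf_eq_four_mul ha
  have hzpowers : zpowers (a ^ 2) ≤ zpowers a := zpowers_le.mpr (npow_mem_zpowers a 2)
  have hab_notMem : a * b ∉ zpowers a := fun h =>
    hb_notMem ((mul_mem_cancel_left (mem_zpowers a)).mp h)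
  let eD := DihedralGroup.mulEquivClosure ha2 hb (conj_sq_eq_inv hk ha hba)
    fun h => hb_notMem (hzpowers h)
  let eQ := QuaternionGroup.mulEquivClosure ha2 (mul_mul_self_eq_sq_pow hk hb hba)
    (mul_conj_sq_eq_inv hk ha hba) fun h => hab_notMem (hzpowers h)
  have hcard : Nat.card (zpowers a) = 4 * k := by rw [Nat.card_zpowers, ha]
  have h₁ : (zpowers a).index = 2 := index_eq_two_of_card_eq _ (by omega) (by omega)
  have h₂ : (closure {a ^ 2, b}).index = 2 := by
    refine index_eq_two_of_card_eq _ ?_ (by omega)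
    rw [← Nat.card_congr eD.toEquiv, DihedralGroup.nat_card, hG]
    ring
  have h₃ : (closure {a ^ 2, a * b}).index = 2 := by
    refine index_eq_two_of_card_eq _ ?_ (by omega)
    rw [← Nat.card_congr eQ.toEquiv, Nat.card_eq_fintype_card (α := QuaternionGroup k),
      QuaternionGroup.card, hG]
    ring
  refine ⟨fun H => ⟨eq_zpowers_or_eq_closure_of_index_eq_two h₁ h₂ h₃, ?_⟩,
    zpowers_ne_closure_sq hb_notMem, zpowers_ne_closure_sq_mul hb_notMem,
    closure_sq_ne_closure_sq_mul h₁ h₂ hb_notMem, inferInstance, hcard, ⟨eD.symm⟩,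
    ⟨eQ.symm⟩⟩
  rintro (rfl | rfl | rfl) <;> assumption

end Quasidihedral

theorem SemidirectProduct.notMem_zpowers_inl {N H : Type*} [Group N] [Group H]
    {φ : H →* MulAut N} {g : N ⋊[φ] H} (hg : rightHom g ≠ 1) (x : N) :
    g ∉ zpowers (inl x) :=
  fun h => hg ((zpowers_le (H := rightHom.ker)).mpr (rightHom_inl x) h)

/-- For `n > 4`, the quasidihedral group `QD_{2^n}` has exactly three subgroups of index 2:
`⟨a⟩`, cyclic of order `2^(n-1)`; `⟨a², b⟩ ≅ D_{2^{n-1}}` (dihedral of order `2^(n-1)`); and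
`⟨a², ab⟩ ≅ Q_{2^{n-1}}` (generalized quaternion of order `2^(n-1)`). -/
theorem quasidihedral_index_two_subgroups (n : ℕ) (hn : 4 < n)
    (φ : Multiplicative (ZMod 2) →* MulAut (Multiplicative (ZMod (2 ^ (n - 1)))))
    (hφ : ∀ x : Multiplicative (ZMod (2 ^ (n - 1))),
      φ (Multiplicative.ofAdd 1) x = x ^ (2 ^ (n - 2) - 1))
    (a b : Multiplicative (ZMod (2 ^ (n - 1))) ⋊[φ] Multiplicative (ZMod 2))
    (ha : a = SemidirectProduct.inl (Multiplicative.ofAdd (1 : ZMod (2 ^ (n - 1)))))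
    (hb : b = SemidirectProduct.inr (Multiplicative.ofAdd (1 : ZMod 2))) :
    (∀ H : Subgroup (Multiplicative (ZMod (2 ^ (n - 1))) ⋊[φ] Multiplicative (ZMod 2)),
        H.index = 2 ↔
          H = Subgroup.zpowers a ∨ H = Subgroup.closure {a ^ 2, b} ∨
            H = Subgroup.closure {a ^ 2, a * b}) ∧
    Subgroup.zpowers a ≠ Subgroup.closure {a ^ 2, b} ∧
    Subgroup.zpowers a ≠ Subgroup.closure {a ^ 2, a * b} ∧
    Subgroup.closure {a ^ 2, b} ≠ Subgroup.closure {a ^ 2, a * b} ∧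
    IsCyclic (Subgroup.zpowers a) ∧ Nat.card (Subgroup.zpowers a) = 2 ^ (n - 1) ∧
    Nonempty (Subgroup.closure {a ^ 2, b} ≃* DihedralGroup (2 ^ (n - 2))) ∧
    Nonempty (Subgroup.closure {a ^ 2, a * b} ≃* QuaternionGroup (2 ^ (n - 3))) := by
  have h4 : 2 ^ (n - 1) = 4 * 2 ^ (n - 3) := by
    rw [show n - 1 = n - 3 + 2 by omega, pow_add]; ring
  have h2 : 2 ^ (n - 2) = 2 * 2 ^ (n - 3) := by
    rw [show n - 2 = n - 3 + 1 by omega, pow_succ]; ring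
  have hb_notMem : b ∉ zpowers a := by
    rw [ha]
    exact SemidirectProduct.notMem_zpowers_inl
      (by rw [hb, SemidirectProduct.rightHom_inr]; decide) _
  have horder : orderOf a = 4 * 2 ^ (n - 3) := by
    rw [ha, orderOf_injective _ SemidirectProduct.inl_injective, orderOf_ofAdd_eq_addOrderOf,
      ZMod.addOrderOf_one, h4]
  have hsq : b * b = 1 := by rw [hb, ← map_mul]; exact map_one _
  have hconj : b * a * b⁻¹ = a ^ (2 * 2 ^ (n - 3) - 1) := by
    rw [ha, hb, ← map_inv, ← SemidirectProduct.inl_aut, hφ, map_pow, h2]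
  have hcard : Nat.card (Multiplicative (ZMod (2 ^ (n - 1))) ⋊[φ] Multiplicative (ZMod 2))
      = 8 * 2 ^ (n - 3) := by
    simp only [SemidirectProduct.card, Nat.card_eq_fintype_card, Fintype.card_multiplicative,
      ZMod.card, h4]
    ring
  have h := index_two_subgroups_of_quasidihedral (by positivity) horder hsq hconj hb_notMem hcard
  rwa [← h4, ← h2] at h
end

section
/- Let n > 4. Every abelian normal subgroup of the quasidihedral group QD_{2^n} is contained in the cyclic subgroup ⟨a⟩ (and hence is cyclic); more precisely, an abelian normal subgroup of order 2^m equals the cyclic subgroup generated by a^{2^{n-m-1}}. -/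
/-- For `n > 4`, every abelian normal subgroup of the quasidihedral group `QD_{2^n}` is
contained in the cyclic subgroup `⟨a⟩` (hence is cyclic); more precisely, an abelian normal
subgroup of order `2^m` equals the cyclic subgroup generated by `a^(2^(n-m-1))`. -/
theorem quasidihedral_abelian_normal_subgroup (n : ℕ) (hn : 4 < n)
    (φ : Multiplicative (ZMod 2) →* MulAut (Multiplicative (ZMod (2 ^ (n - 1)))))
    (hφ : ∀ x : Multiplicative (ZMod (2 ^ (n - 1))),
      φ (Multiplicative.ofAdd 1) x = x ^ (2 ^ (n - 2) - 1))
    (a : Multiplicative (ZMod (2 ^ (n - 1))) ⋊[φ] Multiplicative (ZMod 2))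
    (ha : a = SemidirectProduct.inl (Multiplicative.ofAdd (1 : ZMod (2 ^ (n - 1))))) :
    ∀ H : Subgroup (Multiplicative (ZMod (2 ^ (n - 1))) ⋊[φ] Multiplicative (ZMod 2)),
      H.Normal → (∀ x y : H, x * y = y * x) →
        H ≤ Subgroup.zpowers a ∧ IsCyclic H ∧
          ∀ m : ℕ, Nat.card H = 2 ^ m → H = Subgroup.zpowers (a ^ (2 ^ (n - m - 1))) := by
  intro H hN hcomm
  haveI : NeZero (2 ^ (n - 1)) := ⟨by positivity⟩
  have hright : ∀ g ∈ H, SemidirectProduct.right g = 1 := by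
      intro g hg
      by_contra hgr
      have hc : g.right = Multiplicative.ofAdd (1 : ZMod 2) := by
        revert hgr
        have : ∀ x : Multiplicative (ZMod 2), x ≠ 1 → x = Multiplicative.ofAdd 1 := by decide
        exact this g.right
      have hcinv : (Multiplicative.ofAdd (1 : ZMod 2))⁻¹ = Multiplicative.ofAdd 1 := by decide
      have hbb : (Multiplicative.ofAdd (1 : ZMod 2)) * Multiplicative.ofAdd 1 = 1 := by decide
      have hφφ : ∀ y : Multiplicative (ZMod (2 ^ (n - 1))),
          φ (Multiplicative.ofAdd 1) (φ (Multiplicative.ofAdd 1) y) = y := by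
        intro y
        rw [← MulAut.mul_apply, ← map_mul, hbb, map_one, MulAut.one_apply]
      set h := a * g * a⁻¹ * g⁻¹ with hh_def
      have hh : h ∈ H := H.mul_mem (hN.conj_mem g hg a) (H.inv_mem hg)
      have hghG : g * h = h * g := congrArg Subtype.val (hcomm ⟨g, hg⟩ ⟨h, hh⟩)
      have hhr : h.right = 1 := by
        simp [hh_def, ha, hc, hcinv, hbb]
      have hhl : h.left = Multiplicative.ofAdd (1 : ZMod (2 ^ (n - 1))) *
          ((φ (Multiplicative.ofAdd 1)) (Multiplicative.ofAdd (1 : ZMod (2 ^ (n - 1)))))⁻¹ := by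
        simp only [hh_def, SemidirectProduct.mul_left, SemidirectProduct.mul_right,
          SemidirectProduct.inv_left, SemidirectProduct.inv_right, ha,
          SemidirectProduct.left_inl, SemidirectProduct.right_inl, hc, hcinv, inv_one,
          map_one, MulAut.one_apply, map_inv, hφφ, one_mul, mul_one, inv_inv]
        simp [mul_comm, mul_left_comm, mul_assoc]
      -- commutation gives φ-invariance
      have h2 : g.left * (φ (Multiplicative.ofAdd 1)) h.left = h.left * g.left := by
        have := congrArg SemidirectProduct.left hghG
        simpa [hc, hhr] using this
      have h3 : (φ (Multiplicative.ofAdd 1)) h.left = h.left := by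
        rw [mul_comm h.left] at h2
        exact mul_left_cancel h2
      have heq : h.left ^ (2 ^ (n - 2) - 1) = h.left := by rw [← hφ]; exact h3
      have hhl' : h.left = Multiplicative.ofAdd (1 : ZMod (2 ^ (n - 1))) *
          ((Multiplicative.ofAdd (1 : ZMod (2 ^ (n - 1)))) ^ (2 ^ (n - 2) - 1))⁻¹ := by
        rw [hhl, hφ]
      set r : ℕ := 2 ^ (n - 2) - 1 with hr_def
      set t : ZMod (2 ^ (n - 1)) := Multiplicative.toAdd h.left with ht_def
      have ht : t = 1 - (r : ZMod (2 ^ (n - 1))) := by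
        rw [ht_def, hhl']
        push_cast [toAdd_mul, toAdd_inv, toAdd_pow, toAdd_ofAdd]
        rw [nsmul_eq_mul, mul_one]
        ring
      have hteq : (r : ZMod (2 ^ (n - 1))) * t = t := by
        have := congrArg Multiplicative.toAdd heq
        rw [toAdd_pow, nsmul_eq_mul] at this
        exact this
      have hsq : ((r : ZMod (2 ^ (n - 1))) - 1) ^ 2 = 0 := by
        have h0 : ((r : ZMod (2 ^ (n - 1))) - 1) * t = 0 := by
          rw [sub_mul, one_mul, hteq, sub_self]
        rw [ht] at h0
        have : -(((r : ZMod (2 ^ (n - 1))) - 1) ^ 2) = 0 := by rw [← h0]; ring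
        linear_combination -this
      have hr1 : 1 ≤ r := by
        have : 4 ≤ 2 ^ (n - 2) := by
          calc 4 = 2 ^ 2 := by norm_num
          _ ≤ 2 ^ (n - 2) := Nat.pow_le_pow_right (by norm_num) (by omega)
        omega
      have hdvd : 2 ^ (n - 1) ∣ (r - 1) ^ 2 := by
        have : (((r - 1 : ℕ) : ZMod (2 ^ (n - 1)))) ^ 2 = 0 := by
          rw [Nat.cast_sub hr1, Nat.cast_one, hsq]
        rwa [← Nat.cast_pow, ZMod.natCast_eq_zero_iff] at this
      -- contradiction
      set p : ℕ := 2 ^ (n - 3) with hp_def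
      have hp4 : 4 ≤ p := by
        calc 4 = 2 ^ 2 := by norm_num
        _ ≤ 2 ^ (n - 3) := Nat.pow_le_pow_right (by norm_num) (by omega)
      have hp2 : 2 ^ (n - 2) = 2 * p := by
        rw [hp_def, ← pow_succ']
        congr 1
        omega
      have hp1 : 2 ^ (n - 1) = 4 * p := by
        have : 2 ^ (n - 1) = 2 ^ 2 * 2 ^ (n - 3) := by
          rw [← pow_add]
          congr 1
          omega
        simpa using this
      have hr1' : r - 1 = 2 * (p - 1) := by omega
      have hdvd' : p ∣ (p - 1) ^ 2 := by
        rw [hp1, hr1'] at hdvd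
        have h4 : (2 * (p - 1)) ^ 2 = 4 * (p - 1) ^ 2 := by ring
        rw [h4] at hdvd
        exact (Nat.mul_dvd_mul_iff_left (by norm_num : 0 < 4)).mp hdvd
      have hcop : Nat.Coprime p ((p - 1) ^ 2) := by
        apply Nat.Coprime.pow_right
        have h1 : Nat.gcd p (p - 1) ∣ 1 := by
          have h2 := Nat.dvd_sub (Nat.gcd_dvd_left p (p - 1)) (Nat.gcd_dvd_right p (p - 1))
          have h3 : p - (p - 1) = 1 := by omega
          rwa [h3] at h2
        exact Nat.dvd_one.mp h1
      have hp1' : p = 1 := hcop.eq_one_of_dvd hdvd'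
      omega


  -- Step B : H ≤ zpowers a
  have hle : H ≤ Subgroup.zpowers a := by
    intro g hg
    have hr := hright g hg
    have hgeq : g = SemidirectProduct.inl g.left := by
      apply SemidirectProduct.ext
      · simp
      · simp [hr]
    refine ⟨(((Multiplicative.toAdd g.left).val : ℕ) : ℤ), ?_⟩
    show a ^ ((((Multiplicative.toAdd g.left).val : ℕ)) : ℤ) = g
    rw [zpow_natCast, ha, ← map_pow]
    have hval : (Multiplicative.ofAdd (1 : ZMod (2 ^ (n - 1)))) ^ (Multiplicative.toAdd g.left).val
        = g.left := by
      rw [← ofAdd_nsmul, nsmul_eq_mul, mul_one, ZMod.natCast_val, ZMod.cast_id, ofAdd_toAdd]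
    rw [hval, ← hgeq]
  -- cyclicity of zpowers a
  haveI hzc : IsCyclic (Subgroup.zpowers a) := by
    refine ⟨⟨⟨a, Subgroup.mem_zpowers a⟩, ?_⟩⟩
    rintro ⟨x, k, hk⟩
    refine ⟨k, ?_⟩
    apply Subtype.ext
    simpa using hk
  refine ⟨hle, Subgroup.isCyclic_of_le hle, ?_⟩
  -- Step D : order statement
  intro m hm
  have horder : orderOf a = 2 ^ (n - 1) := by
    rw [ha, orderOf_injective _ SemidirectProduct.inl_injective]
    simpa using ZMod.addOrderOf_one (2 ^ (n - 1))
  haveI hfinA : Finite (Subgroup.zpowers a) := by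
    apply Nat.finite_of_card_ne_zero
    rw [Nat.card_zpowers, horder]
    positivity
  have hmle : m ≤ n - 1 := by
    have h1 := Subgroup.card_le_of_le hle
    rw [Nat.card_zpowers, horder, hm] at h1
    exact (Nat.pow_le_pow_iff_right (by norm_num)).mp h1
  have hsub : n - m - 1 ≤ n - 1 := by omega
  have horder2 : orderOf (a ^ (2 ^ (n - m - 1))) = 2 ^ m := by
    rw [orderOf_pow' a (by positivity), horder]
    rw [Nat.gcd_eq_right (Nat.pow_dvd_pow 2 hsub)]
    rw [Nat.pow_div hsub (by norm_num)]
    congr 1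
    omega
  haveI hfinK : Finite (Subgroup.zpowers (a ^ (2 ^ (n - m - 1)))) := by
    apply Nat.finite_of_card_ne_zero
    rw [Nat.card_zpowers, horder2]
    positivity
  have hle2 : H ≤ Subgroup.zpowers (a ^ (2 ^ (n - m - 1))) := by
    intro g hg
    obtain ⟨k, hk0⟩ := hle hg
    have hk : a ^ k = g := hk0
    have hgpow : g ^ (2 ^ m) = 1 := by
      have h1 : (⟨g, hg⟩ : H) ^ (2 ^ m) = 1 := by
        rw [← hm]; exact pow_card_eq_one'
      have := congrArg Subtype.val h1
      simpa using this
    have hzpow : a ^ (k * (2 ^ m : ℕ)) = 1 := by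
      rw [zpow_mul, hk, zpow_natCast, hgpow]
    have hdvd1 : ((2 : ℤ) ^ (n - 1)) ∣ k * (2 ^ m : ℕ) := by
      have h2 := orderOf_dvd_iff_zpow_eq_one.mpr hzpow
      rw [horder] at h2
      exact_mod_cast h2
    have hdvd2 : ((2 : ℤ) ^ (n - m - 1)) ∣ k := by
      have hsplit : ((2 : ℤ) ^ (n - 1)) = 2 ^ (n - m - 1) * 2 ^ m := by
        rw [← pow_add]
        congr 1
        omega
      rw [hsplit] at hdvd1
      push_cast at hdvd1
      exact (mul_dvd_mul_iff_right (by positivity : (2:ℤ) ^ m ≠ 0)).mp hdvd1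
    obtain ⟨j, hj⟩ := hdvd2
    refine ⟨j, ?_⟩
    show (a ^ (2 ^ (n - m - 1) : ℕ)) ^ j = g
    rw [← hk, hj, ← zpow_natCast a (2 ^ (n - m - 1)), ← zpow_mul]
    push_cast
    ring_nf
  have hcard : Nat.card (Subgroup.zpowers (a ^ (2 ^ (n - m - 1)))) ≤ Nat.card H := by
    rw [Nat.card_zpowers, horder2, hm]
  exact Subgroup.eq_of_le_of_card_ge hle2 hcard
end

section
/- Let n > 4. Every non-abelian normal subgroup of the quasidihedral group QD_{2^n} has index at most 2 in QD_{2^n}. -/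
/-!
Write `QD = A ⋊ C₂` with `A = ⟨a⟩` cyclic of order `2^(n-1)`. A non-abelian subgroup `H` is not
contained in the abelian group `A`, so it contains some `g` outside `A`; being normal, `H` then
contains the commutator `⁅a, g⁆ = a^(2 - 2^(n-2))`. As `2 - 2^(n-2)` is twice a unit of
`ZMod (2^(n-1))`, `H` contains all of `A²`, the kernel of `QD → C₂ × C₂`, `(x, r) ↦ (x mod 2, r)`.
The image of `H` in this Klein four-group is nontrivial, so `H` has index at most `2`.
-/

open SemidirectProduct Multiplicative
open scoped commutatorElement

theorem pow_eq_self_of_sq_eq_one {M : Type*} [Monoid M] {y : M} (hy : y ^ 2 = 1) {k : ℕ}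
    (hk : Odd k) : y ^ k = y := by
  obtain ⟨j, rfl⟩ := hk
  rw [pow_succ, pow_mul, hy, one_pow, one_mul]

theorem Subgroup.two_mul_index_le_card_of_ne_bot {Q : Type*} [Group Q] [Finite Q]
    {L : Subgroup Q} (hL : L ≠ ⊥) : 2 * L.index ≤ Nat.card Q := by
  rw [← L.card_mul_index]
  exact Nat.mul_le_mul_right _ (L.one_lt_card_iff_ne_bot.mpr hL)

theorem Subgroup.two_mul_index_le_card_of_ker_le {G Q : Type*} [Group G] [Group Q] [Finite Q]
    {f : G →* Q} {H : Subgroup G} (hf : f.ker ≤ H) {g : G} (hg : g ∈ H) (hfg : f g ≠ 1) :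
    2 * H.index ≤ Nat.card Q := by
  have hne : H.map f ≠ ⊥ := fun h => hfg <| mem_bot.mp (h ▸ mem_map_of_mem f hg)
  have hpos := (H.map f).index_ne_zero_of_finite
  exact (Nat.mul_le_mul_left 2 (Nat.le_of_dvd (by omega) (H.dvd_index_map hf))).trans
    (two_mul_index_le_card_of_ne_bot hne)

namespace SemidirectProduct

variable {N G : Type*} [CommGroup N] [Group G] {φ : G →* MulAut N}

theorem commute_of_right_eq_one {x y : N ⋊[φ] G} (hx : x.right = 1) (hy : y.right = 1) :
    Commute x y := by
  ext <;> simp [mul_left, mul_right, hx, hy, mul_comm]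

theorem commutatorElement_inl (n : N) (g : N ⋊[φ] G) :
    ⁅(inl n : N ⋊[φ] G), g⁆ = inl (n * (φ g.right n)⁻¹) := by
  ext
  · simp [commutatorElement_def, mul_left, inv_left, mul_right_comm _ _ g.left⁻¹]
  · simp [commutatorElement_def, mul_right, inv_right]

end SemidirectProduct

theorem ZMod.mul_mem_zmultiples {m : ℕ} (a b : ZMod m) : a * b ∈ AddSubgroup.zmultiples b :=
  ⟨a.cast, by simp only [zsmul_eq_mul, ZMod.intCast_zmod_cast]⟩

theorem ZMod.isUnit_one_sub_two_pow {e k : ℕ} (hk : k ≠ 0) :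
    IsUnit (1 - 2 ^ k : ZMod (2 ^ e)) := by
  have h2 : IsNilpotent (2 : ZMod (2 ^ e)) := ⟨e, by exact_mod_cast ZMod.natCast_self (2 ^ e)⟩
  exact (h2.pow_of_pos hk).isUnit_one_sub

theorem ZMod.two_mul_mem_zmultiples_two_sub_two_pow {e k : ℕ} (hk : k ≠ 0) (y : ZMod (2 ^ e)) :
    2 * y ∈ AddSubgroup.zmultiples (2 - 2 ^ (k + 1) : ZMod (2 ^ e)) := by
  obtain ⟨u, hu⟩ := isUnit_one_sub_two_pow (e := e) hk
  have : 2 * y = (y * ↑u⁻¹) * (2 - 2 ^ (k + 1)) := by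
    rw [pow_succ, show (2 - 2 ^ k * 2 : ZMod (2 ^ e)) = 2 * u by rw [hu]; ring]
    linear_combination (-2 * y) * u.inv_mul
  rw [this]
  exact mul_mem_zmultiples _ _

def ZMod.parityHom {m : ℕ} (hm : 2 ∣ m) : Multiplicative (ZMod m) →* Multiplicative (ZMod 2) :=
  (ZMod.castHom hm (ZMod 2)).toAddMonoidHom.toMultiplicative

theorem ZMod.exists_eq_two_mul_of_parityHom_eq_one {m : ℕ} [NeZero m] (hm : 2 ∣ m)
    {x : Multiplicative (ZMod m)} (hx : parityHom hm x = 1) : ∃ y, x.toAdd = 2 * y := by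
  have hval : (x.toAdd.val : ZMod 2) = 0 := by
    simpa [parityHom, ZMod.cast_natCast hm] using congrArg toAdd hx
  obtain ⟨j, hj⟩ := ZMod.natCast_eq_zero_iff_even.mp hval
  refine ⟨j, ?_⟩
  rw [← ZMod.natCast_zmod_val x.toAdd, hj]
  push_cast
  ring

theorem Multiplicative.eq_ofAdd_one_of_ne_one {r : Multiplicative (ZMod 2)} (hr : r ≠ 1) :
    r = ofAdd 1 := by
  revert r; decide

section Quasidihedral

variable {n : ℕ} {φ : Multiplicative (ZMod 2) →* MulAut (Multiplicative (ZMod (2 ^ (n - 1))))}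

theorem parityHom_quasidihedral_apply (hn : 2 < n) (hm : 2 ∣ 2 ^ (n - 1))
    (hφ : ∀ x, φ (ofAdd 1) x = x ^ (2 ^ (n - 2) - 1)) (r : Multiplicative (ZMod 2))
    (x : Multiplicative (ZMod (2 ^ (n - 1)))) :
    ZMod.parityHom hm (φ r x) = ZMod.parityHom hm x := by
  obtain rfl | hr := eq_or_ne r 1
  · rw [map_one, MulAut.one_apply]
  rw [Multiplicative.eq_ofAdd_one_of_ne_one hr, hφ, map_pow]
  refine pow_eq_self_of_sq_eq_one (by generalize ZMod.parityHom hm x = y; revert y; decide) ?_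
  exact Nat.Even.sub_odd Nat.one_le_two_pow (Nat.even_pow.mpr ⟨even_two, by omega⟩) odd_one

theorem commutatorElement_inl_ofAdd_one
    (hφ : ∀ x, φ (ofAdd 1) x = x ^ (2 ^ (n - 2) - 1)) {g : _ ⋊[φ] _} (hg : g.right = ofAdd 1) :
    ⁅(inl (ofAdd 1) : _ ⋊[φ] _), g⁆ = inl (ofAdd (2 - 2 ^ (n - 2))) := by
  rw [commutatorElement_inl, hg, hφ, ← ofAdd_nsmul, ← ofAdd_neg, ← ofAdd_add, nsmul_eq_mul,
    Nat.cast_sub Nat.one_le_two_pow]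
  push_cast
  ring_nf

end Quasidihedral

/-- For `n > 4`, every non-abelian normal subgroup of the quasidihedral group `QD_{2^n}` has
index at most `2`. -/
theorem quasidihedral_nonabelian_normal_index_le_two (n : ℕ) (hn : 4 < n)
    (φ : Multiplicative (ZMod 2) →* MulAut (Multiplicative (ZMod (2 ^ (n - 1)))))
    (hφ : ∀ x : Multiplicative (ZMod (2 ^ (n - 1))),
      φ (Multiplicative.ofAdd 1) x = x ^ (2 ^ (n - 2) - 1)) :
    ∀ H : Subgroup (Multiplicative (ZMod (2 ^ (n - 1))) ⋊[φ] Multiplicative (ZMod 2)),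
      H.Normal → (¬ ∀ x y : H, x * y = y * x) → H.index ≤ 2 := by
  intro H hH hna
  obtain ⟨g, hgH, hg⟩ : ∃ g ∈ H, g.right ≠ 1 := by
    by_contra! h
    exact hna fun x y => Subtype.ext (commute_of_right_eq_one (h x x.2) (h y y.2)).eq
  have hc : inl (ofAdd (2 - 2 ^ (n - 2))) ∈ H := by
    rw [← commutatorElement_inl_ofAdd_one hφ (Multiplicative.eq_ofAdd_one_of_ne_one hg)]
    exact Subgroup.commutator_le_right ⊤ H (Subgroup.commutator_mem_commutator trivial hgH)
  have hsq : ∀ y, inl (ofAdd (2 * y)) ∈ H := by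
    intro y
    obtain ⟨k, hk⟩ := ZMod.two_mul_mem_zmultiples_two_sub_two_pow (e := n - 1) (k := n - 3)
      (by omega) y
    rw [show n - 3 + 1 = n - 2 by omega] at hk
    rw [← hk, ofAdd_zsmul, map_zpow]
    exact zpow_mem hc k
  have hm : 2 ∣ 2 ^ (n - 1) := dvd_pow_self 2 (by omega)
  let ψ : _ ⋊[φ] _ →* Multiplicative (ZMod 2) ⋊[1] Multiplicative (ZMod 2) :=
    map (ZMod.parityHom hm) (MonoidHom.id _) fun r => MonoidHom.ext fun x => by
      simpa using parityHom_quasidihedral_apply (by omega) hm hφ r x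
  have hψ : ψ.ker ≤ H := by
    intro p hp
    obtain ⟨y, hy⟩ := ZMod.exists_eq_two_mul_of_parityHom_eq_one hm (congrArg left hp)
    have hr : p.right = 1 := congrArg right hp
    have hpy : p = inl (ofAdd (2 * y)) := by
      ext
      · exact hy
      · exact hr
    exact hpy ▸ hsq y
  have : Finite (Multiplicative (ZMod 2) ⋊[1] Multiplicative (ZMod 2)) :=
    .of_equiv _ SemidirectProduct.equivProd.symm
  have hcard := Subgroup.two_mul_index_le_card_of_ker_le hψ hgH fun h => hg (congrArg right h)
  simp only [SemidirectProduct.card, Nat.card_eq_fintype_card, Fintype.card_multiplicative,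
    ZMod.card] at hcard
  omega
end

section
/- Let n > 4. The number of subgroups of the quasidihedral group QD_{2^n} of order 2^m equals: 1 if m = 0 or m = n; 2^{n-2} + 1 if m = 1; and 2^{n-m} + 1 if 2 ≤ m ≤ n-1. -/
/-!
Write `A` for the cyclic subgroup of order `2^(n-1)`, of index 2, and `τ` for the generator of
`C₂`. A subgroup contained in `A` is the unique subgroup of its order in the cyclic group `A`.
A subgroup `H ⊄ A` of order `2^m` meets `A` in the unique subgroup `K` of order `2^(m-1)`, and
`H = K ∪ K·(x, τ)` for any of its elements `(x, τ)`. Conversely, `K` being characteristic in `A`,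
`K ∪ K·(x, τ)` is a subgroup as soon as `(x, τ)² = x^(2^(n-2))` lies in `K`, and it only depends
on the coset `x K`. Hence there are `|{x | x^(2^(n-2)) ∈ K}| / |K| = 2^min(n+m-3, n-1) / 2^(m-1)`
such subgroups.
-/

open SemidirectProduct

namespace QuasiDihedral

section Cyclic

variable {G : Type*} [CommGroup G] [IsCyclic G] [Finite G]

theorem card_ker_powMonoidHom_of_dvd {d : ℕ} (hd : d ∣ Nat.card G) :
    Nat.card (powMonoidHom d : G →* G).ker = d := by
  rw [IsCyclic.card_powMonoidHom_ker, Nat.gcd_eq_right hd]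

theorem eq_ker_powMonoidHom_iff {K : Subgroup G} {d : ℕ} (hd : d ∣ Nat.card G) :
    K = (powMonoidHom d : G →* G).ker ↔ Nat.card K = d := by
  refine ⟨fun hK => hK ▸ card_ker_powMonoidHom_of_dvd hd, fun hK => ?_⟩
  refine Subgroup.eq_of_le_of_card_ge (fun x hx => ?_)
    (by rw [card_ker_powMonoidHom_of_dvd hd, hK])
  rw [MonoidHom.mem_ker, powMonoidHom_apply, ← hK]
  exact congrArg Subtype.val (pow_card_eq_one' (x := (⟨x, hx⟩ : K)))

theorem card_subgroups_card_eq_of_dvd {d : ℕ} (hd : d ∣ Nat.card G) :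
    Nat.card {K : Subgroup G // Nat.card K = d} = 1 := by
  rw [Nat.card_eq_one_iff_unique]
  refine ⟨⟨fun K L => Subtype.ext ?_⟩, ⟨⟨_, card_ker_powMonoidHom_of_dvd hd⟩⟩⟩
  rw [(eq_ker_powMonoidHom_iff hd).2 K.2, (eq_ker_powMonoidHom_iff hd).2 L.2]

end Cyclic

theorem card_subgroups_card_eq_one {G : Type*} [Group G] :
    Nat.card {H : Subgroup G // Nat.card H = 1} = 1 := by
  simp_rw [Subgroup.card_eq_one]
  exact Nat.card_unique

theorem card_subgroups_card_eq_of_not_dvd {G : Type*} [Group G] {d : ℕ}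
    (hd : ¬ d ∣ Nat.card G) :
    Nat.card {K : Subgroup G // Nat.card K = d} = 0 :=
  Nat.card_eq_zero.2 <| .inl ⟨fun K => hd (K.2 ▸ K.1.card_subgroup_dvd_card)⟩

theorem card_subgroups_le_range {N M : Type*} [Group N] [Group M] {f : N →* M}
    (hf : Function.Injective f) (d : ℕ) :
    Nat.card {H : Subgroup M // Nat.card H = d ∧ H ≤ f.range} =
      Nat.card {K : Subgroup N // Nat.card K = d} := by
  have card_map (K : Subgroup N) : Nat.card (K.map f) = Nat.card K :=
    Subgroup.card_map_of_injective hf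
  refine Nat.card_congr
    { toFun := fun H => ⟨H.1.comap f, by rw [← card_map, Subgroup.map_comap_eq_self H.2.2, H.2.1]⟩
      invFun := fun K => ⟨K.1.map f, by rw [card_map, K.2], Subgroup.map_le_range f K.1⟩
      left_inv := fun H => Subtype.ext (Subgroup.map_comap_eq_self H.2.2)
      right_inv := fun K => Subtype.ext (Subgroup.comap_map_eq_self_of_injective hf K.1) }

instance {N G : Type*} [Group N] [Group G] [Finite N] [Finite G] (φ : G →* MulAut N) :
    Finite (N ⋊[φ] G) :=
  Finite.of_equiv _ equivProd.symm

theorem card_subgroups_le_ker_rightHom {N G : Type*} [Group N] [Group G] {φ : G →* MulAut N}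
    (d : ℕ) : Nat.card {H : Subgroup (N ⋊[φ] G) // Nat.card H = d ∧ H ≤ rightHom.ker} =
      Nat.card {K : Subgroup N // Nat.card K = d} := by
  rw [← range_inl_eq_ker_rightHom]
  exact card_subgroups_le_range inl_injective d

theorem card_subtype_eq_card_and_add_card_and_not {α : Type*} [Finite α] (p q : α → Prop) :
    Nat.card {a // p a} = Nat.card {a // p a ∧ q a} + Nat.card {a // p a ∧ ¬ q a} := by
  classical
  rw [← Nat.card_sum]
  exact Nat.card_congr <| (Equiv.sumCompl fun a : {a // p a} => q a).symm.trans <|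
    (Equiv.subtypeSubtypeEquivSubtypeInter p q).sumCongr
      (Equiv.subtypeSubtypeEquivSubtypeInter p fun a => ¬ q a)

section Reflections

local notation "C₂" => Multiplicative (ZMod 2)
local notation "τ" => Multiplicative.ofAdd (1 : ZMod 2)

theorem eq_one_or_eq_ofAdd_one (b : C₂) : b = 1 ∨ b = τ := by
  revert b; decide

theorem ofAdd_one_ne_one : τ ≠ 1 := by decide

theorem ofAdd_one_mul_self : τ * τ = 1 := by decide

theorem inv_ofAdd_one : τ⁻¹ = τ := by decide

theorem right_eq_ofAdd_one {N : Type*} [Group N] {φ : C₂ →* MulAut N} {g : N ⋊[φ] C₂}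
    (hg : g ∉ rightHom.ker) : g.right = τ :=
  (eq_one_or_eq_ofAdd_one g.right).resolve_left hg

theorem card_eq_two_mul_card_comap_inl {N : Type*} [Group N] {φ : C₂ →* MulAut N}
    {H : Subgroup (N ⋊[φ] C₂)} (hH : ¬ H ≤ rightHom.ker) :
    Nat.card H = 2 * Nat.card (H.comap inl) := by
  have map_rightHom : H.map rightHom = ⊤ := by
    obtain ⟨h, hH, hker⟩ := SetLike.not_le_iff_exists.1 hH
    refine eq_top_iff.2 fun b _ => ?_
    rcases eq_one_or_eq_ofAdd_one b with rfl | rfl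
    · exact one_mem _
    · exact ⟨h, hH, right_eq_ofAdd_one hker⟩
  have card_ker_subgroupOf : Nat.card (rightHom.ker.subgroupOf H) = Nat.card (H.comap inl) := by
    rw [← Subgroup.card_map_of_injective H.subtype_injective, Subgroup.subgroupOf_map_subtype,
      ← range_inl_eq_ker_rightHom, ← Subgroup.map_comap_eq,
      Subgroup.card_map_of_injective inl_injective]
  rw [← Subgroup.card_mul_index (rightHom.ker.subgroupOf H), card_ker_subgroupOf, mul_comm]
  congr 1
  rw [← Subgroup.relIndex, Subgroup.relIndex_ker, map_rightHom, Subgroup.card_top]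
  exact Nat.card_zmod 2

variable {N : Type*} [CommGroup N] {φ : C₂ →* MulAut N}

variable (φ) in
def normHom : N →* N := MonoidHom.id N * (φ τ).toMonoidHom

theorem normHom_apply (x : N) : normHom φ x = x * φ τ x := rfl

theorem mul_self_eq_inl_normHom {g : N ⋊[φ] C₂} (hg : g.right = τ) :
    g * g = inl (normHom φ g.left) := by
  ext
  · simp [hg, normHom_apply]
  · simp [hg, ofAdd_one_mul_self]

def reflectionSubgroup (K : Subgroup N) (hK : ∀ y ∈ K, φ τ y ∈ K) (x : N)
    (hx : normHom φ x ∈ K) : Subgroup (N ⋊[φ] C₂) where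
  carrier := {g | (g.right = 1 ∧ g.left ∈ K) ∨ (g.right = τ ∧ g.left * x⁻¹ ∈ K)}
  one_mem' := .inl ⟨rfl, K.one_mem⟩
  mul_mem' := by
    rintro a b (⟨ha, ha'⟩ | ⟨ha, ha'⟩) (⟨hb, hb'⟩ | ⟨hb, hb'⟩) <;>
      simp only [Set.mem_ofPred_eq, mul_left, mul_right, ha, hb, one_mul, mul_one,
        ofAdd_one_mul_self, map_one, MulAut.one_apply]
    · exact .inl ⟨trivial, K.mul_mem ha' hb'⟩
    · exact .inr ⟨trivial, by simpa only [mul_assoc] using K.mul_mem ha' hb'⟩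
    · refine .inr ⟨trivial, ?_⟩
      rw [mul_right_comm]
      exact K.mul_mem ha' (hK _ hb')
    · refine .inl ⟨trivial, ?_⟩
      have key : a.left * φ τ b.left = a.left * x⁻¹ * φ τ (b.left * x⁻¹) * normHom φ x := by
        simp [normHom_apply, mul_comm, mul_left_comm, mul_assoc]
      rw [key]
      exact K.mul_mem (K.mul_mem ha' (hK _ hb')) hx
  inv_mem' := by
    rintro a (⟨ha, ha'⟩ | ⟨ha, ha'⟩) <;>
      simp only [Set.mem_ofPred_eq, inv_left, inv_right, ha, inv_one, inv_ofAdd_one, map_one,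
        MulAut.one_apply]
    · exact .inl ⟨trivial, K.inv_mem ha'⟩
    · refine .inr ⟨trivial, ?_⟩
      have key : φ τ a.left⁻¹ * x⁻¹ = φ τ (a.left * x⁻¹)⁻¹ * (normHom φ x)⁻¹ := by
        simp [normHom_apply, mul_comm, mul_left_comm, mul_assoc]
      rw [key]
      exact K.mul_mem (hK _ (K.inv_mem ha')) (K.inv_mem hx)

section ReflectionSubgroup

variable {K : Subgroup N} {hK : ∀ y ∈ K, φ τ y ∈ K} {x x' : N} {hx : normHom φ x ∈ K}
  {hx' : normHom φ x' ∈ K}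

theorem mem_reflectionSubgroup {g : N ⋊[φ] C₂} :
    g ∈ reflectionSubgroup K hK x hx ↔
      (g.right = 1 ∧ g.left ∈ K) ∨ (g.right = τ ∧ g.left * x⁻¹ ∈ K) :=
  Iff.rfl

theorem comap_inl_reflectionSubgroup : (reflectionSubgroup K hK x hx).comap inl = K := by
  ext y
  simp [mem_reflectionSubgroup, ofAdd_one_ne_one.symm]

theorem reflectionSubgroup_not_le_ker : ¬ reflectionSubgroup K hK x hx ≤ rightHom.ker :=
  fun h => ofAdd_one_ne_one (h (show (⟨x, τ⟩ : N ⋊[φ] C₂) ∈ _ from .inr ⟨rfl, by simp⟩))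

theorem reflectionSubgroup_eq_iff :
    reflectionSubgroup K hK x hx = reflectionSubgroup K hK x' hx' ↔ x' * x⁻¹ ∈ K := by
  constructor
  · intro h
    have hmem : (⟨x', τ⟩ : N ⋊[φ] C₂) ∈ reflectionSubgroup K hK x' hx' := .inr ⟨rfl, by simp⟩
    rw [← h] at hmem
    exact (hmem.resolve_left fun h => ofAdd_one_ne_one h.1).2
  · intro h
    have key (y : N) : y * x⁻¹ ∈ K ↔ y * x'⁻¹ ∈ K := by
      rw [← K.mul_mem_cancel_right (y := y * x'⁻¹) h, mul_assoc, inv_mul_cancel_left]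
    ext g
    simp only [mem_reflectionSubgroup, key]

end ReflectionSubgroup

theorem normHom_left_mem_comap_inl {H : Subgroup (N ⋊[φ] C₂)} {h : N ⋊[φ] C₂} (hh : h ∈ H)
    (hτ : h.right = τ) : normHom φ h.left ∈ H.comap inl := by
  rw [Subgroup.mem_comap, ← mul_self_eq_inl_normHom hτ]
  exact H.mul_mem hh hh

theorem eq_reflectionSubgroup {H : Subgroup (N ⋊[φ] C₂)}
    (hK : ∀ y ∈ H.comap inl, φ τ y ∈ H.comap inl) {h : N ⋊[φ] C₂} (hh : h ∈ H)
    (hτ : h.right = τ) :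
    H = reflectionSubgroup (H.comap inl) hK h.left (normHom_left_mem_comap_inl hh hτ) := by
  ext g
  rw [mem_reflectionSubgroup, Subgroup.mem_comap, Subgroup.mem_comap]
  rcases eq_one_or_eq_ofAdd_one g.right with hg | hg
  · have hg' : inl g.left = g := by ext <;> simp [hg]
    simp [hg, hg', ofAdd_one_ne_one.symm]
  · have hg' : inl (g.left * h.left⁻¹) * h = g := by ext <;> simp [hg, hτ]
    have hmem : g ∈ H ↔ inl (g.left * h.left⁻¹) ∈ H := by
      conv_rhs => rw [← H.mul_mem_cancel_right hh, hg']
    simp [hg, hmem]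

theorem card_subgroups_comap_inl_eq_mul_card (K : Subgroup N) (hK : ∀ y ∈ K, φ τ y ∈ K) :
    Nat.card {H : Subgroup (N ⋊[φ] C₂) // H.comap inl = K ∧ ¬ H ≤ rightHom.ker} * Nat.card K =
      Nat.card (K.comap (normHom φ)) := by
  set V := K.comap (normHom φ)
  let F : V → {H : Subgroup (N ⋊[φ] C₂) // H.comap inl = K ∧ ¬ H ≤ rightHom.ker} :=
    fun v => ⟨reflectionSubgroup K hK v (Subgroup.mem_comap.1 v.2), comap_inl_reflectionSubgroup,
      reflectionSubgroup_not_le_ker⟩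
  have hF : Function.Surjective F := by
    rintro ⟨H, rfl, hH⟩
    obtain ⟨h, hh, hker⟩ := SetLike.not_le_iff_exists.1 hH
    have hτ := right_eq_ofAdd_one hker
    exact ⟨⟨h.left, normHom_left_mem_comap_inl hh hτ⟩,
      Subtype.ext (eq_reflectionSubgroup hK hh hτ).symm⟩
  have hF_eq (a b : V) : F a = F b ↔ QuotientGroup.leftRel (K.subgroupOf V) a b := by
    rw [QuotientGroup.leftRel_apply, Subgroup.mem_subgroupOf, Subtype.ext_iff]
    change reflectionSubgroup K hK a (Subgroup.mem_comap.1 a.2) =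
      reflectionSubgroup K hK b (Subgroup.mem_comap.1 b.2) ↔ _
    rw [reflectionSubgroup_eq_iff, Subgroup.coe_mul, Subgroup.coe_inv, mul_comm]
  have hKV : K ≤ V := fun y hy => K.mul_mem hy (hK y hy)
  rw [← Nat.card_congr ((Quotient.congrRight hF_eq).symm.trans
      (Setoid.quotientKerEquivOfSurjective F hF)),
    ← Nat.card_congr (Subgroup.subgroupOfEquivOfLe hKV).toEquiv]
  exact (Subgroup.card_eq_card_quotient_mul_card_subgroup _).symm

section Quasidihedral

variable {n : ℕ} {φ : C₂ →* MulAut (Multiplicative (ZMod (2 ^ (n - 1))))}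

theorem card_multiplicative_zmod :
    Nat.card (Multiplicative (ZMod (2 ^ (n - 1)))) = 2 ^ (n - 1) :=
  Nat.card_zmod _

theorem card_ker_powMonoidHom_two_pow (k : ℕ) :
    Nat.card (powMonoidHom (2 ^ k) : Multiplicative (ZMod (2 ^ (n - 1))) →* _).ker =
      2 ^ min k (n - 1) := by
  rw [IsCyclic.card_powMonoidHom_ker, card_multiplicative_zmod]
  rcases le_total k (n - 1) with h | h
  · rw [min_eq_left h, Nat.gcd_eq_right (Nat.pow_dvd_pow 2 h)]
  · rw [min_eq_right h, Nat.gcd_eq_left (Nat.pow_dvd_pow 2 h)]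

variable (hφ : ∀ x : Multiplicative (ZMod (2 ^ (n - 1))), φ τ x = x ^ (2 ^ (n - 2) - 1))
include hφ

theorem normHom_eq_pow (x : Multiplicative (ZMod (2 ^ (n - 1)))) :
    normHom φ x = x ^ 2 ^ (n - 2) := by
  rw [normHom_apply, hφ, ← pow_succ', Nat.sub_add_cancel Nat.one_le_two_pow]

theorem comap_normHom_ker_powMonoidHom (k : ℕ) :
    (powMonoidHom (2 ^ k) : Multiplicative (ZMod (2 ^ (n - 1))) →* _).ker.comap (normHom φ) =
      (powMonoidHom (2 ^ (n - 2 + k))).ker := by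
  ext x
  simp [normHom_eq_pow hφ, ← pow_mul, ← pow_add]

theorem card_subgroups_not_le_ker_two_pow {m : ℕ} (hm : 1 ≤ m) (hmn : m ≤ n) :
    Nat.card {H : Subgroup (Multiplicative (ZMod (2 ^ (n - 1))) ⋊[φ] C₂) //
      Nat.card H = 2 ^ m ∧ ¬ H ≤ rightHom.ker} = 2 ^ min (n - 2) (n - m) := by
  set K := (powMonoidHom (2 ^ (m - 1)) : Multiplicative (ZMod (2 ^ (n - 1))) →* _).ker
  have hK : ∀ y ∈ K, φ τ y ∈ K := fun y hy => by
    rw [MonoidHom.mem_ker, powMonoidHom_apply] at hy ⊢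
    rw [← map_pow, hy, map_one]
  have hcard (H : Subgroup (Multiplicative (ZMod (2 ^ (n - 1))) ⋊[φ] C₂))
      (hH : ¬ H ≤ rightHom.ker) : Nat.card H = 2 ^ m ↔ H.comap inl = K := by
    have two_pow_m : 2 ^ m = 2 * 2 ^ (m - 1) := by rw [← pow_succ', Nat.sub_add_cancel hm]
    rw [card_eq_two_mul_card_comap_inl hH, two_pow_m, Nat.mul_left_cancel_iff two_pos,
      eq_ker_powMonoidHom_iff
        (by rw [card_multiplicative_zmod]; exact Nat.pow_dvd_pow 2 (by omega))]
  have key := card_subgroups_comap_inl_eq_mul_card K hK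
  rw [comap_normHom_ker_powMonoidHom hφ, card_ker_powMonoidHom_two_pow,
    card_ker_powMonoidHom_two_pow, ← Nat.card_congr (Equiv.subtypeEquivRight
      fun H => and_congr_left (hcard H)), min_eq_left (by omega : m - 1 ≤ n - 1)] at key
  refine Nat.eq_of_mul_eq_mul_right (Nat.two_pow_pos (m - 1)) ?_
  rw [key, ← pow_add]
  congr 1
  omega

end Quasidihedral

end Reflections

end QuasiDihedral

open QuasiDihedral SemidirectProduct in
/-- For `n > 4`, the number of subgroups of the quasidihedral group `QD_{2^n}` of order `2^m`
is: `1` if `m = 0` or `m = n`; `2^(n-2) + 1` if `m = 1`; `2^(n-m) + 1` if `2 ≤ m ≤ n-1`. -/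
theorem quasidihedral_card_subgroups (n m : ℕ) (hn : 4 < n)
    (φ : Multiplicative (ZMod 2) →* MulAut (Multiplicative (ZMod (2 ^ (n - 1)))))
    (hφ : ∀ x : Multiplicative (ZMod (2 ^ (n - 1))),
      φ (Multiplicative.ofAdd 1) x = x ^ (2 ^ (n - 2) - 1)) :
    ((m = 0 ∨ m = n) →
      Nat.card {H : Subgroup (Multiplicative (ZMod (2 ^ (n - 1))) ⋊[φ] Multiplicative (ZMod 2)) //
        Nat.card H = 2 ^ m} = 1) ∧
    (m = 1 →
      Nat.card {H : Subgroup (Multiplicative (ZMod (2 ^ (n - 1))) ⋊[φ] Multiplicative (ZMod 2)) //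
        Nat.card H = 2 ^ m} = 2 ^ (n - 2) + 1) ∧
    (2 ≤ m → m ≤ n - 1 →
      Nat.card {H : Subgroup (Multiplicative (ZMod (2 ^ (n - 1))) ⋊[φ] Multiplicative (ZMod 2)) //
        Nat.card H = 2 ^ m} = 2 ^ (n - m) + 1) := by
  have split (k : ℕ) (hk : 1 ≤ k) (hkn : k ≤ n) :
      Nat.card {H : Subgroup (Multiplicative (ZMod (2 ^ (n - 1))) ⋊[φ] Multiplicative (ZMod 2)) //
        Nat.card H = 2 ^ k} =
      Nat.card {K : Subgroup (Multiplicative (ZMod (2 ^ (n - 1)))) // Nat.card K = 2 ^ k} +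
        2 ^ min (n - 2) (n - k) := by
    rw [card_subtype_eq_card_and_add_card_and_not _ (· ≤ rightHom.ker),
      card_subgroups_le_ker_rightHom, card_subgroups_not_le_ker_two_pow hφ hk hkn]
  have cyclic_count (k : ℕ) (hk : k ≤ n - 1) :
      Nat.card {K : Subgroup (Multiplicative (ZMod (2 ^ (n - 1)))) // Nat.card K = 2 ^ k} = 1 :=
    card_subgroups_card_eq_of_dvd (by rw [card_multiplicative_zmod]; exact Nat.pow_dvd_pow 2 hk)
  refine ⟨?_, ?_, ?_⟩
  · rintro (rfl | hm)
    · exact card_subgroups_card_eq_one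
    · rw [hm, split n (by omega) le_rfl, card_subgroups_card_eq_of_not_dvd, Nat.sub_self,
        min_zero, pow_zero, zero_add]
      rw [card_multiplicative_zmod, Nat.pow_dvd_pow_iff_le_right one_lt_two]
      omega
  · rintro rfl
    rw [split 1 le_rfl (by omega), cyclic_count 1 (by omega), min_eq_left (by omega), add_comm]
  · intro hm2 hmn
    rw [split m (by omega) (by omega), cyclic_count m hmn, min_eq_right (by omega), add_comm]
end

section
/- Let n > 4. Every subgroup of order 2 of the quasidihedral group QD_{2^n} is either the central subgroup ⟨a^{2^{n-2}}⟩ or is conjugate to the subgroup ⟨b⟩ generated by b. -/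
/-- For `n > 4`, every subgroup of order 2 of the quasidihedral group `QD_{2^n}` is either the
central subgroup `⟨a^(2^(n-2))⟩` or is conjugate to the subgroup `⟨b⟩`. -/
theorem quasidihedral_order_two_subgroups (n : ℕ) (hn : 4 < n)
    (φ : Multiplicative (ZMod 2) →* MulAut (Multiplicative (ZMod (2 ^ (n - 1)))))
    (hφ : ∀ x : Multiplicative (ZMod (2 ^ (n - 1))),
      φ (Multiplicative.ofAdd 1) x = x ^ (2 ^ (n - 2) - 1))
    (a b : Multiplicative (ZMod (2 ^ (n - 1))) ⋊[φ] Multiplicative (ZMod 2))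
    (ha : a = SemidirectProduct.inl (Multiplicative.ofAdd (1 : ZMod (2 ^ (n - 1)))))
    (hb : b = SemidirectProduct.inr (Multiplicative.ofAdd (1 : ZMod 2))) :
    ∀ H : Subgroup (Multiplicative (ZMod (2 ^ (n - 1))) ⋊[φ] Multiplicative (ZMod 2)),
      Nat.card H = 2 →
        H = Subgroup.zpowers (a ^ (2 ^ (n - 2))) ∨
        ∃ g : Multiplicative (ZMod (2 ^ (n - 1))) ⋊[φ] Multiplicative (ZMod 2),
          H = Subgroup.map (MulAut.conj g).toMonoidHom (Subgroup.zpowers b) := by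
  intro H hH
  haveI : NeZero ((2 : ℕ) ^ (n - 1)) := ⟨pow_ne_zero _ two_ne_zero⟩
  haveI : Finite H := Nat.finite_of_card_ne_zero (by omega)
  -- find the nontrivial element t of H
  obtain hbot | ⟨t, htH, ht1⟩ := H.bot_or_exists_ne_one
  · rw [hbot] at hH; simp at hH
  have hord : orderOf t = 2 := by
    have h1 : orderOf t ∣ 2 := by
      have := H.orderOf_dvd_natCard htH
      rwa [hH] at this
    rcases (Nat.dvd_prime Nat.prime_two).mp h1 with h | h
    · exact absurd (orderOf_eq_one_iff.mp h) ht1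
    · exact h
  have hHt : H = Subgroup.zpowers t := by
    refine (Subgroup.eq_of_le_of_card_ge (Subgroup.zpowers_le.mpr htH) ?_).symm
    rw [hH, Nat.card_zpowers, hord]
  have ht2 : t * t = 1 := by
    have := pow_orderOf_eq_one t
    rwa [hord, pow_two] at this
  -- components of t
  set x : ZMod (2 ^ (n - 1)) := Multiplicative.toAdd t.left with hx
  have htl : t.left = Multiplicative.ofAdd x := rfl
  have hr : Multiplicative.toAdd t.right = 0 ∨ Multiplicative.toAdd t.right = 1 := by
    generalize Multiplicative.toAdd t.right = r; revert r; decide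
  set k : ℕ := x.val with hk
  have hxk : (k : ZMod (2 ^ (n - 1))) = x := by
    rw [hk, ZMod.natCast_val, ZMod.cast_id]
  have hklt : k < 2 ^ (n - 1) := ZMod.val_lt x
  have hpow : (2 : ℕ) ^ (n - 1) = 2 ^ (n - 2) * 2 := by
    rw [← pow_succ]; congr 1; omega
  rcases hr with hr | hr
  · -- t.right = 1 : central case
    left
    have htr : t.right = 1 := by
      have : t.right = Multiplicative.ofAdd 0 := by rw [← hr]; rfl
      simpa using this
    have hleft : t.left * t.left = 1 := by
      have := congrArg SemidirectProduct.left ht2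
      simpa [htr] using this
    have hxx : x + x = 0 := by
      have := congrArg Multiplicative.toAdd hleft
      simpa using this
    have hkne : k ≠ 0 := by
      intro h0
      apply ht1
      have hx0 : x = 0 := by rw [← hxk, h0]; simp
      have : t.left = 1 := by rw [htl, hx0]; rfl
      rw [← SemidirectProduct.inl_left_mul_inr_right t, this, htr]; simp
    have hdvd : 2 ^ (n - 1) ∣ 2 * k := by
      rw [← ZMod.natCast_eq_zero_iff]
      push_cast
      rw [hxk, two_mul]
      exact hxx
    have hk2 : k = 2 ^ (n - 2) := by
      rw [hpow] at hdvd hklt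
      rcases hdvd with ⟨c, hc⟩
      have hkc : k = 2 ^ (n - 2) * c := by
        have h2 : 2 * k = 2 * (2 ^ (n - 2) * c) := by rw [hc]; ring
        omega
      have hp1 : 1 ≤ (2:ℕ) ^ (n - 2) := Nat.one_le_two_pow
      rcases Nat.lt_or_ge c 2 with hc2 | hc2
      · interval_cases c
        · omega
        · omega
      · have : 2 ^ (n - 2) * 2 ≤ 2 ^ (n - 2) * c := Nat.mul_le_mul_left _ hc2
        omega
    have hteq : t = a ^ 2 ^ (n - 2) := by
      rw [ha, ← map_pow, ← SemidirectProduct.inl_left_mul_inr_right t, htr]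
      simp only [map_one, mul_one]
      congr 1
      rw [htl, ← hxk, hk2, ← ofAdd_nsmul]
      congr 1
      push_cast [nsmul_eq_mul]
      ring
    rw [hHt, hteq]
  · -- t.right = ofAdd 1 : conjugate to b
    right
    have htr : t.right = Multiplicative.ofAdd (1 : ZMod 2) := by
      have : t.right = Multiplicative.ofAdd (Multiplicative.toAdd t.right) := rfl
      rw [this, hr]
    have hleft : t.left * t.left ^ (2 ^ (n - 2) - 1) = 1 := by
      have := congrArg SemidirectProduct.left ht2
      simpa [htr, hφ] using this
    have hone : 1 + (2 ^ (n - 2) - 1) = 2 ^ (n - 2) := by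
      have := Nat.one_le_two_pow (n := n - 2); omega
    have hlp : t.left ^ (2 ^ (n - 2)) = 1 := by
      rw [← hone, pow_add, pow_one]; exact hleft
    have hxx : (2 ^ (n - 2) : ℕ) • x = 0 := by
      have := congrArg Multiplicative.toAdd hlp
      simpa [htl, ← ofAdd_nsmul] using this
    have hdvd : 2 ^ (n - 1) ∣ 2 ^ (n - 2) * k := by
      rw [← ZMod.natCast_eq_zero_iff]
      push_cast
      rw [hxk]
      rw [nsmul_eq_mul] at hxx
      push_cast at hxx
      exact hxx
    have hk2 : 2 ∣ k := by
      rw [hpow] at hdvd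
      exact (mul_dvd_mul_iff_left (a := (2:ℕ) ^ (n - 2)) (by positivity)).mp hdvd
    obtain ⟨m, hm⟩ := hk2
    -- the unit u = 1 - 2^(n-3)
    have hzero : ((2 : ZMod (2 ^ (n - 1)))) ^ (n - 1) = 0 := by
      have := ZMod.natCast_self (2 ^ (n - 1))
      push_cast at this
      exact this
    have hu : IsUnit ((2 ^ (n - 1) - 2 ^ (n - 3) + 1 : ℕ) : ZMod (2 ^ (n - 1))) := by
      rw [ZMod.isUnit_iff_coprime]
      refine Nat.Coprime.pow_right _ (Nat.coprime_two_right.mpr ?_)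
      have h3 : (2:ℕ) ^ (n - 3) = 2 * 2 ^ (n - 4) := by
        rw [← pow_succ']; congr 1; omega
      have h1 : (2:ℕ) ^ (n - 1) = 8 * 2 ^ (n - 4) := by
        rw [show (8:ℕ) = 2 ^ 3 by norm_num, ← pow_add]; congr 1; omega
      rw [Nat.odd_iff]; omega
    obtain ⟨U, hU⟩ := hu
    set v : ZMod (2 ^ (n - 1)) := ↑U⁻¹ with hv
    have huv : (1 - (2 : ZMod (2 ^ (n - 1))) ^ (n - 3)) * v = 1 := by
      have hle : (2:ℕ) ^ (n - 3) ≤ 2 ^ (n - 1) := Nat.pow_le_pow_right (by norm_num) (by omega)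
      have hucast : ((2 ^ (n - 1) - 2 ^ (n - 3) + 1 : ℕ) : ZMod (2 ^ (n - 1)))
          = 1 - (2 : ZMod (2 ^ (n - 1))) ^ (n - 3) := by
        push_cast [hle]
        rw [hzero]
        ring
      rw [← hucast, ← hU]
      exact U.mul_inv
    set y : ZMod (2 ^ (n - 1)) := v * (m : ZMod (2 ^ (n - 1))) with hy
    refine ⟨SemidirectProduct.inl (Multiplicative.ofAdd y), ?_⟩
    rw [MonoidHom.map_zpowers, hHt]
    congr 1
    have hC : ((2 ^ (n - 2) - 1 : ℕ) : ZMod (2 ^ (n - 1)))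
        = 2 * (2 : ZMod (2 ^ (n - 1))) ^ (n - 3) - 1 := by
      have h1 : 1 ≤ (2:ℕ) ^ (n - 2) := Nat.one_le_two_pow
      push_cast [h1]
      rw [← pow_succ']
      congr 2
      omega
    have harith : y + (2 ^ (n - 2) - 1 : ℕ) • (-y) = x := by
      rw [nsmul_eq_mul, hC, hy, ← hxk, hm]
      push_cast
      linear_combination (2 : ZMod (2 ^ (n - 1))) * (m : ZMod (2 ^ (n - 1))) * huv
    have h1 : SemidirectProduct.inl (Multiplicative.ofAdd y) * b *
        (SemidirectProduct.inl (Multiplicative.ofAdd y))⁻¹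
        = SemidirectProduct.inl
            (Multiplicative.ofAdd y * (φ (Multiplicative.ofAdd 1)) (Multiplicative.ofAdd (-y)))
            * SemidirectProduct.inr (Multiplicative.ofAdd (1 : ZMod 2)) := by
      ext <;> simp [hb, ofAdd_neg]
    have h2 : Multiplicative.ofAdd y *
        (φ (Multiplicative.ofAdd 1)) (Multiplicative.ofAdd (-y)) = Multiplicative.ofAdd x := by
      rw [hφ, ← ofAdd_nsmul, ← ofAdd_add, harith]
    have key : SemidirectProduct.inl (Multiplicative.ofAdd y) * b *
        (SemidirectProduct.inl (Multiplicative.ofAdd y))⁻¹ = t := by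
      rw [h1, h2, ← htl, ← htr, SemidirectProduct.inl_left_mul_inr_right]
    have hconj : (MulAut.conj (SemidirectProduct.inl (Multiplicative.ofAdd y))).toMonoidHom b
        = SemidirectProduct.inl (Multiplicative.ofAdd y) * b *
          (SemidirectProduct.inl (Multiplicative.ofAdd y))⁻¹ := rfl
    rw [hconj, key]
end

section
/- Let p be an odd prime with p ≡ 1 (mod 4), and let φ : Multiplicative (ZMod 4) →* MulAut (Multiplicative (ZMod p)) be an injective homomorphism. Then any two subgroups of order 2 of the semidirect product (Multiplicative (ZMod p)) ⋊[φ] (Multiplicative (ZMod 4)) are conjugate. -/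
/-!
`C_p ⋊ C_4` is an extension of cyclic groups of coprime orders, so all its Sylow subgroups are
cyclic. A subgroup of order 2 lies in a Sylow 2-subgroup, the Sylow 2-subgroups are conjugate,
and a finite cyclic group has at most one subgroup of each order.
-/

theorem IsCyclic.coe_subgroup_eq_setOf_pow_card_eq_one {C : Type*} [Group C] [Finite C]
    [IsCyclic C] (A : Subgroup C) : (A : Set C) = {x | x ^ Nat.card A = 1} := by
  classical
  have := Fintype.ofFinite C
  refine Set.eq_of_subset_of_ncard_le (fun x hx ↦ ?_) ?_
  · exact congrArg Subtype.val (pow_card_eq_one' (x := (⟨x, hx⟩ : A)))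
  · calc {x : C | x ^ Nat.card A = 1}.ncard
        = (Finset.univ.filter fun x : C ↦ x ^ Nat.card A = 1).card := by
          rw [Set.ncard_eq_toFinset_card', Set.toFinset_ofPred]
      _ ≤ Nat.card A := IsCyclic.card_pow_eq_one_le Nat.card_pos
      _ = (A : Set C).ncard := Nat.card_coe_set_eq _

theorem IsCyclic.subgroup_eq_of_card_eq {C : Type*} [Group C] [Finite C] [IsCyclic C]
    {A B : Subgroup C} (h : Nat.card A = Nat.card B) : A = B :=
  SetLike.coe_injective <| by
    rw [coe_subgroup_eq_setOf_pow_card_eq_one, coe_subgroup_eq_setOf_pow_card_eq_one, h]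

theorem Subgroup.eq_of_le_of_card_eq_of_isCyclic {G : Type*} [Group G] {P A B : Subgroup G}
    [Finite P] [IsCyclic P] (hA : A ≤ P) (hB : B ≤ P) (h : Nat.card A = Nat.card B) :
    A = B := by
  have hAB : A.subgroupOf P = B.subgroupOf P := IsCyclic.subgroup_eq_of_card_eq <| by
    rw [Nat.card_congr (subgroupOfEquivOfLe hA).toEquiv,
      Nat.card_congr (subgroupOfEquivOfLe hB).toEquiv, h]
  rwa [subgroupOf_inj, inf_of_le_left hA, inf_of_le_left hB] at hAB

theorem IsZGroup.exists_conj_eq_of_card_eq {G : Type*} [Group G] [Finite G] [IsZGroup G]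
    {p : ℕ} [Fact p.Prime] {H K : Subgroup G} (hH : IsPGroup p H) (hK : IsPGroup p K)
    (hHK : Nat.card H = Nat.card K) : ∃ g : G, K = H.map (MulAut.conj g).toMonoidHom := by
  obtain ⟨P, hHP⟩ := hH.exists_le_sylow
  obtain ⟨Q, hKQ⟩ := hK.exists_le_sylow
  obtain ⟨g, rfl⟩ := MulAction.exists_smul_eq G P Q
  refine ⟨g, Subgroup.eq_of_le_of_card_eq_of_isCyclic (P := (g • P : Sylow p G)) hKQ ?_ ?_⟩
  · rw [Sylow.coe_subgroup_smul]
    exact Subgroup.map_mono hHP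
  · rw [Subgroup.card_map_of_injective (MulAut.conj g).injective, hHK]

instance SemidirectProduct.instFinite {N H : Type*} [Group N] [Group H] [Finite N] [Finite H]
    {φ : H →* MulAut N} : Finite (N ⋊[φ] H) :=
  Finite.of_equiv _ equivProd.symm

theorem SemidirectProduct.isZGroup_of_coprime {N H : Type*} [Group N] [Group H] [Finite N]
    [IsCyclic N] [IsCyclic H] (φ : H →* MulAut N) (h : (Nat.card N).Coprime (Nat.card H)) :
    IsZGroup (N ⋊[φ] H) :=
  _root_.isZGroup_of_coprime range_inl_eq_ker_rightHom.ge h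

theorem semidirect_Cp_C4_order_two_subgroups_conjugate_general (p : ℕ) [Fact p.Prime] (hp : Odd p)
    (φ : Multiplicative (ZMod 4) →* MulAut (Multiplicative (ZMod p))) :
    ∀ H K : Subgroup (Multiplicative (ZMod p) ⋊[φ] Multiplicative (ZMod 4)),
      Nat.card H = 2 → Nat.card K = 2 →
        ∃ g : Multiplicative (ZMod p) ⋊[φ] Multiplicative (ZMod 4),
          K = Subgroup.map (MulAut.conj g).toMonoidHom H := by
  intro H K hH hK
  have : IsZGroup (Multiplicative (ZMod p) ⋊[φ] Multiplicative (ZMod 4)) :=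
    SemidirectProduct.isZGroup_of_coprime φ <| by
      simpa using (Nat.coprime_two_right.mpr hp).pow_right 2
  have : Fact (Nat.Prime 2) := ⟨Nat.prime_two⟩
  exact IsZGroup.exists_conj_eq_of_card_eq
    (IsPGroup.of_card (n := 1) (hH.trans (pow_one 2).symm))
    (IsPGroup.of_card (n := 1) (hK.trans (pow_one 2).symm)) (hH.trans hK.symm)

/-- Let `p` be an odd prime with `p ≡ 1 (mod 4)` and let `φ` be an injective homomorphism
from `C₄` to the automorphism group of `C_p`. Then any two subgroups of order 2 of the
semidirect product `C_p ⋊[φ] C₄` are conjugate. -/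
theorem semidirect_Cp_C4_order_two_subgroups_conjugate (p : ℕ) [Fact p.Prime] (hp : Odd p)
    (hp4 : p % 4 = 1)
    (φ : Multiplicative (ZMod 4) →* MulAut (Multiplicative (ZMod p)))
    (hφ : Function.Injective φ) :
    ∀ H K : Subgroup (Multiplicative (ZMod p) ⋊[φ] Multiplicative (ZMod 4)),
      Nat.card H = 2 → Nat.card K = 2 →
        ∃ g : Multiplicative (ZMod p) ⋊[φ] Multiplicative (ZMod 4),
          K = Subgroup.map (MulAut.conj g).toMonoidHom H :=
  semidirect_Cp_C4_order_two_subgroups_conjugate_general p hp φ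
end

section
/- Let p be an odd prime and let G = C_p × D_{2p} be the direct product of the cyclic group of order p with the dihedral group of order 2p. Then G has two normal subgroups of order p, namely N₁ = C_p × {1} and N₂ = {1} × ⟨r⟩ (where ⟨r⟩ is the rotation subgroup of D_{2p}), such that G/N₁ is isomorphic to the dihedral group D_{2p} and G/N₂ is a cyclic group of order 2p; in particular G/N₁ and G/N₂ are not isomorphic. -/
private lemma inv_r' {n : ℕ} (i : ZMod n) : (DihedralGroup.r i)⁻¹ = DihedralGroup.r (-i) := rfl

private lemma r_one_zpow' {n : ℕ} (k : ℤ) :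
    (DihedralGroup.r 1 : DihedralGroup n) ^ k = DihedralGroup.r (k : ZMod n) := by
  cases k with
  | ofNat m => rw [Int.ofNat_eq_coe, zpow_natCast, DihedralGroup.r_one_pow]; push_cast; rfl
  | negSucc m =>
      rw [zpow_negSucc, DihedralGroup.r_one_pow, inv_r']
      congr 1
      push_cast
      ring

private lemma mem_rot {n : ℕ} [NeZero n] (i : ZMod n) :
    DihedralGroup.r i ∈ Subgroup.zpowers (DihedralGroup.r 1) := by
  refine ⟨(i.val : ℤ), ?_⟩
  simp only [r_one_zpow']
  push_cast
  simp [ZMod.natCast_val, ZMod.cast_id]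

private lemma rot_normal {n : ℕ} [NeZero n] :
    (Subgroup.zpowers (DihedralGroup.r 1 : DihedralGroup n)).Normal := by
  constructor
  rintro x ⟨k, rfl⟩ g
  simp only [r_one_zpow']
  cases g with
  | r j => simpa [inv_r', mul_assoc] using mem_rot _
  | sr j =>
      have : DihedralGroup.sr j * DihedralGroup.r (k : ZMod n) * (DihedralGroup.sr j)⁻¹
          = DihedralGroup.r (-(k : ZMod n)) := by
        have hinv : (DihedralGroup.sr j : DihedralGroup n)⁻¹ = DihedralGroup.sr j := rfl
        rw [hinv, DihedralGroup.sr_mul_r, DihedralGroup.sr_mul_sr]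
        ring_nf
      rw [this]
      exact mem_rot _

/-- Let `p` be an odd prime and `G = C_p × D_{2p}`. Then `G` has two normal subgroups of
order `p`, namely `N₁ = C_p × {1}` and `N₂ = {1} × ⟨r⟩` (the rotation subgroup), with
`G/N₁ ≅ D_{2p}` and `G/N₂` cyclic of order `2p`; in particular `G/N₁ ≇ G/N₂`. -/
theorem Cp_times_D2p_two_normal_subgroups (p : ℕ) [Fact p.Prime] (hp : Odd p)
    (N₁ N₂ : Subgroup (Multiplicative (ZMod p) × DihedralGroup p))
    (hN₁ : N₁ = Subgroup.prod ⊤ ⊥)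
    (hN₂ : N₂ = Subgroup.prod ⊥ (Subgroup.zpowers (DihedralGroup.r 1))) :
    Nat.card N₁ = p ∧ Nat.card N₂ = p ∧
    ∃ h₁ : N₁.Normal, ∃ h₂ : N₂.Normal,
      letI := h₁
      letI := h₂
      Nonempty (((Multiplicative (ZMod p) × DihedralGroup p) ⧸ N₁) ≃* DihedralGroup p) ∧
      IsCyclic ((Multiplicative (ZMod p) × DihedralGroup p) ⧸ N₂) ∧
      Nat.card ((Multiplicative (ZMod p) × DihedralGroup p) ⧸ N₂) = 2 * p ∧
      IsEmpty (((Multiplicative (ZMod p) × DihedralGroup p) ⧸ N₁) ≃*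
        ((Multiplicative (ZMod p) × DihedralGroup p) ⧸ N₂)) := by
  have hprime : p.Prime := Fact.out
  haveI : NeZero p := ⟨hprime.ne_zero⟩
  have hp2 : p ≠ 2 := by rintro rfl; exact (Nat.not_odd_iff_even.mpr (by decide)) hp
  have hp3 : 2 < p := lt_of_le_of_ne hprime.two_le (Ne.symm hp2)
  haveI : Fact (2 < p) := ⟨hp3⟩
  subst hN₁ hN₂
  set K : Subgroup (DihedralGroup p) := Subgroup.zpowers (DihedralGroup.r 1) with hK
  -- cardinalities of the subgroups
  have hcardK : Nat.card K = p := by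
    rw [hK, Nat.card_zpowers, DihedralGroup.orderOf_r_one]
  have hcard1 : Nat.card (Subgroup.prod (⊤ : Subgroup (Multiplicative (ZMod p)))
      (⊥ : Subgroup (DihedralGroup p))) = p := by
    rw [Nat.card_congr (Subgroup.prodEquiv ⊤ ⊥).toEquiv, Nat.card_prod,
      Subgroup.card_bot, Subgroup.card_top, mul_one]
    simp [Nat.card_eq_fintype_card, ZMod.card]
  have hcard2 : Nat.card (Subgroup.prod (⊥ : Subgroup (Multiplicative (ZMod p))) K) = p := by
    rw [Nat.card_congr (Subgroup.prodEquiv ⊥ K).toEquiv, Nat.card_prod, hcardK]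
    simp
  haveI := rot_normal (n := p)
  -- first quotient iso to DihedralGroup p
  have e₁ : ((Multiplicative (ZMod p) × DihedralGroup p) ⧸
      (Subgroup.prod (⊤ : Subgroup (Multiplicative (ZMod p)))
        (⊥ : Subgroup (DihedralGroup p)))) ≃* DihedralGroup p :=
    (QuotientGroup.quotientMulEquivOfEq (MonoidHom.ker_snd).symm).trans
      (QuotientGroup.quotientKerEquivOfSurjective _ (fun x => ⟨(1, x), rfl⟩))
  -- second quotient iso to product
  haveI := rot_normal (n := p)
  have hker : (MonoidHom.prodMap (MonoidHom.id (Multiplicative (ZMod p)))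
      (QuotientGroup.mk' K)).ker = Subgroup.prod ⊥ K := by
    rw [MonoidHom.ker_prodMap, MonoidHom.ker_id, QuotientGroup.ker_mk']
  have e₂ : ((Multiplicative (ZMod p) × DihedralGroup p) ⧸
      (Subgroup.prod (⊥ : Subgroup (Multiplicative (ZMod p))) K)) ≃*
      Multiplicative (ZMod p) × (DihedralGroup p ⧸ K) :=
    (QuotientGroup.quotientMulEquivOfEq hker.symm).trans
      (QuotientGroup.quotientKerEquivOfSurjective _
        (Function.Surjective.prodMap Function.surjective_id
          (QuotientGroup.mk'_surjective K)))
  -- card of D / K is 2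
  have hDK : Nat.card (DihedralGroup p ⧸ K) = 2 := by
    have h := Subgroup.card_mul_index K
    rw [hcardK, DihedralGroup.nat_card] at h
    have : K.index = 2 :=
      Nat.eq_of_mul_eq_mul_left hprime.pos (h.trans (Nat.mul_comm 2 p))
    rw [← Subgroup.index_eq_card, this]
  -- element of order 2 in the quotient
  have hsr : (DihedralGroup.sr 0 : DihedralGroup p) ∉ K := by
    rintro ⟨k, hk⟩
    simp only [r_one_zpow'] at hk
    exact absurd hk (by simp)
  set b : DihedralGroup p ⧸ K := QuotientGroup.mk (DihedralGroup.sr 0) with hb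
  have hb1 : b ≠ 1 := by
    rw [hb, Ne, QuotientGroup.eq_one_iff]
    exact hsr
  have hb2 : b ^ 2 = 1 := by
    rw [hb, ← QuotientGroup.mk_pow, pow_two, DihedralGroup.sr_mul_self]
    rfl
  have hob : orderOf b = 2 := orderOf_eq_prime hb2 hb1
  -- generator of the product
  have hoa : orderOf (Multiplicative.ofAdd (1 : ZMod p)) = p := by
    rw [orderOf_ofAdd_eq_addOrderOf]
    exact ZMod.addOrderOf_one p
  have horder : orderOf ((Multiplicative.ofAdd (1 : ZMod p), b) :
      Multiplicative (ZMod p) × (DihedralGroup p ⧸ K)) = p * 2 := by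
    rw [Prod.orderOf_mk, hoa, hob, Nat.Coprime.lcm_eq_mul]
    exact hp.coprime_two_right
  haveI : Finite (DihedralGroup p ⧸ K) := Nat.finite_of_card_ne_zero (by omega)
  have hcardprod : Nat.card (Multiplicative (ZMod p) × (DihedralGroup p ⧸ K)) = p * 2 := by
    rw [Nat.card_prod, hDK]
    simp [Nat.card_eq_fintype_card, ZMod.card]
  have hcyc : IsCyclic (Multiplicative (ZMod p) × (DihedralGroup p ⧸ K)) :=
    isCyclic_of_orderOf_eq_card _ (by rw [horder, hcardprod])
  have hcycQ : IsCyclic ((Multiplicative (ZMod p) × DihedralGroup p) ⧸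
      (Subgroup.prod (⊥ : Subgroup (Multiplicative (ZMod p))) K)) :=
    isCyclic_of_surjective e₂.symm e₂.symm.surjective
  have hcardQ : Nat.card ((Multiplicative (ZMod p) × DihedralGroup p) ⧸
      (Subgroup.prod (⊥ : Subgroup (Multiplicative (ZMod p))) K)) = 2 * p := by
    rw [Nat.card_congr e₂.toEquiv, hcardprod, Nat.mul_comm]
  refine ⟨hcard1, hcard2, inferInstance, inferInstance, ⟨e₁⟩, hcycQ, hcardQ, ⟨fun e => ?_⟩⟩
  -- G/N₁ ≅ D is noncommutative, G/N₂ is cyclic hence commutative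
  have φ : DihedralGroup p ≃* ((Multiplicative (ZMod p) × DihedralGroup p) ⧸
      (Subgroup.prod (⊥ : Subgroup (Multiplicative (ZMod p))) K)) := e₁.symm.trans e
  letI : CommGroup ((Multiplicative (ZMod p) × DihedralGroup p) ⧸
      (Subgroup.prod (⊥ : Subgroup (Multiplicative (ZMod p))) K)) := hcycQ.commGroup
  have hcomm : ∀ a c : DihedralGroup p, a * c = c * a := by
    intro a c
    apply φ.injective
    rw [map_mul, map_mul, mul_comm]
  have := hcomm (DihedralGroup.r 1) (DihedralGroup.sr 0)
  rw [DihedralGroup.r_mul_sr, DihedralGroup.sr_mul_r] at this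
  simp only [DihedralGroup.sr.injEq, zero_sub, zero_add] at this
  exact ZMod.neg_one_ne_one this
end
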